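/- arXiv:1609.08106 — 14 statements merged into one kernel-verified Lean document; each statement's English description precedes it below -/
import Mathlib

section
/- The number of inversion sequences of length n with no indices i < j < k such that e_i ≠ e_j and e_i ≠ e_k equals 1 if n = 1, and equals 2(n-1) if n > 1. -/
/-- An inversion sequence of length `n`: `e i < i + 1` (0-indexed). -/
def InvSeq (n : ℕ) : Type := ∀ i : Fin n, Fin (i.1 + 1)

namespace StmtAux

def Good {n : ℕ} (e : InvSeq n) : Prop :=
  ¬ ∃ i j k : Fin n, i < j ∧ j < k ∧ (e i : ℕ) ≠ (e j : ℕ) ∧ (e i : ℕ) ≠ (e k : ℕ)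

variable {m : ℕ}

def i2 (m : ℕ) : Fin (m + 2) := ⟨m, by omega⟩
def i1 (m : ℕ) : Fin (m + 2) := ⟨m + 1, by omega⟩

lemma val_zero {n : ℕ} (e : InvSeq n) (i : Fin n) (hi : i.1 = 0) : (e i : ℕ) = 0 := by
  have := (e i).2
  omega

lemma zero_of_lt (e : InvSeq (m + 2)) (he : Good e) (i : Fin (m + 2)) (hi : i.1 < m) :
    (e i : ℕ) = 0 := by
  by_contra h
  have hi0 : 0 < i.1 := by
    rcases Nat.eq_zero_or_pos i.1 with h0 | h0
    · exact absurd (val_zero e i h0) h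
    · exact h0
  have h0 : (e ⟨0, by omega⟩ : ℕ) = 0 := val_zero e _ rfl
  by_cases hc : (e (i2 m) : ℕ) = (e i : ℕ)
  · exact he ⟨⟨0, by omega⟩, i, i2 m, hi0, hi, by omega, by omega⟩
  · by_cases hd : (e (i1 m) : ℕ) = (e i : ℕ)
    · exact he ⟨⟨0, by omega⟩, i, i1 m, hi0, by simp [i1, Fin.lt_def]; omega, by omega, by omega⟩
    · exact he ⟨i, i2 m, i1 m, hi, by simp [i1, i2, Fin.lt_def], by omega, by omega⟩

lemma one_zero (e : InvSeq (m + 2)) (he : Good e) :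
    (e (i2 m) : ℕ) = 0 ∨ (e (i1 m) : ℕ) = 0 := by
  by_contra h
  push_neg at h
  obtain ⟨h1, h2⟩ := h
  have hm : 0 < m := by
    rcases Nat.eq_zero_or_pos m with h0 | h0
    · subst h0; exact absurd (val_zero e _ rfl) h1
    · exact h0
  have h0 : (e ⟨0, by omega⟩ : ℕ) = 0 := val_zero e _ rfl
  exact he ⟨⟨0, by omega⟩, i2 m, i1 m, by simp [i2, Fin.lt_def]; omega,
    by simp [i1, i2, Fin.lt_def], by omega, by omega⟩

lemma good_of (e : InvSeq (m + 2)) (h1 : ∀ i : Fin (m + 2), i.1 < m → (e i : ℕ) = 0)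
    (h2 : (e (i2 m) : ℕ) = 0 ∨ (e (i1 m) : ℕ) = 0) : Good e := by
  rintro ⟨i, j, k, hij, hjk, ha, hb⟩
  rw [Fin.lt_def] at hij hjk
  have hk : k.1 < m + 2 := k.2
  have hiv : (e i : ℕ) = 0 := h1 i (by omega)
  have hj : j.1 = m := by
    rcases Nat.lt_or_ge j.1 m with h | h
    · exact absurd (h1 j h) (by omega)
    · omega
  have hje : j = i2 m := Fin.ext hj
  have hke : k = i1 m := Fin.ext (by simp only [i1]; omega)
  rw [hje] at ha
  rw [hke] at hb
  rcases h2 with h2 | h2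
  · omega
  · omega

/-- Constructor: value `a` at position `m`, value `b` at position `m+1`, zero elsewhere. -/
def mk2 (m : ℕ) (a : Fin (m + 1)) (b : Fin (m + 2)) : InvSeq (m + 2) :=
  fun i => if h : i.1 = m then ⟨a.1, by omega⟩
    else if h' : i.1 = m + 1 then ⟨b.1, by omega⟩ else ⟨0, by omega⟩

lemma mk2_lt (a : Fin (m + 1)) (b : Fin (m + 2)) (i : Fin (m + 2)) (hi : i.1 < m) :
    (mk2 m a b i : ℕ) = 0 := by
  simp only [mk2]
  rw [dif_neg (by omega), dif_neg (by omega)]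

lemma mk2_i2 (a : Fin (m + 1)) (b : Fin (m + 2)) : (mk2 m a b (i2 m) : ℕ) = a.1 := by
  simp only [mk2]
  rw [dif_pos (show (i2 m).1 = m from rfl)]

lemma mk2_i1 (a : Fin (m + 1)) (b : Fin (m + 2)) : (mk2 m a b (i1 m) : ℕ) = b.1 := by
  simp only [mk2]
  rw [dif_neg (show ¬(i1 m).1 = m by simp only [i1]; omega),
    dif_pos (show (i1 m).1 = m + 1 from rfl)]

lemma good_mk2 (a : Fin (m + 1)) (b : Fin (m + 2)) (h : (a : ℕ) = 0 ∨ (b : ℕ) = 0) :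
    Good (mk2 m a b) := by
  apply good_of
  · exact fun i hi => mk2_lt a b i hi
  · rw [mk2_i2, mk2_i1]; exact h

def fwd (m : ℕ) (e : {e : InvSeq (m + 2) // Good e}) : Fin (m + 2) ⊕ Fin m :=
  if h : (e.1 (i2 m) : ℕ) = 0 then Sum.inl ⟨(e.1 (i1 m)).1, (e.1 (i1 m)).2⟩
  else Sum.inr ⟨(e.1 (i2 m)).1 - 1, by
    have h2 := (e.1 (i2 m)).2
    have h3 : (i2 m).1 = m := rfl
    omega⟩

def bwd (m : ℕ) (s : Fin (m + 2) ⊕ Fin m) : {e : InvSeq (m + 2) // Good e} :=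
  match s with
  | Sum.inl b => ⟨mk2 m ⟨0, by omega⟩ b, good_mk2 _ _ (Or.inl rfl)⟩
  | Sum.inr w => ⟨mk2 m ⟨w.1 + 1, by omega⟩ ⟨0, by omega⟩, good_mk2 _ _ (Or.inr rfl)⟩

lemma i_cases (i : Fin (m + 2)) (h1 : ¬ i.1 < m) (h2 : ¬ i.1 = m) : i = i1 m := by
  have := i.2
  apply Fin.ext
  simp only [i1]
  omega

def theEquiv (m : ℕ) : {e : InvSeq (m + 2) // Good e} ≃ (Fin (m + 2) ⊕ Fin m) where
  toFun := fwd m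
  invFun := bwd m
  left_inv := by
    rintro ⟨e, he⟩
    by_cases h : (e (i2 m) : ℕ) = 0
    · rw [fwd, dif_pos h]
      simp only [bwd]
      apply Subtype.ext
      funext i
      apply Fin.ext
      by_cases hlt : i.1 < m
      · rw [mk2_lt _ _ _ hlt, zero_of_lt e he i hlt]
      · by_cases h2 : i.1 = m
        · have hie : i = i2 m := Fin.ext h2
          rw [hie, mk2_i2, h]
        · rw [i_cases i hlt h2, mk2_i1]
    · rw [fwd, dif_neg h]
      have h1 : (e (i1 m) : ℕ) = 0 := (one_zero e he).resolve_left h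
      simp only [bwd]
      apply Subtype.ext
      funext i
      apply Fin.ext
      by_cases hlt : i.1 < m
      · rw [mk2_lt _ _ _ hlt, zero_of_lt e he i hlt]
      · by_cases h2 : i.1 = m
        · have hie : i = i2 m := Fin.ext h2
          rw [hie, mk2_i2]
          show (e (i2 m)).1 - 1 + 1 = (e (i2 m)).1
          omega
        · rw [i_cases i hlt h2, mk2_i1, h1]
  right_inv := by
    rintro (b | w)
    · simp only [bwd]
      rw [fwd, dif_pos (by rw [mk2_i2])]
      congr 1
      apply Fin.ext
      rw [mk2_i1]
    · simp only [bwd]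
      rw [fwd, dif_neg (by rw [mk2_i2]; exact Nat.succ_ne_zero _)]
      congr 1
      apply Fin.ext
      show (mk2 m ⟨w.1 + 1, by omega⟩ ⟨0, by omega⟩ (i2 m) : ℕ) - 1 = w.1
      rw [mk2_i2]
      show w.1 + 1 - 1 = w.1
      omega

end StmtAux

open StmtAux in
theorem stmt0 (n : ℕ) (hn : 1 ≤ n) :
    Nat.card {e : InvSeq n // ¬ ∃ i j k : Fin n, i < j ∧ j < k ∧
      (e i : ℕ) ≠ (e j : ℕ) ∧ (e i : ℕ) ≠ (e k : ℕ)} =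
    if n = 1 then 1 else 2 * (n - 1) := by
  by_cases h1 : n = 1
  · subst h1
    rw [if_pos rfl]
    haveI hu : Unique {e : InvSeq 1 // ¬ ∃ i j k : Fin 1, i < j ∧ j < k ∧
        (e i : ℕ) ≠ (e j : ℕ) ∧ (e i : ℕ) ≠ (e k : ℕ)} := by
      constructor
      case toInhabited =>
        refine ⟨⟨fun i => ⟨0, by omega⟩, ?_⟩⟩
        rintro ⟨i, j, k, hij, hjk, -, -⟩
        have hi := i.2
        have hj := j.2
        rw [Fin.lt_def] at hij
        omega
      case uniq =>
        rintro ⟨e, he⟩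
        apply Subtype.ext
        funext i
        apply Fin.ext
        have h1 := i.2
        have h2 := (e i).2
        omega
    exact Nat.card_unique
  · obtain ⟨m, rfl⟩ : ∃ m, n = m + 2 := ⟨n - 2, by omega⟩
    rw [if_neg (by omega)]
    have hc : Nat.card {e : InvSeq (m + 2) // ¬ ∃ i j k : Fin (m + 2), i < j ∧ j < k ∧
        (e i : ℕ) ≠ (e j : ℕ) ∧ (e i : ℕ) ≠ (e k : ℕ)} =
        Nat.card (Fin (m + 2) ⊕ Fin m) := Nat.card_congr (theEquiv m)
    rw [hc]
    simp only [Nat.card_eq_fintype_card, Fintype.card_sum, Fintype.card_fin]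
    clear hc hn h1
    omega
end

section
/- The number of inversion sequences of length n with no indices i < j < k such that e_i ≥ e_j and e_i ≠ e_k equals 1 if n = 1, and equals 2(n-1) if n > 1. -/
def Pav {n : ℕ} (e : InvSeq n) : Prop :=
  ¬ ∃ i j k : Fin n, i < j ∧ j < k ∧ (e j : ℕ) ≤ (e i : ℕ) ∧ (e i : ℕ) ≠ (e k : ℕ)

def mkA (n c : ℕ) : InvSeq n := fun i => ⟨min i.1 c, by omega⟩

def mkB (n t : ℕ) (ht : t < n) : InvSeq n :=
  fun i => if h : i.1 = n - 1 then ⟨t, by omega⟩ else ⟨i.1, by omega⟩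

lemma invseq_ext {n : ℕ} {e f : InvSeq n} (h : ∀ i, (e i).1 = (f i).1) : e = f :=
  funext fun i => Fin.ext (h i)

lemma hA (n c : ℕ) : Pav (mkA n c) := by
  rintro ⟨i, j, k, hij, hjk, h1, h2⟩
  have hij' : i.1 < j.1 := hij
  have hjk' : j.1 < k.1 := hjk
  simp only [mkA] at h1 h2
  omega

lemma hB (n t : ℕ) (ht : t < n) : Pav (mkB n t ht) := by
  rintro ⟨i, j, k, hij, hjk, h1, h2⟩
  have hij' : i.1 < j.1 := hij
  have hjk' : j.1 < k.1 := hjk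
  have hk := k.2
  have hj : ¬ (j.1 = n - 1) := by omega
  have hi : ¬ (i.1 = n - 1) := by omega
  simp only [mkB, dif_neg hi, dif_neg hj] at h1
  omega

lemma char {n : ℕ} (hn : 2 ≤ n) (e : InvSeq n) (he : Pav e) :
    (∃ t, ∃ ht : t < n, e = mkB n t ht) ∨ ∃ c, c < n - 2 ∧ e = mkA n c := by
  classical
  by_cases hQ : ∀ i : Fin n, i.1 < n - 1 → (e i).1 = i.1
  · left
    have hlt : n - 1 < n := by omega
    have htlt : (e ⟨n - 1, hlt⟩).1 < n := by
      have h2 : (e ⟨n - 1, hlt⟩).1 < (n - 1) + 1 := (e ⟨n - 1, hlt⟩).2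
      omega
    refine ⟨(e ⟨n - 1, hlt⟩).1, htlt, invseq_ext fun i => ?_⟩
    by_cases h : i.1 = n - 1
    · have hi : i = ⟨n - 1, hlt⟩ := Fin.ext h
      rw [hi]
      simp [mkB]
    · simp only [mkB, dif_neg h]
      exact hQ i (by have := i.2; omega)
  · right
    push_neg at hQ
    obtain ⟨w, hw1, hw2⟩ := hQ
    have hex : ∃ m, ∃ h : m < n - 1, (e ⟨m, by omega⟩).1 ≠ m :=
      ⟨w.1, hw1, by
        intro hcon; exact hw2 hcon⟩
    set j0 := Nat.find hex with hj0def
    obtain ⟨hj0lt, hj0ne⟩ := Nat.find_spec hex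
    have hj0n : j0 < n := by omega
    have hJne : (e ⟨j0, hj0n⟩).1 ≠ j0 := hj0ne
    have hprev : ∀ m : Fin n, m.1 < j0 → (e m).1 = m.1 := by
      intro m hm
      by_contra hne
      exact Nat.find_min hex hm ⟨by omega, hne⟩
    have hval : (e ⟨j0, hj0n⟩).1 < j0 + 1 := (e ⟨j0, hj0n⟩).2
    have hj0pos : 1 ≤ j0 := by
      rcases Nat.eq_zero_or_pos j0 with h | h
      · exact absurd (by omega) hJne
      · exact h
    have hc : (e ⟨j0, hj0n⟩).1 < j0 := by omega
    -- all later entries equal j0 - 1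
    have h1k : ∀ k : Fin n, j0 < k.1 → (e k).1 = j0 - 1 := by
      intro k hk
      by_contra hne
      have hprevlt : j0 - 1 < n := by omega
      have hp : (e ⟨j0 - 1, hprevlt⟩).1 = j0 - 1 :=
        hprev ⟨j0 - 1, hprevlt⟩ (show j0 - 1 < j0 by omega)
      refine he ⟨⟨j0 - 1, hprevlt⟩, ⟨j0, hj0n⟩, k,
        Fin.mk_lt_mk.mpr (by omega), Fin.lt_def.mpr (show j0 < k.1 from hk), ?_, ?_⟩
      · show (e ⟨j0, hj0n⟩).1 ≤ (e ⟨j0 - 1, hprevlt⟩).1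
        omega
      · show (e ⟨j0 - 1, hprevlt⟩).1 ≠ (e k).1
        omega
    -- the value at j0 is j0 - 1
    have hcval : (e ⟨j0, hj0n⟩).1 = j0 - 1 := by
      by_contra hne
      have hj02 : 2 ≤ j0 := by omega
      have hk1 : j0 + 1 < n := by omega
      have hlt2 : j0 - 2 < n := by omega
      have hp2 : (e ⟨j0 - 2, hlt2⟩).1 = j0 - 2 :=
        hprev ⟨j0 - 2, hlt2⟩ (show j0 - 2 < j0 by omega)
      have hk1v : (e ⟨j0 + 1, hk1⟩).1 = j0 - 1 :=
        h1k ⟨j0 + 1, hk1⟩ (show j0 < j0 + 1 by omega)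
      refine he ⟨⟨j0 - 2, hlt2⟩, ⟨j0, hj0n⟩, ⟨j0 + 1, hk1⟩,
        Fin.mk_lt_mk.mpr (by omega), Fin.mk_lt_mk.mpr (by omega), ?_, ?_⟩
      · show (e ⟨j0, hj0n⟩).1 ≤ (e ⟨j0 - 2, hlt2⟩).1
        omega
      · show (e ⟨j0 - 2, hlt2⟩).1 ≠ (e ⟨j0 + 1, hk1⟩).1
        omega
    refine ⟨j0 - 1, by omega, invseq_ext fun i => ?_⟩
    show (e i).1 = min i.1 (j0 - 1)
    rcases lt_trichotomy i.1 j0 with h | h | h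
    · have := hprev i h; omega
    · have hiv : (e i).1 = (e ⟨j0, hj0n⟩).1 :=
        congrArg (fun x : Fin n => (e x).1) (Fin.ext h)
      omega
    · have := h1k i h; omega

lemma count2 {n : ℕ} (hn : 2 ≤ n) :
    Nat.card {e : InvSeq n // Pav e} = 2 * n - 2 := by
  have hn1 : n - 1 < n := by omega
  have hn2 : n - 2 < n := by omega
  let G : Fin n ⊕ Fin (n - 2) → {e : InvSeq n // Pav e} :=
    fun x => match x with
      | Sum.inl t => ⟨mkB n t.1 t.2, hB n t.1 t.2⟩
      | Sum.inr c => ⟨mkA n c.1, hA n c.1⟩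
  have hBA : ∀ (t : Fin n) (c : Fin (n - 2)), mkB n t.1 t.2 ≠ mkA n c.1 := by
    intro t c h
    have h2 := congrArg Fin.val (congrFun h ⟨n - 2, hn2⟩)
    have hne : ¬ ((n : ℕ) - 2 = n - 1) := by omega
    simp only [mkB, mkA, dif_neg hne] at h2
    have := c.2
    omega
  have hGbij : Function.Bijective G := by
    constructor
    · rintro (t | c) (t' | c') h
      · have h2 := congrArg Fin.val (congrFun (congrArg Subtype.val h) ⟨n - 1, hn1⟩)
        simp only [G, mkB, dif_pos rfl] at h2
        exact congrArg Sum.inl (Fin.ext h2)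
      · exact absurd (congrArg Subtype.val h) (hBA t c')
      · exact absurd (congrArg Subtype.val h).symm (hBA t' c)
      · have hm : max c.1 c'.1 < n := by have := c.2; have := c'.2; omega
        have h2 := congrArg Fin.val (congrFun (congrArg Subtype.val h) ⟨max c.1 c'.1, hm⟩)
        simp only [G, mkA] at h2
        exact congrArg Sum.inr (Fin.ext (by omega))
    · rintro ⟨e, he⟩
      rcases char hn e he with ⟨t, ht, rfl⟩ | ⟨c, hc, rfl⟩
      · exact ⟨Sum.inl ⟨t, ht⟩, rfl⟩
      · exact ⟨Sum.inr ⟨c, hc⟩, rfl⟩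
  have := Nat.card_eq_of_bijective G hGbij
  simp only [Nat.card_eq_fintype_card, Fintype.card_sum, Fintype.card_fin] at this
  omega

theorem stmt1 (n : ℕ) (hn : 1 ≤ n) :
    Nat.card {e : InvSeq n // ¬ ∃ i j k : Fin n, i < j ∧ j < k ∧
      (e j : ℕ) ≤ (e i : ℕ) ∧ (e i : ℕ) ≠ (e k : ℕ)} =
    if n = 1 then 1 else 2 * (n - 1) := by
  rcases eq_or_lt_of_le hn with h1 | h2
  · -- n = 1
    subst h1
    rw [if_pos rfl, Nat.card_eq_one_iff_unique]
    constructor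
    · constructor
      rintro ⟨a, ha⟩ ⟨b, hb⟩
      refine Subtype.ext (invseq_ext fun i => ?_)
      have h1 := (a i).2
      have h2 := (b i).2
      have h3 := i.2
      omega
    · refine ⟨⟨fun i => ⟨0, Nat.succ_pos _⟩, ?_⟩⟩
      rintro ⟨i, j, k, hij, hjk, -⟩
      have h1 : i.1 < j.1 := hij
      have h2 : j.1 < k.1 := hjk
      have h3 := k.2
      omega
  · rw [if_neg (by omega)]
    have := count2 (n := n) (by omega)
    have heq : {e : InvSeq n // ¬ ∃ i j k : Fin n, i < j ∧ j < k ∧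
      (e j : ℕ) ≤ (e i : ℕ) ∧ (e i : ℕ) ≠ (e k : ℕ)} = {e : InvSeq n // Pav e} := rfl
    rw [heq, this]
    omega
end

section
/- The number of inversion sequences of length n with no indices i < j < k such that e_i = e_j ≤ e_k equals the Fibonacci number F_{n+1}, where F_0 = 0, F_1 = 1, and F_n = F_{n-1} + F_{n-2}. -/
namespace Stmt2Aux

variable {n : ℕ}

/-- The simple pairwise characterization. -/
def Pg (e : InvSeq n) : Prop :=
  ∀ j k : Fin n, j < k → (e j : ℕ) = j ∨ (e k : ℕ) < (e j : ℕ)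

lemma val_le (e : InvSeq n) (j : Fin n) : (e j : ℕ) ≤ (j : ℕ) :=
  Nat.lt_succ_iff.1 (e j).isLt

lemma e_congr (e : InvSeq n) {a b : Fin n} (h : a = b) : (e a : ℕ) = (e b : ℕ) := by
  rw [h]

lemma fixpt (e : InvSeq n)
    (he : ¬ ∃ i j k : Fin n, i < j ∧ j < k ∧
      (e i : ℕ) = (e j : ℕ) ∧ (e j : ℕ) ≤ (e k : ℕ)) (j : Fin n) :
    (e ⟨(e j : ℕ), (val_le e j).trans_lt j.isLt⟩ : ℕ) = (e j : ℕ) := by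
  suffices H : ∀ N : ℕ, ∀ j : Fin n, (j : ℕ) = N →
      (e ⟨(e j : ℕ), (val_le e j).trans_lt j.isLt⟩ : ℕ) = (e j : ℕ) from H _ j rfl
  intro N
  induction N using Nat.strong_induction_on with
  | _ N IH0 =>
    intro j hNj
    have IH : ∀ i : Fin n, (i : ℕ) < (j : ℕ) →
        (e ⟨(e i : ℕ), (val_le e i).trans_lt i.isLt⟩ : ℕ) = (e i : ℕ) := by
      intro i hi
      exact IH0 (i : ℕ) (by omega) i rfl
    by_cases hvj : (e j : ℕ) = (j : ℕ)
    · exact e_congr e (Fin.ext hvj)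
    · have hvlt : (e j : ℕ) < (j : ℕ) := lt_of_le_of_ne (val_le e j) hvj
      set i : Fin n := ⟨(e j : ℕ), (val_le e j).trans_lt j.isLt⟩ with hi
      have hii : (i : ℕ) = (e j : ℕ) := rfl
      by_cases hwv : (e i : ℕ) = (e j : ℕ)
      · exact hwv
      · have hwlt : (e i : ℕ) < (e j : ℕ) := by
          have := val_le e i; omega
      -- use IH at i
        have hIH := IH i (by simp [hi, hvlt])
        set k0 : Fin n := ⟨(e i : ℕ), (val_le e i).trans_lt i.isLt⟩ with hk0
        exact absurd ⟨k0, i, j, by simp [Fin.lt_def, hk0, hi]; omega,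
          by simp [Fin.lt_def, hi, hvlt], hIH, by omega⟩ he

lemma valid_iff_pg (e : InvSeq n) :
    (¬ ∃ i j k : Fin n, i < j ∧ j < k ∧
      (e i : ℕ) = (e j : ℕ) ∧ (e j : ℕ) ≤ (e k : ℕ)) ↔ Pg e := by
  constructor
  · intro he j k hjk
    by_cases hj : (e j : ℕ) = (j : ℕ)
    · exact Or.inl hj
    · right
      have hvlt : (e j : ℕ) < (j : ℕ) := lt_of_le_of_ne (val_le e j) hj
      set i : Fin n := ⟨(e j : ℕ), (val_le e j).trans_lt j.isLt⟩ with hi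
      have hfix := fixpt e he j
      by_contra hcon
      push_neg at hcon
      exact he ⟨i, j, k, by simp [Fin.lt_def, hi, hvlt], hjk, hfix, hcon⟩
  · rintro hp ⟨i, j, k, hij, hjk, h1, h2⟩
    rcases hp j k hjk with h | h
    · have := val_le e i
      have : (i : ℕ) < (j : ℕ) := hij
      omega
    · omega

/-- The target type: a prefix length `m` together with a set of tail values. -/
abbrev Tgt (n : ℕ) : Type := Σ m : Fin (n + 1), {s : Finset (Fin m.1) // s.card = n - m.1}

def toSeq (x : Tgt n) : InvSeq n := fun j =>
  if h : (j : ℕ) < x.1.1 then ⟨(j : ℕ), Nat.lt_succ_self _⟩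
  else
    have hj := j.isLt
    have hm := x.1.isLt
    let v := x.2.1.orderEmbOfFin x.2.2 ⟨n - 1 - (j : ℕ), by omega⟩
    ⟨(v : ℕ), by have := v.isLt; omega⟩

lemma toSeq_lt {x : Tgt n} {j : Fin n} (h : (j : ℕ) < x.1.1) :
    (toSeq x j : ℕ) = (j : ℕ) := by
  simp [toSeq, h]

lemma toSeq_ge {x : Tgt n} {j : Fin n} (h : ¬ (j : ℕ) < x.1.1)
    (hi : n - 1 - (j : ℕ) < n - x.1.1) :
    (toSeq x j : ℕ) = (x.2.1.orderEmbOfFin x.2.2 ⟨n - 1 - (j : ℕ), hi⟩ : ℕ) := by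
  simp [toSeq, h]

lemma pg_toSeq (x : Tgt n) : Pg (toSeq x) := by
  intro j k hjk
  have hjk' : (j : ℕ) < (k : ℕ) := hjk
  have hjn := j.isLt
  have hkn := k.isLt
  have hm := x.1.isLt
  by_cases hj : (j : ℕ) < x.1.1
  · exact Or.inl (toSeq_lt hj)
  · right
    have hk : ¬ (k : ℕ) < x.1.1 := by omega
    rw [toSeq_ge hj (by omega), toSeq_ge hk (by omega)]
    have := (x.2.1.orderEmbOfFin x.2.2).strictMono
      (show (⟨n - 1 - (k : ℕ), by omega⟩ : Fin (n - x.1.1)) < ⟨n - 1 - (j : ℕ), by omega⟩ by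
        simp only [Fin.lt_def]; omega)
    exact this

lemma toSeq_fix_iff (x : Tgt n) (j : Fin n) :
    (toSeq x j : ℕ) = (j : ℕ) ↔ (j : ℕ) < x.1.1 := by
  constructor
  · intro h
    by_contra hj
    have hjn := j.isLt
    have hm := x.1.isLt
    rw [toSeq_ge hj (by omega)] at h
    have := (x.2.1.orderEmbOfFin x.2.2 ⟨n - 1 - (j : ℕ), by omega⟩).isLt
    omega
  · exact toSeq_lt

lemma toSeq_injective : Function.Injective (toSeq (n := n)) := by
  rintro ⟨⟨m, hm⟩, s, hs⟩ ⟨⟨m', hm'⟩, s', hs'⟩ hEq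
  have hiff : ∀ j : Fin n, ((j : ℕ) < m ↔ (j : ℕ) < m') := by
    intro j
    have h1 := toSeq_fix_iff ⟨⟨m, hm⟩, s, hs⟩ j
    have h2 := toSeq_fix_iff ⟨⟨m', hm'⟩, s', hs'⟩ j
    rw [hEq] at h1
    simp only at h1 h2
    rw [← h1, h2]
  have hmm : m = m' := by
    by_contra hne
    rcases Nat.lt_or_ge m m' with h | h
    · have := (hiff ⟨m, by omega⟩).2 (by simpa using h)
      simp at this
    · have h' : m' < m := by omega
      have := (hiff ⟨m', by omega⟩).1 (by simpa using h')
      simp at this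
  subst hmm
  have hss : s = s' := by
    have hfun : ∀ i : Fin (n - m), s.orderEmbOfFin hs i = s'.orderEmbOfFin hs' i := by
      intro i
      have hi := i.isLt
      have hn : 0 < n := by omega
      set j : Fin n := ⟨n - 1 - (i : ℕ), by omega⟩ with hjdef
      have hjv : (j : ℕ) = n - 1 - (i : ℕ) := rfl
      have hj : ¬ (j : ℕ) < m := by omega
      have hidx : n - 1 - (j : ℕ) < n - m := by omega
      have e1 := toSeq_ge (x := ⟨⟨m, hm⟩, s, hs⟩) hj hidx
      have e2 := toSeq_ge (x := ⟨⟨m, hm'⟩, s', hs'⟩) hj hidx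
      have hidx' : (⟨n - 1 - (j : ℕ), hidx⟩ : Fin (n - m)) = i :=
        Fin.ext (by show n - 1 - (j : ℕ) = (i : ℕ); omega)
      rw [hidx'] at e1 e2
      have := congrFun hEq j
      apply Fin.ext
      simp only at e1 e2
      rw [← e1, ← e2, this]
    have hrange : (s : Set (Fin m)) = (s' : Set (Fin m)) := by
      rw [← Finset.range_orderEmbOfFin s hs, ← Finset.range_orderEmbOfFin s' hs']
      exact congrArg Set.range (funext hfun)
    exact Finset.coe_injective hrange
  subst hss
  rfl

lemma toSeq_surj (e : InvSeq n) (he : Pg e) : ∃ x : Tgt n, toSeq x = e := by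
  classical
  set F : Finset (Fin n) := Finset.univ.filter (fun j => (e j : ℕ) = (j : ℕ)) with hF
  set m := F.card with hmdef
  have hmn : m ≤ n := by
    have := Finset.card_filter_le (Finset.univ : Finset (Fin n))
      (fun j => (e j : ℕ) = (j : ℕ))
    simpa [hmdef, hF] using this
  have hdown : ∀ j k : Fin n, j ≤ k → (e k : ℕ) = (k : ℕ) → (e j : ℕ) = (j : ℕ) := by
    intro j k hjk hk
    by_contra hj
    rcases eq_or_lt_of_le hjk with rfl | h
    · exact hj hk
    · have hjk' : (j : ℕ) < (k : ℕ) := h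
      have hej : (e j : ℕ) < (j : ℕ) := lt_of_le_of_ne (val_le e j) hj
      rcases he j k h with h' | h'
      · exact hj h'
      · omega
  have hkey : ∀ j : Fin n, ((e j : ℕ) = (j : ℕ) ↔ (j : ℕ) < m) := by
    intro j
    constructor
    · intro hj
      have hsub : Finset.Iic j ⊆ F := by
        intro k hk
        simp only [hF, Finset.mem_filter, Finset.mem_univ, true_and]
        exact hdown k j (Finset.mem_Iic.1 hk) hj
      have := Finset.card_le_card hsub
      rw [Fin.card_Iic] at this
      omega
    · intro hj
      by_contra hne
      have hsub : F ⊆ Finset.Iio j := by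
        intro k hk
        simp only [hF, Finset.mem_filter, Finset.mem_univ, true_and] at hk
        rw [Finset.mem_Iio]
        by_contra hkj
        push_neg at hkj
        exact hne (hdown j k hkj hk)
      have := Finset.card_le_card hsub
      rw [Fin.card_Iio] at this
      omega
  have hval : ∀ j : Fin n, m ≤ (j : ℕ) → (e j : ℕ) < m := by
    intro j hj
    have hne : (e j : ℕ) ≠ (j : ℕ) := fun h => by have := (hkey j).1 h; omega
    have hlt : (e j : ℕ) < (j : ℕ) := lt_of_le_of_ne (val_le e j) hne
    by_contra hge
    push_neg at hge
    set i : Fin n := ⟨(e j : ℕ), by omega⟩ with hidef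
    have hii : (i : ℕ) = (e j : ℕ) := rfl
    have hine : (e i : ℕ) ≠ (i : ℕ) := by
      intro h
      have := (hkey i).1 h
      omega
    rcases he i j (by simp [Fin.lt_def, hidef]; omega) with h | h
    · exact hine h
    · have := val_le e i
      omega
  -- build the tail function
  have hpos : ∀ i : Fin (n - m), m ≤ n - 1 - (i : ℕ) ∧ n - 1 - (i : ℕ) < n := by
    intro i
    have := i.isLt
    omega
  set f : Fin (n - m) → Fin m := fun i =>
    ⟨(e ⟨n - 1 - (i : ℕ), (hpos i).2⟩ : ℕ), hval _ (hpos i).1⟩ with hfdef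
  have hfmono : StrictMono f := by
    intro a b hab
    have hab' : (a : ℕ) < (b : ℕ) := hab
    have ha := (hpos a).1; have ha' := (hpos a).2
    have hb := (hpos b).1; have hb' := (hpos b).2
    have hlt : (⟨n - 1 - (b : ℕ), hb'⟩ : Fin n) < ⟨n - 1 - (a : ℕ), ha'⟩ := by
      simp only [Fin.lt_def]; omega
    rcases he _ _ hlt with h | h
    · have hne : (e (⟨n - 1 - (b : ℕ), hb'⟩ : Fin n) : ℕ) ≠ n - 1 - (b : ℕ) := by
        intro hcon
        have := (hkey _).1 hcon
        simp only at this
        omega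
      exact absurd h hne
    · simpa [hfdef, Fin.lt_def] using h
  set s : Finset (Fin m) := Finset.image f Finset.univ with hsdef
  have hcard : s.card = n - m := by
    rw [hsdef, Finset.card_image_of_injective _ hfmono.injective, Finset.card_univ,
      Fintype.card_fin]
  refine ⟨⟨⟨m, Nat.lt_succ_of_le hmn⟩, s, hcard⟩, ?_⟩
  have huniq : f = s.orderEmbOfFin hcard :=
    Finset.orderEmbOfFin_unique hcard
      (fun i => by rw [hsdef]; exact Finset.mem_image_of_mem f (Finset.mem_univ i)) hfmono
  funext j
  apply Fin.ext
  have hjn := j.isLt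
  by_cases hj : (j : ℕ) < m
  · rw [toSeq_lt (by simpa using hj)]
    exact ((hkey j).2 hj).symm
  · have hidx : n - 1 - (j : ℕ) < n - m := by omega
    rw [toSeq_ge (by simpa using hj) hidx]
    simp only
    rw [← huniq, hfdef]
    simp only
    exact e_congr e (Fin.ext (by simp only; omega))

lemma card_tgt : Nat.card (Tgt n) = Nat.fib (n + 1) := by
  classical
  rw [Nat.card_eq_fintype_card]
  rw [Fintype.card_sigma]
  have hterm : ∀ m : Fin (n + 1),
      Fintype.card {s : Finset (Fin m.1) // s.card = n - m.1} =
        (m.1).choose (n - m.1) := by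
    intro m
    rw [Fintype.card_finset_len, Fintype.card_fin]
  rw [Finset.sum_congr rfl (fun m _ => hterm m)]
  rw [Nat.fib_succ_eq_sum_choose, Finset.Nat.sum_antidiagonal_eq_sum_range_succ_mk]
  rw [← Fin.sum_univ_eq_sum_range (fun k => k.choose (n - k)) (n + 1)]

end Stmt2Aux

theorem stmt2 (n : ℕ) :
    Nat.card {e : InvSeq n // ¬ ∃ i j k : Fin n, i < j ∧ j < k ∧
      (e i : ℕ) = (e j : ℕ) ∧ (e j : ℕ) ≤ (e k : ℕ)} =
    Nat.fib (n + 1) := by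
  classical
  rw [Nat.card_congr (Equiv.subtypeEquivRight (fun e => Stmt2Aux.valid_iff_pg e))]
  rw [← Stmt2Aux.card_tgt (n := n)]
  refine (Nat.card_eq_of_bijective
    (fun x => ⟨Stmt2Aux.toSeq x, Stmt2Aux.pg_toSeq x⟩) ⟨?_, ?_⟩).symm
  · intro x y h
    exact Stmt2Aux.toSeq_injective (congrArg Subtype.val h)
  · rintro ⟨e, he⟩
    obtain ⟨x, hx⟩ := Stmt2Aux.toSeq_surj e he
    exact ⟨x, Subtype.ext hx⟩
end

section
/- An inversion sequence e of length n has no indices i < j < k with e_i = e_j ≤ e_k if and only if there exists t ∈ {1,...,n} such that e_1 < e_2 < ... < e_t ≥ e_{t+1} > e_{t+2} > ... > e_n. -/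
private lemma key_lemma (n : ℕ) (f : ℕ → ℕ) (hf : ∀ m, m < n → f m ≤ m)
    (h : ∀ i j k : ℕ, i < j → j < k → k < n → f i = f j → f j ≤ f k → False)
    {i j k : ℕ} (hij : i < j) (hjk : j < k) (hk : k < n)
    (h1 : f j ≤ f i) (h2 : f j ≤ f k) : False := by
  rcases eq_or_lt_of_le h1 with heq | hlt
  · exact h i j k hij hjk hk heq.symm h2
  · have hin : i < n := by omega
    have hjn : j < n := by omega
    have hfi : f i ≤ i := hf i hin
    have hvj : f j < j := by omega
    have hfixed : ∀ p, p ≤ f j → f p = p := by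
      intro p
      induction p using Nat.strong_induction_on with
      | _ p ih =>
        intro hp
        by_contra hne
        have hplt : f p < p := lt_of_le_of_ne (hf p (by omega)) hne
        have hq : f (f p) = f p := ih (f p) hplt (by omega)
        exact h (f p) p j hplt (by omega) hjn hq (by omega)
    have hfj : f (f j) = f j := hfixed (f j) le_rfl
    exact h (f j) j k hvj hjk hk hfj h2

/-- An inversion sequence avoids `e_i = e_j ≤ e_k` iff it is strictly increasing up to
some peak position `t`, weakly drops at the peak, and is strictly decreasing afterwards:
`e_1 < e_2 < ⋯ < e_t ≥ e_{t+1} > e_{t+2} > ⋯ > e_n`. -/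
theorem stmt3 (n : ℕ) (hn : 1 ≤ n) (e : InvSeq n) :
    (¬ ∃ i j k : Fin n, i < j ∧ j < k ∧
      (e i : ℕ) = (e j : ℕ) ∧ (e j : ℕ) ≤ (e k : ℕ)) ↔
    ∃ t : Fin n,
      (∀ i j : Fin n, i < j → j ≤ t → (e i : ℕ) < (e j : ℕ)) ∧
      (∀ j : Fin n, t < j → (e j : ℕ) ≤ (e t : ℕ)) ∧
      (∀ i j : Fin n, t < i → i < j → (e j : ℕ) < (e i : ℕ)) := by
  constructor
  · intro hne
    set f : ℕ → ℕ := fun m => if h : m < n then (e ⟨m, h⟩ : ℕ) else 0 with hfdef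
    have hfe : ∀ (m : ℕ) (hm : m < n), f m = (e ⟨m, hm⟩ : ℕ) := fun m hm => dif_pos hm
    have hf : ∀ m, m < n → f m ≤ m := by
      intro m hm
      rw [hfe m hm]
      have := (e ⟨m, hm⟩).isLt
      simp only [Fin.val_mk] at this ⊢
      omega
    have h : ∀ i j k : ℕ, i < j → j < k → k < n → f i = f j → f j ≤ f k → False := by
      intro i j k hij hjk hkn heq hle
      have hin : i < n := by omega
      have hjn : j < n := by omega
      rw [hfe i hin, hfe j hjn] at heq
      rw [hfe j hjn, hfe k hkn] at hle
      exact hne ⟨⟨i, hin⟩, ⟨j, hjn⟩, ⟨k, hkn⟩, hij, hjk, heq, hle⟩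
    -- find the peak
    have hex : ∃ t : ℕ, t + 1 = n ∨ (t + 1 < n ∧ f (t + 1) ≤ f t) := ⟨n - 1, by omega⟩
    set t := Nat.find hex with htdef
    have htspec := Nat.find_spec hex
    rw [← htdef] at htspec
    have htn : t < n := by
      have : t ≤ n - 1 := Nat.find_le (by omega)
      omega
    have htmin : ∀ s, s < t → f s < f (s + 1) := by
      intro s hs
      have := Nat.find_min hex hs
      push_neg at this
      rcases this with ⟨h1, h2⟩
      have : s + 1 < n := by omega
      exact h2 this
    -- strict increase on prefix
    have hinc : ∀ b, b ≤ t → ∀ a, a < b → f a < f b := by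
      intro b
      induction b with
      | zero => intro _ a ha; omega
      | succ b ih =>
        intro hb a ha
        have hb' : f b < f (b + 1) := htmin b (by omega)
        rcases Nat.lt_or_ge a b with h' | h'
        · exact lt_trans (ih (by omega) a h') hb'
        · have : a = b := by omega
          subst this; exact hb'
    -- strict decrease after t
    have hdec : ∀ i, t < i → i < n → ∀ j, i < j → j < n → f j < f i := by
      intro i
      induction i using Nat.strong_induction_on with
      | _ i ih =>
        intro hti hin j hij hjn
        by_contra hc
        push_neg at hc
        rcases Nat.lt_or_ge (t + 1) i with hlt | hge
        · have hprev : f i < f (i - 1) := ih (i - 1) (by omega) (by omega) (by omega) i (by omega) hin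
          exact key_lemma n f hf h (by omega : i - 1 < i) hij hjn (le_of_lt hprev) hc
        · have hieq : i = t + 1 := by omega
          rcases htspec with h1 | h2
          · omega
          · subst hieq
            exact key_lemma n f hf h (by omega : t < t + 1) hij hjn h2.2 hc
    -- weak drop at peak
    have hdrop : ∀ j, t < j → j < n → f j ≤ f t := by
      intro j htj hjn
      rcases htspec with h1 | h2
      · omega
      · rcases Nat.lt_or_ge (t + 1) j with hlt | hge
        · have := hdec (t + 1) (by omega) h2.1 j hlt hjn
          omega
        · have : j = t + 1 := by omega
          subst this; exact h2.2
    refine ⟨⟨t, htn⟩, ?_, ?_, ?_⟩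
    · intro i j hij hjt
      have h1 := hinc j.1 hjt i.1 hij
      rwa [hfe i.1 i.isLt, hfe j.1 j.isLt, Fin.eta, Fin.eta] at h1
    · intro j htj
      have h1 := hdrop j.1 htj j.isLt
      rwa [hfe j.1 j.isLt, hfe t htn, Fin.eta] at h1
    · intro i j hti hij
      have h1 := hdec i.1 hti i.isLt j.1 hij j.isLt
      rwa [hfe i.1 i.isLt, hfe j.1 j.isLt, Fin.eta, Fin.eta] at h1
  · rintro ⟨t, h1, h2, h3⟩ ⟨i, j, k, hij, hjk, heq, hle⟩
    rcases le_or_gt j t with hj | hj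
    · exact absurd heq (Nat.ne_of_lt (h1 i j hij hj))
    · exact absurd hle (not_le.mpr (h3 j k hj hjk))
end

section
/- The number of inversion sequences of length n with no indices i < j < k such that e_i < e_j and e_j ≠ e_k equals C(n,2) + 1. -/
def goodSeq {n : ℕ} : Option ((j : Fin n) × Fin j.1) → InvSeq n
  | none => fun _ => ⟨0, Nat.succ_pos _⟩
  | some ⟨j, w⟩ => fun i =>
      if h : j.1 ≤ i.1 then ⟨w.1 + 1, by have := w.2; omega⟩ else ⟨0, Nat.succ_pos _⟩

lemma goodSeq_none_val {n : ℕ} (i : Fin n) : (goodSeq none i : ℕ) = 0 := rfl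

lemma goodSeq_some_val {n : ℕ} (j : Fin n) (w : Fin j.1) (i : Fin n) :
    (goodSeq (some ⟨j, w⟩) i : ℕ) = if j.1 ≤ i.1 then w.1 + 1 else 0 := by
  simp only [goodSeq]
  split_ifs <;> rfl

theorem stmt4 (n : ℕ) :
    Nat.card {e : InvSeq n // ¬ ∃ i j k : Fin n, i < j ∧ j < k ∧
      (e i : ℕ) < (e j : ℕ) ∧ (e j : ℕ) ≠ (e k : ℕ)} =
    n.choose 2 + 1 := by
  set P : InvSeq n → Prop := fun e => ¬ ∃ i j k : Fin n, i < j ∧ j < k ∧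
      (e i : ℕ) < (e j : ℕ) ∧ (e j : ℕ) ≠ (e k : ℕ) with hP
  have hgood : ∀ x, P (goodSeq x) := by
    rintro (_ | ⟨j, w⟩) ⟨i, j', k, hij, hjk, hlt, hne⟩
    · simp [goodSeq_none_val] at hlt
    · rw [goodSeq_some_val, goodSeq_some_val] at hlt
      rw [goodSeq_some_val, goodSeq_some_val] at hne
      rw [Fin.lt_def] at hij hjk
      split_ifs at hlt hne <;> omega
  have hF : Function.Bijective
      (fun x : Option ((j : Fin n) × Fin j.1) => (⟨goodSeq x, hgood x⟩ : {e // P e})) := by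
    constructor
    · rintro (_ | ⟨j, w⟩) (_ | ⟨j', w'⟩) h
      · rfl
      · exfalso
        have := congrArg (fun e => (e.1 j' : ℕ)) h
        simp only [goodSeq_none_val, goodSeq_some_val, le_refl, if_true] at this
        omega
      · exfalso
        have := congrArg (fun e => (e.1 j : ℕ)) h
        simp only [goodSeq_none_val, goodSeq_some_val, le_refl, if_true] at this
        omega
      · have h1 := congrArg (fun e => (e.1 j : ℕ)) h
        have h2 := congrArg (fun e => (e.1 j' : ℕ)) h
        simp only [goodSeq_some_val, le_refl, if_true] at h1 h2
        have hw := w.2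
        have hw' := w'.2
        have hjj : j = j' := by
          apply Fin.ext
          by_contra hne
          rcases Nat.lt_or_ge j.1 j'.1 with hlt | hge
          · rw [if_neg (by omega)] at h1; omega
          · rcases Nat.lt_or_ge j'.1 j.1 with hlt' | hge'
            · rw [if_neg (by omega)] at h2; omega
            · omega
        subst hjj
        rw [if_pos (le_refl _)] at h1
        have : w = w' := Fin.ext (by omega)
        subst this; rfl
    · rintro ⟨e, he⟩
      by_cases hz : ∀ i, (e i : ℕ) = 0
      · refine ⟨none, ?_⟩
        apply Subtype.ext
        show goodSeq none = e
        funext i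
        exact Fin.ext (by rw [goodSeq_none_val, hz i])
      · push_neg at hz
        obtain ⟨i0, hi0⟩ := hz
        classical
        have hex : ∃ m, ∃ h : m < n, (e ⟨m, h⟩ : ℕ) ≠ 0 := ⟨i0.1, i0.2, by
          convert hi0⟩
        obtain ⟨hjlt, hjne⟩ := Nat.find_spec hex
        set j : Fin n := ⟨Nat.find hex, hjlt⟩ with hj
        have hjv : j.1 = Nat.find hex := rfl
        have hmin : ∀ i : Fin n, i.1 < j.1 → (e i : ℕ) = 0 := by
          intro i hi
          by_contra hne
          exact Nat.find_min hex (m := i.1) (by omega) ⟨i.2, by convert hne⟩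
        have hj1 : 1 ≤ (e j : ℕ) := Nat.one_le_iff_ne_zero.mpr hjne
        have hjpos : 0 < j.1 := by
          by_contra h
          have h0 : j.1 = 0 := by omega
          have := (e j).2
          omega
        have hej : (e j : ℕ) - 1 < j.1 := by
          have := (e j).2; omega
        refine ⟨some ⟨j, ⟨(e j : ℕ) - 1, hej⟩⟩, ?_⟩
        apply Subtype.ext
        show goodSeq (some ⟨j, ⟨(e j : ℕ) - 1, hej⟩⟩) = e
        funext i
        apply Fin.ext
        rw [goodSeq_some_val]
        show (if j.1 ≤ i.1 then (e j : ℕ) - 1 + 1 else 0) = (e i : ℕ)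
        split_ifs with h
        · rcases Nat.lt_or_ge j.1 i.1 with hlt | hge
          · have h0 : (0 : ℕ) < n := by omega
            have hzero : (e ⟨0, h0⟩ : ℕ) = 0 := by
              have h2 : (e ⟨0, h0⟩ : ℕ) < 0 + 1 := (e ⟨0, h0⟩).2
              omega
            have heq : (e j : ℕ) = (e i : ℕ) := by
              by_contra hne2
              exact he ⟨⟨0, h0⟩, j, i, by rw [Fin.lt_def]; exact hjpos,
                by rw [Fin.lt_def]; exact hlt, by omega, hne2⟩
            omega
          · have : j = i := Fin.ext (by omega)
            subst this; omega
        · have := hmin i (by omega)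
          omega
  have h1 : Nat.card {e // P e} = Nat.card (Option ((j : Fin n) × Fin j.1)) :=
    (Nat.card_eq_of_bijective _ hF).symm
  rw [h1, Nat.card_eq_fintype_card]
  simp only [Fintype.card_option, Fintype.card_sigma, Fintype.card_fin]
  rw [Fin.sum_univ_eq_sum_range (fun i => i) n]
  congr 1
  rw [Finset.sum_range_id, Nat.choose_two_right, Nat.mul_comm]
end

section
/- An inversion sequence e of length n has no indices i < j < k with e_i < e_j and e_j ≠ e_k if and only if there exists t ∈ {1,...,n} such that 0 = e_1 = e_2 = ... = e_{t-1} ≤ e_t = e_{t+1} = ... = e_n. -/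
/-- An inversion sequence avoids `e_i < e_j ≠ e_k` iff for some position `t` it consists of
a (possibly empty) prefix of zeros followed by a constant tail:
`0 = e_1 = ⋯ = e_{t-1} ≤ e_t = e_{t+1} = ⋯ = e_n`. -/
theorem stmt5 (n : ℕ) (hn : 1 ≤ n) (e : InvSeq n) :
    (¬ ∃ i j k : Fin n, i < j ∧ j < k ∧
      (e i : ℕ) < (e j : ℕ) ∧ (e j : ℕ) ≠ (e k : ℕ)) ↔
    ∃ t : Fin n,
      (∀ i : Fin n, i < t → (e i : ℕ) = 0) ∧
      (∀ i j : Fin n, t ≤ i → t ≤ j → (e i : ℕ) = (e j : ℕ)) := by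
  classical
  constructor
  · intro h
    by_cases hz : ∀ i : Fin n, (e i : ℕ) = 0
    · exact ⟨⟨0, hn⟩, fun i _ => hz i, fun i j _ _ => by rw [hz i, hz j]⟩
    · push_neg at hz
      obtain ⟨i0, hi0⟩ := hz
      have hP : ∃ m : ℕ, ∃ hm : m < n, (e ⟨m, hm⟩ : ℕ) ≠ 0 := ⟨i0.1, i0.2, by
        convert hi0⟩
      set m := Nat.find hP with hm
      obtain ⟨hmn, hne⟩ : ∃ hm' : m < n, (e ⟨m, hm'⟩ : ℕ) ≠ 0 := Nat.find_spec hP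
      set t : Fin n := ⟨m, hmn⟩ with ht
      have hpre : ∀ i : Fin n, i < t → (e i : ℕ) = 0 := by
        intro i hi
        by_contra hc
        have : m ≤ i.1 := Nat.find_le ⟨i.2, by convert hc⟩
        have : i.1 < m := hi
        omega
      have ht0 : 0 < m := by
        rcases Nat.eq_zero_or_pos m with h0 | h0
        · exfalso
          have hb : (e t : ℕ) ≤ m := Fin.is_le (e ⟨m, hmn⟩)
          omega
        · exact h0
      have hzero : (e ⟨0, hn⟩ : ℕ) = 0 :=
        Nat.le_zero.mp (Fin.is_le (e ⟨0, hn⟩))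
      have htail : ∀ j : Fin n, t < j → (e j : ℕ) = (e t : ℕ) := by
        intro j hj
        by_contra hc
        exact h ⟨⟨0, hn⟩, t, j, by simpa [Fin.lt_def] using ht0, hj,
          by omega, fun hh => hc hh.symm⟩
      have htail' : ∀ j : Fin n, t ≤ j → (e j : ℕ) = (e t : ℕ) := by
        intro j hj
        rcases eq_or_lt_of_le hj with h' | h'
        · rw [← h']
        · exact htail j h'
      exact ⟨t, hpre, fun i j hti htj => by rw [htail' i hti, htail' j htj]⟩
  · rintro ⟨t, hpre, htail⟩ ⟨i, j, k, hij, hjk, h1, h2⟩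
    by_cases hjt : j < t
    · have := hpre j hjt; omega
    · push_neg at hjt
      exact h2 (htail j k hjt (le_trans hjt hjk.le))
end

section
/- The number of inversion sequences of length n with no indices i < j < k such that e_i < e_j ≤ e_k equals 2^{n-1}, for n ≥ 1. -/
namespace Stmt8Aux

instance instFinite (n : ℕ) : Finite (InvSeq n) := by unfold InvSeq; infer_instance

/-- All nonzero entries are `≥ b`, and each nonzero entry strictly dominates all later
entries. -/
def R (b : ℕ) {n : ℕ} (e : InvSeq n) : Prop :=
  (∀ j, (e j : ℕ) = 0 ∨ b ≤ (e j : ℕ)) ∧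
  (∀ j k : Fin n, j < k → (e j : ℕ) = 0 ∨ (e k : ℕ) < (e j : ℕ))

lemma natCard_sigma {ι : Type*} [Fintype ι] (β : ι → Type*) [∀ i, Finite (β i)] :
    Nat.card (Σ i, β i) = ∑ i, Nat.card (β i) := by
  classical
  letI : ∀ i, Fintype (β i) := fun i => Fintype.ofFinite _
  simp [Nat.card_eq_fintype_card, Fintype.card_sigma]

lemma geom (k : ℕ) : ∑ j ∈ Finset.range k, 2 ^ j = 2 ^ k - 1 := by
  induction k with
  | zero => simp
  | succ k ih =>
    rw [Finset.sum_range_succ, ih]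
    have : 1 ≤ 2 ^ k := Nat.one_le_two_pow
    ring_nf
    omega

lemma sumA (k : ℕ) : ∑ j ∈ Finset.range (k + 1), 2 ^ (k - (j + 1)) = 2 ^ k := by
  rw [Finset.sum_range_succ]
  have h1 : ∀ j ∈ Finset.range k, 2 ^ (k - (j + 1)) = 2 ^ (k - 1 - j) := by
    intro j hj; congr 1; omega
  rw [Finset.sum_congr rfl h1, Finset.sum_range_reflect (fun j => 2 ^ j) k, geom]
  have h3 : k - (k + 1) = 0 := by omega
  rw [h3, pow_zero]
  have : 1 ≤ 2 ^ k := Nat.one_le_two_pow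
  omega

lemma sum_arith (n b : ℕ) (hb : 1 ≤ b) :
    ∑ m ∈ Finset.range (n + 1),
      (if m = 0 then 2 ^ (n - b) else if b ≤ m then 2 ^ (n - (m + 1)) else 0)
      = 2 ^ (n + 1 - b) := by
  rw [Finset.range_eq_Ico, Finset.sum_eq_sum_Ico_succ_bot (Nat.succ_pos n)]
  rw [if_pos rfl]
  by_cases hbn : b ≤ n
  · have hmid : ∑ m ∈ Finset.Ico 1 (n + 1),
        (if m = 0 then 2 ^ (n - b) else if b ≤ m then 2 ^ (n - (m + 1)) else 0)
        = ∑ m ∈ Finset.Ico b (n + 1), 2 ^ (n - (m + 1)) := by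
      rw [← Finset.sum_Ico_consecutive _ hb (by omega : b ≤ n + 1)]
      have hz : ∑ m ∈ Finset.Ico 1 b,
          (if m = 0 then 2 ^ (n - b) else if b ≤ m then 2 ^ (n - (m + 1)) else 0) = 0 := by
        apply Finset.sum_eq_zero
        intro m hm
        rw [Finset.mem_Ico] at hm
        rw [if_neg (by omega), if_neg (by omega)]
      rw [hz, zero_add]
      apply Finset.sum_congr rfl
      intro m hm
      rw [Finset.mem_Ico] at hm
      rw [if_neg (by omega), if_pos (by omega)]
    rw [hmid, Finset.sum_Ico_eq_sum_range]
    have hrange : n + 1 - b = (n - b) + 1 := by omega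
    rw [hrange]
    have h2 : ∀ j ∈ Finset.range (n - b + 1), 2 ^ (n - (b + j + 1)) = 2 ^ ((n - b) - (j + 1)) := by
      intro j hj; congr 1; omega
    rw [Finset.sum_congr rfl h2, sumA, pow_succ]
    omega
  · have hz : ∑ m ∈ Finset.Ico 1 (n + 1),
        (if m = 0 then 2 ^ (n - b) else if b ≤ m then 2 ^ (n - (m + 1)) else 0) = 0 := by
      apply Finset.sum_eq_zero
      intro m hm
      rw [Finset.mem_Ico] at hm
      rw [if_neg (by omega), if_neg (by omega)]
    rw [hz]
    have h1 : n - b = 0 := by omega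
    have h2 : n + 1 - b = 0 := by omega
    rw [h1, h2]
    simp

lemma R_snoc {n : ℕ} (b : ℕ) (hb : 1 ≤ b) (e' : InvSeq n) (v : Fin (n + 1)) :
    R b (Fin.snoc e' v : InvSeq (n + 1)) ↔
      ((v : ℕ) = 0 ∧ R b e') ∨ (b ≤ (v : ℕ) ∧ R ((v : ℕ) + 1) e') := by
  have hcast : ∀ j : Fin n, ((Fin.snoc e' v : InvSeq (n + 1)) j.castSucc : ℕ) = e' j := by
    intro j; exact congrArg Fin.val (Fin.snoc_castSucc (α := fun i : Fin (n + 1) => Fin (i.1 + 1)) (p := e') (x := v) (i := j))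
  have hlast : ((Fin.snoc e' v : InvSeq (n + 1)) (Fin.last n) : ℕ) = v := by
    exact congrArg Fin.val (Fin.snoc_last (α := fun i : Fin (n + 1) => Fin (i.1 + 1)) (p := e') (x := v))
  constructor
  · rintro ⟨h1, h2⟩
    have hpair : ∀ j k : Fin n, j < k → (e' j : ℕ) = 0 ∨ (e' k : ℕ) < e' j := by
      intro j k hjk
      have := h2 j.castSucc k.castSucc (by simpa using hjk)
      rwa [hcast, hcast] at this
    by_cases hv : (v : ℕ) = 0
    · left
      refine ⟨hv, ?_, hpair⟩
      intro j
      have := h1 j.castSucc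
      rwa [hcast] at this
    · right
      have hbv : b ≤ (v : ℕ) := by
        have := h1 (Fin.last n); rw [hlast] at this; omega
      refine ⟨hbv, ?_, hpair⟩
      intro j
      have := h2 j.castSucc (Fin.last n) (Fin.castSucc_lt_last j)
      rw [hcast, hlast] at this
      omega
  · intro h
    constructor
    · intro j
      rcases Fin.eq_castSucc_or_eq_last j with ⟨j', rfl⟩ | rfl
      · rw [hcast]
        rcases h with ⟨_, hr, _⟩ | ⟨_, hr, _⟩
        · exact hr j'
        · rcases hr j' with h0 | h0
          · exact Or.inl h0
          · right; omega
      · rw [hlast]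
        rcases h with ⟨hv, _⟩ | ⟨hbv, _⟩
        · left; exact hv
        · right; exact hbv
    · intro j k hjk
      rcases Fin.eq_castSucc_or_eq_last k with ⟨k', rfl⟩ | rfl
      · rcases Fin.eq_castSucc_or_eq_last j with ⟨j', rfl⟩ | rfl
        · rw [hcast, hcast]
          have hjk' : j' < k' := by simpa using hjk
          rcases h with ⟨_, _, hp⟩ | ⟨_, _, hp⟩ <;> exact hp j' k' hjk'
        · exact absurd hjk (not_lt.mpr (Fin.le_last _))
      · rcases Fin.eq_castSucc_or_eq_last j with ⟨j', rfl⟩ | rfl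
        · rw [hcast, hlast]
          rcases h with ⟨hv, _⟩ | ⟨_, hr, _⟩
          · rcases Nat.eq_zero_or_pos (e' j' : ℕ) with h0 | h0
            · exact Or.inl h0
            · right; omega
          · rcases hr j' with h0 | h0
            · exact Or.inl h0
            · right; omega
        · exact absurd hjk (lt_irrefl _)

lemma card_R (n : ℕ) : ∀ b, 1 ≤ b → Nat.card {e : InvSeq n // R b e} = 2 ^ (n - b) := by
  induction n with
  | zero =>
    intro b hb
    have h0 : (0 : ℕ) - b = 0 := by omega
    rw [h0, pow_zero]
    haveI : Subsingleton {e : InvSeq 0 // R b e} := by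
      constructor
      rintro ⟨e, _⟩ ⟨f, _⟩
      apply Subtype.ext
      funext i
      exact i.elim0
    haveI : Nonempty {e : InvSeq 0 // R b e} :=
      ⟨⟨fun i => i.elim0, ⟨fun j => j.elim0, fun j k _ => j.elim0⟩⟩⟩
    exact Nat.card_unique
  | succ n ih =>
    intro b hb
    have E1 : {e : InvSeq (n + 1) // R b e} ≃
        Σ v : Fin (n + 1), {e' : InvSeq n // R b (Fin.snoc e' v : InvSeq (n + 1))} := by
      refine (Equiv.subtypeEquiv (Fin.snocEquiv (fun i : Fin (n + 1) => Fin (i.1 + 1))).symm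
        (fun f => ?_)).trans
        (Equiv.subtypeProdEquivSigmaSubtype
          (fun (v : Fin (n + 1)) (e' : InvSeq n) => R b (Fin.snoc e' v : InvSeq (n + 1))))
      exact iff_of_eq (congrArg (R b) (Fin.snoc_init_self f).symm)
    rw [Nat.card_congr E1, natCard_sigma]
    have hv : ∀ v : Fin (n + 1),
        Nat.card {e' : InvSeq n // R b (Fin.snoc e' v : InvSeq (n + 1))} =
        (if (v : ℕ) = 0 then 2 ^ (n - b)
          else if b ≤ (v : ℕ) then 2 ^ (n - ((v : ℕ) + 1)) else 0) := by
      intro v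
      by_cases h0 : (v : ℕ) = 0
      · rw [if_pos h0]
        have hiff : ∀ e' : InvSeq n,
            R b (Fin.snoc e' v : InvSeq (n + 1)) ↔ R b e' := by
          intro e'
          rw [R_snoc b hb]
          constructor
          · rintro (⟨_, h⟩ | ⟨hbv, _⟩)
            · exact h
            · omega
          · intro h; exact Or.inl ⟨h0, h⟩
        rw [Nat.card_congr (Equiv.subtypeEquivRight hiff)]
        exact ih b hb
      · by_cases h1 : b ≤ (v : ℕ)
        · rw [if_neg h0, if_pos h1]
          have hiff : ∀ e' : InvSeq n,
              R b (Fin.snoc e' v : InvSeq (n + 1)) ↔ R ((v : ℕ) + 1) e' := by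
            intro e'
            rw [R_snoc b hb]
            constructor
            · rintro (⟨hv0, _⟩ | ⟨_, h⟩)
              · exact absurd hv0 h0
              · exact h
            · intro h; exact Or.inr ⟨h1, h⟩
          rw [Nat.card_congr (Equiv.subtypeEquivRight hiff)]
          exact ih ((v : ℕ) + 1) (by omega)
        · rw [if_neg h0, if_neg h1]
          haveI : IsEmpty {e' : InvSeq n // R b (Fin.snoc e' v : InvSeq (n + 1))} := by
            constructor
            rintro ⟨e', he⟩
            rw [R_snoc b hb] at he
            rcases he with ⟨h, _⟩ | ⟨h, _⟩ <;> omega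
          exact Nat.card_of_isEmpty
    rw [Finset.sum_congr rfl (fun v _ => hv v)]
    rw [Fin.sum_univ_eq_sum_range
      (fun m => if m = 0 then 2 ^ (n - b) else if b ≤ m then 2 ^ (n - (m + 1)) else 0)]
    exact sum_arith n b hb

end Stmt8Aux

theorem stmt8 (n : ℕ) (hn : 1 ≤ n) :
    Nat.card {e : InvSeq n // ¬ ∃ i j k : Fin n, i < j ∧ j < k ∧
      (e i : ℕ) < (e j : ℕ) ∧ (e j : ℕ) ≤ (e k : ℕ)} =
    2 ^ (n - 1) := by
  have key : ∀ e : InvSeq n,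
      (¬ ∃ i j k : Fin n, i < j ∧ j < k ∧
        (e i : ℕ) < (e j : ℕ) ∧ (e j : ℕ) ≤ (e k : ℕ)) ↔ Stmt8Aux.R 1 e := by
    intro e
    constructor
    · intro h
      refine ⟨fun j => by omega, ?_⟩
      intro j k hjk
      by_contra hc
      push_neg at hc
      obtain ⟨hj0, hkj⟩ := hc
      have hj : 0 < j.val := by
        by_contra h0
        have hj0' : j.val = 0 := by omega
        have := (e j).isLt
        omega
      have hi : (e ⟨0, hn⟩ : ℕ) < (e j : ℕ) := by
        have h5 := (e ⟨0, hn⟩).isLt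
        have hg : ((⟨0, hn⟩ : Fin n) : ℕ) = 0 := rfl
        omega
      exact h ⟨⟨0, hn⟩, j, k, by simpa [Fin.lt_def] using hj, hjk, hi, hkj⟩
    · rintro ⟨_, h2⟩ ⟨i, j, k, hij, hjk, h3, h4⟩
      rcases h2 j k hjk with h0 | h0 <;> omega
  rw [Nat.card_congr (Equiv.subtypeEquivRight key)]
  exact Stmt8Aux.card_R n 1 le_rfl
end

section
/- The number of inversion sequences of length n with no indices i < j < k such that e_i < e_j and e_j ≥ e_k equals 2^{n-1}, for n ≥ 1. -/
namespace Stmt9Aux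

/-- rank: number of elements of `S` strictly greater than `v`. -/
def rk (S : Finset ℕ) (v : ℕ) : ℕ := (S.filter (fun x => v < x)).card

lemma rk_lt {S : Finset ℕ} {v w : ℕ} (hw : w ∈ S) (h : v < w) :
    rk S w < rk S v := by
  apply Finset.card_lt_card
  constructor
  · intro x hx
    simp only [Finset.mem_filter] at hx ⊢
    exact ⟨hx.1, lt_trans h hx.2⟩
  · intro hsub
    have := hsub (Finset.mem_filter.mpr ⟨hw, h⟩)
    simp only [Finset.mem_filter] at this
    exact lt_irrefl w this.2

lemma rk_inj {S : Finset ℕ} {v w : ℕ} (hv : v ∈ S) (hw : w ∈ S)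
    (h : rk S v = rk S w) : v = w := by
  rcases lt_trichotomy v w with hlt | heq | hgt
  · exact absurd h (ne_of_gt (rk_lt hw hlt))
  · exact heq
  · exact absurd h (ne_of_lt (rk_lt hv hgt))

lemma rk_lt_card {S : Finset ℕ} {v : ℕ} (hv : v ∈ S) : rk S v < S.card := by
  have h1 : S.filter (fun x => v < x) ⊆ S.erase v := by
    intro x hx
    simp only [Finset.mem_filter] at hx
    exact Finset.mem_erase.mpr ⟨Nat.ne_of_gt hx.2, hx.1⟩
  have h2 := Finset.card_le_card h1
  have h3 := Finset.card_erase_of_mem hv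
  have h4 : 0 < S.card := Finset.card_pos.mpr ⟨v, hv⟩
  unfold rk
  omega

lemma exists_rk {S : Finset ℕ} {m : ℕ} (hm : m < S.card) :
    ∃ v ∈ S, rk S v = m := by
  have := Finset.surj_on_of_inj_on_of_card_le (s := S) (t := Finset.range S.card)
    (fun v _ => rk S v)
    (fun v hv => Finset.mem_range.mpr (rk_lt_card hv))
    (fun v₁ v₂ h₁ h₂ h => rk_inj h₁ h₂ h)
    (by simp)
    m (Finset.mem_range.mpr hm)
  obtain ⟨v, hv, heq⟩ := this
  exact ⟨v, hv, heq.symm⟩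

/-- the inversion sequence value determined by `S` at position `j`. -/
def gfun (n : ℕ) (S : Finset ℕ) (j : ℕ) : ℕ :=
  (S.filter (fun v => rk S v = n - 1 - j)).sup id

lemma gfun_eq {n : ℕ} {S : Finset ℕ} {v j : ℕ} (hv : v ∈ S)
    (hr : rk S v = n - 1 - j) : gfun n S j = v := by
  apply le_antisymm
  · apply Finset.sup_le
    intro x hx
    simp only [Finset.mem_filter] at hx
    have : x = v := rk_inj hx.1 hv (hx.2.trans hr.symm)
    simp [this]
  · exact Finset.le_sup (f := id) (Finset.mem_filter.mpr ⟨hv, hr⟩)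

lemma gfun_eq_zero {n : ℕ} {S : Finset ℕ} {j : ℕ}
    (h : ∀ v ∈ S, rk S v ≠ n - 1 - j) : gfun n S j = 0 := by
  have : S.filter (fun v => rk S v = n - 1 - j) = ∅ := by
    apply Finset.filter_eq_empty_iff.mpr
    intro v hv
    exact h v hv
  simp [gfun, this]

lemma gfun_cases {n : ℕ} (S : Finset ℕ) (j : ℕ) :
    gfun n S j = 0 ∨ ∃ v ∈ S, rk S v = n - 1 - j ∧ gfun n S j = v := by
  rcases (S.filter (fun v => rk S v = n - 1 - j)).eq_empty_or_nonempty with he | ⟨v, hv⟩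
  · left; simp [gfun, he]
  · right
    simp only [Finset.mem_filter] at hv
    exact ⟨v, hv.1, hv.2, gfun_eq hv.1 hv.2⟩

variable {n : ℕ}

/-- the cleaned-up validity condition. -/
def Valid (e : InvSeq n) : Prop :=
  ∀ j k : Fin n, j < k → 0 < (e j : ℕ) → (e j : ℕ) < (e k : ℕ)

/-- set of positive values of `e`. -/
def vset (e : InvSeq n) : Finset ℕ :=
  (Finset.univ.image (fun j : Fin n => (e j : ℕ))).filter (fun v => 0 < v)

lemma mem_vset {e : InvSeq n} {v : ℕ} :
    v ∈ vset e ↔ 0 < v ∧ ∃ j, (e j : ℕ) = v := by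
  simp only [vset, Finset.mem_filter, Finset.mem_image, Finset.mem_univ, true_and]
  tauto

lemma val_le (e : InvSeq n) (j : Fin n) : (e j : ℕ) ≤ (j : ℕ) :=
  Nat.lt_succ_iff.mp (e j).isLt

/-- key lemma: for valid `e` with `e j > 0`, the rank of `e j` in `vset e` is `n-1-j`. -/
lemma rk_vset {e : InvSeq n} (he : Valid e) {j : Fin n} (hj : 0 < (e j : ℕ)) :
    rk (vset e) (e j : ℕ) = n - 1 - (j : ℕ) := by
  have himg : (vset e).filter (fun x => (e j : ℕ) < x)
      = (Finset.Ioi j).image (fun k => (e k : ℕ)) := by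
    ext x
    simp only [Finset.mem_filter, Finset.mem_image, Finset.mem_Ioi, mem_vset]
    constructor
    · rintro ⟨⟨hx0, k, hk⟩, hlt⟩
      refine ⟨k, ?_, hk⟩
      rcases lt_trichotomy k j with h | h | h
      · have := he k j h (hk ▸ hx0)
        omega
      · subst h; omega
      · exact h
    · rintro ⟨k, hk, hkx⟩
      have hlt := he j k hk hj
      exact ⟨⟨by omega, k, hkx⟩, by omega⟩
  have hinj : Set.InjOn (fun k : Fin n => (e k : ℕ)) (Finset.Ioi j) := by
    intro k₁ h₁ k₂ h₂ heq
    simp only [Finset.coe_Ioi, Set.mem_Ioi] at h₁ h₂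
    simp only at heq
    by_contra hne
    rcases lt_or_gt_of_ne hne with h | h
    · have hp : 0 < (e k₁ : ℕ) := lt_of_lt_of_le hj (le_of_lt (he j k₁ h₁ hj))
      have := he k₁ k₂ h hp
      omega
    · have hp : 0 < (e k₂ : ℕ) := lt_of_lt_of_le hj (le_of_lt (he j k₂ h₂ hj))
      have := he k₂ k₁ h hp
      omega
  rw [rk, himg, Finset.card_image_of_injOn hinj, Fin.card_Ioi]

lemma vset_card_le {e : InvSeq n} (he : Valid e) {j : Fin n} (hj : (e j : ℕ) = 0) :
    (vset e).card ≤ n - 1 - (j : ℕ) := by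
  have hsub : vset e ⊆ (Finset.Ioi j).image (fun k => (e k : ℕ)) := by
    intro v hv
    rw [mem_vset] at hv
    obtain ⟨hv0, k, hk⟩ := hv
    simp only [Finset.mem_image, Finset.mem_Ioi]
    refine ⟨k, ?_, hk⟩
    rcases lt_trichotomy k j with h | h | h
    · have := he k j h (hk ▸ hv0)
      omega
    · subst h; omega
    · exact h
  calc (vset e).card ≤ _ := Finset.card_le_card hsub
    _ ≤ (Finset.Ioi j).card := Finset.card_image_le
    _ = n - 1 - (j : ℕ) := Fin.card_Ioi j

/-- recovery: a valid `e` is determined by `vset e`. -/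
lemma gfun_vset {e : InvSeq n} (he : Valid e) (j : Fin n) :
    gfun n (vset e) (j : ℕ) = (e j : ℕ) := by
  rcases Nat.eq_zero_or_pos (e j : ℕ) with h0 | hpos
  · rw [h0]
    apply gfun_eq_zero
    intro v hv
    have h1 := rk_lt_card hv
    have h2 := vset_card_le he h0
    omega
  · exact gfun_eq (mem_vset.mpr ⟨hpos, j, rfl⟩) (rk_vset he hpos)

end Stmt9Aux

open Stmt9Aux in
theorem stmt9 (n : ℕ) (hn : 1 ≤ n) :
    Nat.card {e : InvSeq n // ¬ ∃ i j k : Fin n, i < j ∧ j < k ∧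
      (e i : ℕ) < (e j : ℕ) ∧ (e k : ℕ) ≤ (e j : ℕ)} =
    2 ^ (n - 1) := by
  classical
  -- Step 1: replace the predicate by `Valid`.
  have hiff : ∀ e : InvSeq n,
      (¬ ∃ i j k : Fin n, i < j ∧ j < k ∧
        (e i : ℕ) < (e j : ℕ) ∧ (e k : ℕ) ≤ (e j : ℕ)) ↔ Valid e := by
    intro e
    constructor
    · intro h j k hjk hpos
      by_contra hle
      push_neg at hle
      have hj0 : 0 < (j : ℕ) := lt_of_lt_of_le hpos (val_le e j)
      have hpos0 : 0 < n := hn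
      have h0 : (e ⟨0, hpos0⟩ : ℕ) = 0 := Nat.lt_one_iff.mp (e ⟨0, hpos0⟩).isLt
      have hi : (⟨0, hpos0⟩ : Fin n) < j := by
        rw [Fin.lt_def]; exact hj0
      exact h ⟨⟨0, hpos0⟩, j, k, hi, hjk, by omega, hle⟩
    · rintro hV ⟨i, j, k, hij, hjk, h1, h2⟩
      have := hV j k hjk (by omega)
      omega
  rw [Nat.card_congr (Equiv.subtypeEquivRight hiff)]
  -- Step 2: bijection with the powerset of {1, ..., n-1}.
  set T : Finset ℕ := Finset.Icc 1 (n - 1) with hT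
  have key : Nat.card {e : InvSeq n // Valid e} = Nat.card ↥T.powerset := by
    apply Nat.card_eq_of_bijective
      (fun x => ⟨vset x.1, Finset.mem_powerset.mpr (by
        intro v hv
        rw [mem_vset] at hv
        obtain ⟨hv0, j, hj⟩ := hv
        have h1 := val_le x.1 j
        have h2 := j.isLt
        exact Finset.mem_Icc.mpr ⟨by omega, by omega⟩)⟩)
    constructor
    · rintro ⟨e₁, he₁⟩ ⟨e₂, he₂⟩ h
      simp only [Subtype.mk.injEq] at h
      apply Subtype.ext
      funext j
      apply Fin.ext
      rw [← gfun_vset he₁ j, ← gfun_vset he₂ j, h]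
    · rintro ⟨S, hS⟩
      rw [Finset.mem_powerset] at hS
      have hmem : ∀ v ∈ S, 1 ≤ v ∧ v ≤ n - 1 := fun v hv =>
        Finset.mem_Icc.mp (hS hv)
      have hcard : S.card ≤ n - 1 := by
        calc S.card ≤ T.card := Finset.card_le_card hS
          _ = n - 1 := by rw [hT, Nat.card_Icc]; omega
      -- bound on gfun
      have hbnd : ∀ j : Fin n, gfun n S (j : ℕ) ≤ (j : ℕ) := by
        intro j
        rcases gfun_cases (n := n) S (j : ℕ) with h0 | ⟨v, hv, hr, heq⟩
        · omega
        · rw [heq]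
          have hsub : S.filter (fun x => v < x) ⊆ Finset.Icc (v + 1) (n - 1) := by
            intro x hx
            simp only [Finset.mem_filter] at hx
            have := hmem x hx.1
            exact Finset.mem_Icc.mpr ⟨by omega, this.2⟩
          have h1 : rk S v ≤ n - 1 - v := by
            have := Finset.card_le_card hsub
            rw [Nat.card_Icc] at this
            unfold rk
            omega
          have hv1 := hmem v hv
          have hj := j.isLt
          omega
      refine ⟨⟨fun j => ⟨gfun n S (j : ℕ), Nat.lt_succ_of_le (hbnd j)⟩, ?_⟩, ?_⟩
      · -- validity
        intro j k hjk hpos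
        simp only at hpos ⊢
        rcases gfun_cases (n := n) S (j : ℕ) with h0 | ⟨v, hv, hr, heq⟩
        · omega
        · have hrv := rk_lt_card hv
          have hj := j.isLt
          have hk := k.isLt
          have hjk' : (j : ℕ) < (k : ℕ) := hjk
          have hm : n - 1 - (k : ℕ) < S.card := by omega
          obtain ⟨w, hw, hrw⟩ := exists_rk hm
          have heqk : gfun n S (k : ℕ) = w := gfun_eq hw hrw
          rw [heq, heqk]
          by_contra hle
          push_neg at hle
          rcases eq_or_lt_of_le hle with h | h
          · rw [h] at hrw
            omega
          · have := rk_lt hv h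
            omega
      · -- vset of constructed e equals S
        apply Subtype.ext
        simp only
        ext v
        refine mem_vset.trans ?_
        constructor
        · rintro ⟨hv0, j, hj⟩
          simp only at hj
          rcases gfun_cases (n := n) S (j : ℕ) with h0 | ⟨w, hw, hrw, heq⟩
          · omega
          · rw [heq] at hj
            exact hj ▸ hw
        · intro hv
          have hv1 := hmem v hv
          have hrv := rk_lt_card hv
          have hj : n - 1 - rk S v < n := by omega
          refine ⟨by omega, ⟨n - 1 - rk S v, hj⟩, ?_⟩
          simp only
          exact gfun_eq hv (by omega)
  rw [key, Nat.card_eq_fintype_card, Fintype.card_coe, Finset.card_powerset,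
    hT, Nat.card_Icc]
  congr 1
end

section
/- The number of inversion sequences of length n with no indices i < j < k such that e_i ≤ e_j = e_k equals 2^{n-1}, for n ≥ 1. -/
instance (n : ℕ) : Fintype (InvSeq n) := by unfold InvSeq; infer_instance

def Good (n : ℕ) (e : InvSeq n) : Prop :=
  ∀ j k : Fin n, 0 < j.1 → j < k → (e j : ℕ) ≠ (e k : ℕ)

def res {n : ℕ} (e : InvSeq (n+1)) : InvSeq n := fun i => e i.castSucc

def ext' {n : ℕ} (e : InvSeq n) (v : Fin (n+1)) : InvSeq (n+1) :=
  fun i => if h : i.1 < n then e ⟨i.1, h⟩ else Fin.cast (by omega) v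

lemma res_ext {n : ℕ} (e : InvSeq n) (v : Fin (n+1)) : res (ext' e v) = e := by
  funext i
  show ext' e v i.castSucc = e i
  cases i with
  | mk m hm => simp [ext', hm, Fin.castSucc]

lemma ext_val {n : ℕ} (e : InvSeq n) (v : Fin (n+1)) (j : Fin n) :
    ((ext' e v ⟨j.1, by omega⟩ : Fin (j.1+1)) : ℕ) = (e j : ℕ) := by
  cases j with
  | mk m hm => simp [ext', hm]

lemma ext_last {n : ℕ} (e : InvSeq n) (v : Fin (n+1)) :
    ((ext' e v (Fin.last n) : Fin (n+1)) : ℕ) = (v : ℕ) := by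
  simp [ext', Fin.last]

lemma ext_res {n : ℕ} (e : InvSeq (n+1)) : ext' (res e) (e (Fin.last n)) = e := by
  funext i
  cases i with
  | mk m hm =>
    by_cases h : m < n
    · show (if h' : m < n then res e ⟨m, h'⟩ else _) = e ⟨m, hm⟩
      rw [dif_pos h]
      rfl
    · have hm' : m = n := by omega
      subst hm'
      show (if h' : m < m then _ else Fin.cast _ (e (Fin.last m))) = e ⟨m, hm⟩
      rw [dif_neg (lt_irrefl m)]
      rfl

def T (n : ℕ) := {e : InvSeq n // Good n e}

noncomputable instance (n : ℕ) : Fintype (T n) := by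
  classical
  unfold T
  infer_instance

def stepEquiv (n : ℕ) :
    T (n+1) ≃ Σ p : T n, {v : Fin (n+1) // ∀ j : Fin n, 0 < j.1 → (p.1 j : ℕ) ≠ (v : ℕ)} where
  toFun e :=
    ⟨⟨res e.1, fun j k hj hjk => by
        have := e.2 j.castSucc k.castSucc (by simpa using hj) (by simpa using hjk)
        exact this⟩,
     ⟨e.1 (Fin.last n), fun j hj => by
        have := e.2 j.castSucc (Fin.last n) (by simpa using hj)
          (Fin.castSucc_lt_last j)
        exact this⟩⟩
  invFun p :=
    ⟨ext' p.1.1 p.2.1, by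
      intro j k hj hjk
      by_cases hk : k.1 < n
      · have hj' : j.1 < n := by omega
        have h1 := ext_val p.1.1 p.2.1 ⟨j.1, hj'⟩
        have h2 := ext_val p.1.1 p.2.1 ⟨k.1, hk⟩
        have := p.1.2 ⟨j.1, hj'⟩ ⟨k.1, hk⟩ hj hjk
        simp only [Fin.eta] at h1 h2
        omega
      · have hk' : k = Fin.last n := by
          apply Fin.ext; simp [Fin.last]; omega
        subst hk'
        have hj' : j.1 < n := by
          have := hjk; simp [Fin.lt_def, Fin.last] at this ⊢; omega
        have h1 := ext_val p.1.1 p.2.1 ⟨j.1, hj'⟩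
        have h2 := ext_last p.1.1 p.2.1
        have := p.2.2 ⟨j.1, hj'⟩ hj
        simp only [Fin.eta] at h1
        omega⟩
  left_inv e := by
    apply Subtype.ext
    exact ext_res e.1
  right_inv p := by
    apply Sigma.ext
    · apply Subtype.ext
      exact res_ext p.1.1 p.2.1
    · rw [Subtype.heq_iff_coe_eq (by intro x; simp only [res_ext])]
      show ((ext' p.1.1 p.2.1) (Fin.last n) : Fin (n+1)) = p.2.1
      exact Fin.ext (ext_last p.1.1 p.2.1)

lemma fiber_card {n : ℕ} (hn : 1 ≤ n) (e : InvSeq n) (he : Good n e) :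
    Nat.card {v : Fin (n+1) // ∀ j : Fin n, 0 < j.1 → (e j : ℕ) ≠ (v : ℕ)} = 2 := by
  classical
  rw [Nat.card_eq_fintype_card, Fintype.card_subtype]
  set S : Finset (Fin n) := Finset.univ.filter (fun j => 0 < j.1) with hS
  have hScard : S.card = n - 1 := by
    have : S = Finset.univ \ {(⟨0, hn⟩ : Fin n)} := by
      ext j; simp [hS, Fin.ext_iff, Nat.pos_iff_ne_zero]
    rw [this, Finset.card_sdiff_of_subset (by simp)]
    simp
  set f : Fin n → Fin (n+1) := fun j => ⟨(e j : ℕ), by have := (e j).2; omega⟩ with hf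
  have hinj : Set.InjOn f S := by
    intro j hj j' hj' hjj
    simp only [hS, Finset.coe_filter, Set.mem_setOf_eq] at hj hj'
    have hval : (e j : ℕ) = (e j' : ℕ) := by
      simpa [hf, Fin.ext_iff] using hjj
    by_contra hne
    rcases lt_or_gt_of_ne hne with h | h
    · exact he j j' hj.2 h hval
    · exact he j' j hj'.2 h hval.symm
  set B : Finset (Fin (n+1)) := S.image f with hB
  have hBcard : B.card = n - 1 := by
    rw [hB, Finset.card_image_of_injOn hinj, hScard]
  have hfilter : (Finset.univ.filter
      (fun v : Fin (n+1) => ∀ j : Fin n, 0 < j.1 → (e j : ℕ) ≠ (v : ℕ))) =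
      Finset.univ \ B := by
    ext v
    simp only [Finset.mem_filter, Finset.mem_univ, true_and, Finset.mem_sdiff,
      hB, Finset.mem_image, hS, Finset.mem_filter, hf, not_exists]
    constructor
    · intro h j hj
      exact h j hj.1 (by simpa [Fin.ext_iff] using hj.2)
    · intro h j hj hval
      exact h j ⟨hj, by simpa [Fin.ext_iff] using hval⟩
  rw [hfilter, Finset.card_sdiff_of_subset (Finset.subset_univ _), hBcard]
  simp only [Finset.card_univ, Fintype.card_fin]
  omega

lemma cardT : ∀ n, 1 ≤ n → Nat.card (T n) = 2 ^ (n - 1) := by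
  intro n
  induction n with
  | zero => omega
  | succ m ih =>
    intro _
    rcases Nat.eq_zero_or_pos m with hm | hm
    · subst hm
      have h1 : Nonempty (T 1) := ⟨⟨fun i => ⟨0, by omega⟩, fun j k hj => by omega⟩⟩
      have h2 : Subsingleton (T 1) := ⟨by
        rintro ⟨a, _⟩ ⟨b, _⟩
        apply Subtype.ext
        funext i
        apply Fin.ext
        have h1 := (a i).2
        have h2 := (b i).2
        have := i.2
        omega⟩
      rw [show (1:ℕ) - 1 = 0 from rfl, pow_zero, Nat.card_eq_one_iff_unique]
      exact ⟨h2, h1⟩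
    · classical
      rw [Nat.card_congr (stepEquiv m)]
      rw [Nat.card_eq_fintype_card]
      rw [Fintype.card_sigma]
      have : ∀ p : T m, Fintype.card
          {v : Fin (m+1) // ∀ j : Fin m, 0 < j.1 → (p.1 j : ℕ) ≠ (v : ℕ)} = 2 := by
        intro p
        rw [← Nat.card_eq_fintype_card]
        exact fiber_card hm p.1 p.2
      rw [Finset.sum_congr rfl (fun p _ => this p), Finset.sum_const, smul_eq_mul]
      rw [Finset.card_univ, ← Nat.card_eq_fintype_card, ih hm, ← pow_succ]
      congr 1
      omega

theorem stmt10 (n : ℕ) (hn : 1 ≤ n) :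
    Nat.card {e : InvSeq n // ¬ ∃ i j k : Fin n, i < j ∧ j < k ∧
      (e i : ℕ) ≤ (e j : ℕ) ∧ (e j : ℕ) = (e k : ℕ)} =
    2 ^ (n - 1) := by
  rw [← cardT n hn]
  apply Nat.card_congr
  apply Equiv.subtypeEquivRight
  intro e
  constructor
  · intro h j k hj hjk hval
    set i0 : Fin n := ⟨0, by omega⟩ with hi0
    refine h ⟨i0, j, k, ?_, hjk, ?_, hval⟩
    · exact Fin.lt_def.mpr (by simp [hi0]; omega)
    · have h0 : (e i0 : ℕ) < 1 := (e i0).2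
      omega
  · rintro h ⟨i, j, k, hij, hjk, hle, heq⟩
    exact h j k (Nat.lt_of_le_of_lt (Nat.zero_le i.1) hij) hjk heq
end

section
/- An inversion sequence e of length n has no indices i < j < k with e_i ≤ e_j = e_k if and only if the entries e_2, e_3, ..., e_n are pairwise distinct. -/
/-- An inversion sequence avoids `e_i ≤ e_j = e_k` iff the entries `e_2, …, e_n`
(i.e., all entries except the first) are pairwise distinct. -/
theorem stmt11 (n : ℕ) (e : InvSeq n) :
    (¬ ∃ i j k : Fin n, i < j ∧ j < k ∧
      (e i : ℕ) ≤ (e j : ℕ) ∧ (e j : ℕ) = (e k : ℕ)) ↔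
    ∀ i j : Fin n, 0 < i.1 → 0 < j.1 → i ≠ j → (e i : ℕ) ≠ (e j : ℕ) := by
  constructor
  · intro h i j hi hj hij heq
    have hz : (0 : ℕ) < n := lt_trans hi i.isLt
    set z : Fin n := ⟨0, hz⟩ with hzdef
    have hez : (e z : ℕ) = 0 := Nat.le_antisymm (Nat.le_of_lt_succ (e z).isLt) (Nat.zero_le _)
    rcases lt_or_gt_of_ne hij with hlt | hlt
    · exact h ⟨z, i, j, hi, hlt, by omega, heq⟩
    · exact h ⟨z, j, i, hj, hlt, by omega, heq.symm⟩
  · rintro h ⟨i, j, k, hij, hjk, hle, heq⟩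
    exact h j k (lt_of_le_of_lt (Nat.zero_le _) hij) (lt_trans (lt_of_le_of_lt (Nat.zero_le _) hij) hjk) hjk.ne heq
end

section
/- The number of inversion sequences of length n with at most one ascent (i.e., at most one index i with e_i < e_{i+1}) equals 2^n - n. -/
namespace InvSeqAux

variable {n : ℕ}

/-- "At most one ascent" predicate, exactly as in the theorem. -/
def NoTwo (e : InvSeq n) : Prop := ∀ i j : Fin n, i < j →
      ∀ hi : i.1 + 1 < n, ∀ hj : j.1 + 1 < n,
        (e i : ℕ) < (e ⟨i.1 + 1, hi⟩ : ℕ) → (e j : ℕ) < (e ⟨j.1 + 1, hj⟩ : ℕ) → False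

/-- positions from the first nonzero entry onwards -/
noncomputable def tailSet (e : InvSeq n) : Finset (Fin n) :=
  Finset.univ.filter (fun j => ∃ k : Fin n, k ≤ j ∧ 0 < (e k : ℕ))

noncomputable def phi (e : InvSeq n) : Finset (Fin n) :=
  (tailSet e).image (fun j => (⟨(e j : ℕ) + (n - 1 - j.1),
    by have := (e j).isLt; have := j.isLt; omega⟩ : Fin n))

noncomputable def psi (A : Finset (Fin n)) : InvSeq n := fun j =>
  if h : n - 1 - j.1 < A.card then
    ⟨((A.orderEmbOfFin rfl) ⟨n - 1 - j.1, h⟩ : Fin n).1 - (n - 1 - j.1),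
      by have := ((A.orderEmbOfFin rfl) ⟨n - 1 - j.1, h⟩).isLt; have := j.isLt; omega⟩
  else ⟨0, Nat.succ_pos _⟩

lemma sm_le' {m : ℕ} {g : Fin m → ℕ} (hg : StrictMono g) :
    ∀ k, ∀ h : k < m, k ≤ g ⟨k, h⟩ := by
  intro k
  induction k with
  | zero => intro _; exact Nat.zero_le _
  | succ k ih =>
      intro h
      have h1 : k < m := by omega
      have h2 := hg (show (⟨k, h1⟩ : Fin m) < ⟨k+1, h⟩ by simp [Fin.lt_def])
      have h3 := ih h1
      omega

lemma sm_le {m : ℕ} {g : Fin m → ℕ} (hg : StrictMono g) (r : Fin m) : r.1 ≤ g r :=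
  sm_le' hg r.1 r.2

lemma emb_le {A : Finset (Fin n)} (r : Fin A.card) :
    r.1 ≤ ((A.orderEmbOfFin rfl) r : Fin n).1 :=
  sm_le (fun a b hab => (A.orderEmbOfFin rfl).strictMono hab) r

lemma psi_val (A : Finset (Fin n)) (j : Fin n) (h : n - 1 - j.1 < A.card) :
    (psi A j : ℕ) = ((A.orderEmbOfFin rfl) ⟨n - 1 - j.1, h⟩ : Fin n).1 - (n - 1 - j.1) := by
  simp [psi, h]

lemma psi_val0 (A : Finset (Fin n)) (j : Fin n) (h : ¬ n - 1 - j.1 < A.card) :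
    (psi A j : ℕ) = 0 := by
  simp [psi, h]

/-- any ascent of `psi A` is at position `n - 1 - A.card`. -/
lemma psi_ascent_pos (A : Finset (Fin n)) (p : Fin n) (hp : p.1 + 1 < n)
    (hasc : (psi A p : ℕ) < (psi A ⟨p.1+1, hp⟩ : ℕ)) : p.1 + 1 + A.card = n := by
  set m := A.card with hm
  by_cases h2 : n - 1 - (p.1+1) < m
  · by_cases h1 : n - 1 - p.1 < m
    · exfalso
      have e1 := psi_val A p h1
      have e2 := psi_val A ⟨p.1+1, hp⟩ h2
      simp only [Fin.val_mk] at e2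
      have hlt : ((A.orderEmbOfFin rfl) ⟨n-1-(p.1+1), h2⟩ : Fin n).1
          < ((A.orderEmbOfFin rfl) ⟨n-1-p.1, h1⟩ : Fin n).1 := by
        have : (⟨n-1-(p.1+1), h2⟩ : Fin m) < ⟨n-1-p.1, h1⟩ := by
          simp only [Fin.lt_def]; omega
        exact (A.orderEmbOfFin rfl).strictMono this
      have hb := emb_le (A := A) ⟨n-1-(p.1+1), h2⟩
      simp only at hb
      omega
    · omega
  · exfalso
    have e2 := psi_val0 A ⟨p.1+1, hp⟩ h2
    omega

/-- psi of any set has at most one ascent. -/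
lemma psi_noTwo (A : Finset (Fin n)) : NoTwo (psi A) := by
  intro i j hij hi hj hai haj
  have h1 := psi_ascent_pos A i hi hai
  have h2 := psi_ascent_pos A j hj haj
  rw [Fin.lt_def] at hij
  omega

lemma tail_psi (A : Finset (Fin n)) (hA1 : 1 ≤ A.card) (hA : A.card ≤ ((A.orderEmbOfFin rfl)
      ⟨A.card - 1, by omega⟩ : Fin n).1) :
    tailSet (psi A) = Finset.univ.filter (fun j : Fin n => n - A.card ≤ j.1) := by
  have hmn : A.card ≤ n := le_trans (Finset.card_le_univ A) (by simp)
  ext j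
  simp only [tailSet, Finset.mem_filter, Finset.mem_univ, true_and]
  constructor
  · rintro ⟨k, hkj, hk⟩
    by_contra hj
    push_neg at hj
    have hk2 : ¬ (n - 1 - k.1 < A.card) := by
      have h3 := Fin.le_def.mp hkj; have h4 := j.isLt; omega
    rw [psi_val0 A k hk2] at hk
    exact absurd hk (lt_irrefl 0)
  · intro hj
    refine ⟨⟨n - A.card, by omega⟩, Fin.le_def.mpr (by simpa using hj), ?_⟩
    have h : n - 1 - ((⟨n - A.card, by omega⟩ : Fin n)).1 < A.card := by
      simp only [Fin.val_mk]; omega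
    rw [psi_val A _ h]
    have hidx : (⟨n - 1 - ((⟨n - A.card, by omega⟩ : Fin n)).1, h⟩ : Fin A.card)
        = ⟨A.card - 1, by omega⟩ := Fin.ext (by simp only [Fin.val_mk]; omega)
    rw [hidx]
    simp only [Fin.val_mk]
    omega

lemma max_ge (A : Finset (Fin n)) (hA1 : 1 ≤ A.card) (hA : ¬ ∃ k : Fin n, A = Finset.Iic k) :
    A.card ≤ ((A.orderEmbOfFin rfl) ⟨A.card - 1, by omega⟩ : Fin n).1 := by
  have hmn : A.card ≤ n := le_trans (Finset.card_le_univ A) (by simp)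
  by_contra hlt
  push_neg at hlt
  apply hA
  refine ⟨⟨A.card - 1, by omega⟩, ?_⟩
  apply Finset.eq_of_subset_of_card_le
  · intro a ha
    have : a ∈ Set.range (A.orderEmbOfFin rfl) := by
      rw [Finset.range_orderEmbOfFin]; exact ha
    obtain ⟨r, hr⟩ := this
    rw [Finset.mem_Iic, ← hr, Fin.le_def]
    have h1 : ((A.orderEmbOfFin rfl) r : Fin n).1
        ≤ ((A.orderEmbOfFin rfl) ⟨A.card - 1, by omega⟩ : Fin n).1 :=
      (A.orderEmbOfFin rfl).monotone (Fin.le_def.mpr (by simp only [Fin.val_mk]; omega))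
    simp only [Fin.val_mk]
    omega
  · rw [Fin.card_Iic]
    simp only [Fin.val_mk]
    omega

lemma phi_psi' (A : Finset (Fin n)) (hA : ¬ ∃ k : Fin n, A = Finset.Iic k) :
    phi (psi A) = A := by
  have hmn : A.card ≤ n := le_trans (Finset.card_le_univ A) (by simp)
  by_cases hA0 : A.card = 0
  · have hAe : A = ∅ := Finset.card_eq_zero.mp hA0
    have htail : tailSet (psi A) = ∅ := by
      ext k
      simp only [tailSet, Finset.mem_filter, Finset.mem_univ, true_and,
        Finset.notMem_empty, iff_false]
      rintro ⟨k', _, hk'⟩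
      rw [psi_val0 A k' (by omega)] at hk'
      exact absurd hk' (lt_irrefl 0)
    unfold phi
    rw [htail, Finset.image_empty, hAe]
  · have hA1 : 1 ≤ A.card := by omega
    have hmax := max_ge A hA1 hA
    have htail := tail_psi A hA1 hmax
    ext a
    unfold phi
    rw [Finset.mem_image]
    constructor
    · rintro ⟨j, hj, hja⟩
      rw [htail, Finset.mem_filter] at hj
      have h : n - 1 - j.1 < A.card := by have := j.isLt; omega
      have hv := psi_val A j h
      have hle := emb_le (A := A) ⟨n - 1 - j.1, h⟩
      simp only [Fin.val_mk] at hle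
      have : a = (A.orderEmbOfFin rfl) ⟨n - 1 - j.1, h⟩ := by
        rw [← hja]; exact Fin.ext (by simp only [Fin.val_mk]; omega)
      rw [this]
      exact Finset.orderEmbOfFin_mem A rfl _
    · intro ha
      have : a ∈ Set.range (A.orderEmbOfFin rfl) := by
        rw [Finset.range_orderEmbOfFin]; exact ha
      obtain ⟨r, hr⟩ := this
      have hr2 := r.isLt
      refine ⟨⟨n - 1 - r.1, by omega⟩, ?_, ?_⟩
      · rw [htail, Finset.mem_filter]
        exact ⟨Finset.mem_univ _, by simp only [Fin.val_mk]; omega⟩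
      · have h : n - 1 - ((⟨n - 1 - r.1, by omega⟩ : Fin n)).1 < A.card := by
          simp only [Fin.val_mk]; omega
        apply Fin.ext
        simp only [Fin.val_mk]
        rw [psi_val A _ h]
        have hidx : (⟨n - 1 - ((⟨n - 1 - r.1, by omega⟩ : Fin n)).1, h⟩ : Fin A.card) = r :=
          Fin.ext (by simp only [Fin.val_mk]; omega)
        rw [hidx, hr]
        have hle := emb_le (A := A) r
        rw [hr] at hle
        simp only [Fin.val_mk]
        omega

lemma phi_psi (A : Finset (Fin n)) (hA : ¬ ∃ k : Fin n, A = Finset.Iic k) :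
    phi (psi A) = A := phi_psi' A hA

lemma sm_of_succ {m : ℕ} {α : Type*} [Preorder α] {g : Fin m → α}
    (h : ∀ (r : ℕ) (hr : r + 1 < m), g ⟨r, by omega⟩ < g ⟨r+1, hr⟩) : StrictMono g := by
  have key : ∀ b (hb : b < m) a (_ : a < b), g ⟨a, by omega⟩ < g ⟨b, hb⟩ := by
    intro b
    induction b with
    | zero => intro _ a ha; exact absurd ha (Nat.not_lt_zero a)
    | succ b ih =>
      intro hb a ha
      rcases Nat.lt_or_ge a b with h' | h'
      · exact lt_trans (ih (by omega) a h') (h b hb)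
      · have haeq : a = b := by omega
        subst haeq
        exact h a hb
  intro a b hab
  have := key b.1 b.2 a.1 (Fin.lt_def.mp hab)
  simpa using this

lemma e_congr (e : InvSeq n) {a b : Fin n} (h : a = b) : (e a : ℕ) = (e b : ℕ) := by
  subst h; rfl

def gmap (e : InvSeq n) (i0 : ℕ) (h2 : i0 < n) : Fin (n - i0) → Fin n := fun r =>
  ⟨(e ⟨n-1-r.1, by omega⟩ : ℕ) + r.1, by
    have h3 := (e ⟨n-1-r.1, by omega⟩).isLt
    simp only [Fin.val_mk] at h3
    have h4 := r.isLt
    omega⟩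

lemma tail_e (e : InvSeq n) (i0 : ℕ) (h2 : i0 < n) (hne : (e ⟨i0, h2⟩ : ℕ) ≠ 0)
    (hmin : ∀ k : Fin n, k.1 < i0 → (e k : ℕ) = 0) :
    tailSet e = Finset.univ.filter (fun j : Fin n => i0 ≤ j.1) := by
  ext j
  simp only [tailSet, Finset.mem_filter, Finset.mem_univ, true_and]
  constructor
  · rintro ⟨k, hkj, hk⟩
    have hk2 : ¬ k.1 < i0 := fun hc => by rw [hmin k hc] at hk; exact absurd hk (lt_irrefl 0)
    have := Fin.le_def.mp hkj
    omega
  · intro hj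
    exact ⟨⟨i0, h2⟩, Fin.le_def.mpr (by simpa using hj), by omega⟩

set_option maxHeartbeats 2000000 in
lemma main_struct (e : InvSeq n) (he : NoTwo e) (hnz : ∃ j : Fin n, (e j : ℕ) ≠ 0) :
    ∃ (i0 : ℕ) (h1 : 1 ≤ i0) (h2 : i0 < n),
      (e ⟨i0, h2⟩ : ℕ) ≠ 0 ∧ (∀ k : Fin n, k.1 < i0 → (e k : ℕ) = 0) ∧
      (phi e).card = n - i0 ∧
      ∀ x : Fin (phi e).card,
        (((phi e).orderEmbOfFin rfl) x : Fin n).1 = (e ⟨n - 1 - x.1, by omega⟩ : ℕ) + x.1 := by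
  classical
  have hq : ∃ k : ℕ, ∃ hk : k < n, (e ⟨k, hk⟩ : ℕ) ≠ 0 := by
    obtain ⟨j, hj⟩ := hnz
    exact ⟨j.1, j.isLt, by simpa using hj⟩
  obtain ⟨i0, ⟨h2, hne⟩, hmin'⟩ :
      ∃ i0 : ℕ, (∃ h2 : i0 < n, (e ⟨i0, h2⟩ : ℕ) ≠ 0) ∧
        ∀ k, k < i0 → ¬ ∃ hk : k < n, (e ⟨k, hk⟩ : ℕ) ≠ 0 :=
    ⟨Nat.find hq, Nat.find_spec hq, fun k hk => Nat.find_min hq hk⟩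
  have hmin : ∀ k : Fin n, k.1 < i0 → (e k : ℕ) = 0 := by
    intro k hk
    have h3 := hmin' k.1 hk
    push_neg at h3
    have := h3 k.isLt
    simpa using this
  have h1 : 1 ≤ i0 := by
    have h3 := (e ⟨i0, h2⟩).isLt
    simp only [Fin.val_mk] at h3
    omega
  have F3 : ∀ j : ℕ, i0 ≤ j → ∀ hj1 : j + 1 < n,
      (e ⟨j+1, hj1⟩ : ℕ) ≤ (e ⟨j, by omega⟩ : ℕ) := by
    intro j hij hj1
    by_contra hasc
    push_neg at hasc
    have hlt : (⟨i0 - 1, by omega⟩ : Fin n) < ⟨j, by omega⟩ := by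
      rw [Fin.lt_def]; simp only [Fin.val_mk]; omega
    refine he ⟨i0-1, by omega⟩ ⟨j, by omega⟩ hlt (by simp only [Fin.val_mk]; omega) hj1 ?_ hasc
    have hz : (e ⟨i0-1, by omega⟩ : ℕ) = 0 := hmin _ (by simp only [Fin.val_mk]; omega)
    have hidx : (⟨((⟨i0-1, by omega⟩ : Fin n)).1 + 1, by simp only [Fin.val_mk]; omega⟩ : Fin n)
        = ⟨i0, h2⟩ := Fin.ext (by simp only [Fin.val_mk]; omega)
    rw [e_congr e hidx]
    omega
  have htail := tail_e e i0 h2 hne hmin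
  set g : Fin (n - i0) → Fin n := gmap e i0 h2 with hgdef
  have hgval : ∀ r : Fin (n - i0), (g r).1 = (e ⟨n-1-r.1, by omega⟩ : ℕ) + r.1 :=
    fun r => rfl
  have hgvalN : ∀ (rv : ℕ) (hrv : rv < n - i0),
      (g ⟨rv, hrv⟩).1 = (e ⟨n-1-rv, by omega⟩ : ℕ) + rv := fun rv hrv => rfl
  have hg : StrictMono g := by
    apply sm_of_succ
    intro r hr
    rw [Fin.lt_def]
    rw [hgvalN r (by omega), hgvalN (r+1) hr]
    have hd := F3 (n-2-r) (by omega) (by omega)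
    have hidx1 : (⟨n-2-r+1, by omega⟩ : Fin n) = ⟨n-1-r, by omega⟩ :=
      Fin.ext (by simp only [Fin.val_mk]; omega)
    have hidx2 : (⟨n-2-r, by omega⟩ : Fin n) = ⟨n-1-(r+1), by omega⟩ :=
      Fin.ext (by simp only [Fin.val_mk]; omega)
    rw [e_congr e hidx1, e_congr e hidx2] at hd
    omega
  have himg : phi e = Finset.image g Finset.univ := by
    ext a
    unfold phi
    rw [Finset.mem_image, Finset.mem_image]
    constructor
    · rintro ⟨j, hj, rfl⟩
      rw [htail, Finset.mem_filter] at hj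
      have hjlt := j.isLt
      refine ⟨⟨n-1-j.1, by omega⟩, Finset.mem_univ _, ?_⟩
      apply Fin.ext
      rw [hgvalN (n-1-j.1) (by omega)]
      simp only [Fin.val_mk]
      have hidx : (⟨n-1-(n-1-j.1), by omega⟩ : Fin n) = j := Fin.ext (by simp only [Fin.val_mk]; omega)
      rw [e_congr e hidx]
    · rintro ⟨r, -, rfl⟩
      have hrlt := r.isLt
      refine ⟨⟨n-1-r.1, by omega⟩, ?_, ?_⟩
      · rw [htail, Finset.mem_filter]
        exact ⟨Finset.mem_univ _, by simp only [Fin.val_mk]; omega⟩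
      · apply Fin.ext
        rw [hgval r]
        simp only [Fin.val_mk]
        omega
  have hcard : (phi e).card = n - i0 := by
    rw [himg, Finset.card_image_of_injective _ hg.injective, Finset.card_univ, Fintype.card_fin]
  refine ⟨i0, h1, h2, hne, hmin, hcard, ?_⟩
  have hmemg : ∀ r : Fin (n - i0), g r ∈ phi e := by
    intro r
    rw [himg]
    exact Finset.mem_image.mpr ⟨r, Finset.mem_univ _, rfl⟩
  have hf : ∀ x : Fin (phi e).card, (phi e).orderEmbOfFin rfl x = g ⟨x.1, by omega⟩ := by
    have := Finset.orderEmbOfFin_unique (s := phi e) rfl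
      (f := fun x : Fin (phi e).card => g ⟨x.1, by omega⟩)
      (fun x => hmemg _)
      (fun a b hab => hg (by rw [Fin.lt_def]; simpa using Fin.lt_def.mp hab))
    intro x
    exact (congrFun this x).symm
  intro x
  rw [hf x]
  rfl

lemma psi_phi (e : InvSeq n) (he : NoTwo e) : psi (phi e) = e := by
  by_cases hz : ∀ j : Fin n, (e j : ℕ) = 0
  · have htail : tailSet e = ∅ := by
      ext k
      simp only [tailSet, Finset.mem_filter, Finset.mem_univ, true_and,
        Finset.notMem_empty, iff_false]
      rintro ⟨k', -, hk'⟩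
      rw [hz k'] at hk'
      exact absurd hk' (lt_irrefl 0)
    have hphi : phi e = ∅ := by unfold phi; rw [htail, Finset.image_empty]
    funext j
    apply Fin.ext
    rw [psi_val0 _ _ (by rw [hphi]; simp), hz j]
  · push_neg at hz
    obtain ⟨i0, h1, h2, hne, hmin, hcard, hemb⟩ := main_struct e he hz
    funext j
    apply Fin.ext
    have hjlt := j.isLt
    by_cases h : n - 1 - j.1 < (phi e).card
    · rw [psi_val _ _ h]
      have hv := hemb ⟨n-1-j.1, h⟩
      simp only [Fin.val_mk] at hv
      rw [hv]
      have hh := h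
      rw [hcard] at hh
      have hidx : (⟨n-1-(n-1-j.1), by omega⟩ : Fin n) = j :=
        Fin.ext (by simp only [Fin.val_mk]; omega)
      rw [e_congr e hidx]
      omega
    · rw [psi_val0 _ _ h]
      rw [hcard] at h
      exact (hmin j (by omega)).symm

lemma phi_good (e : InvSeq n) (he : NoTwo e) : ¬ ∃ k : Fin n, phi e = Finset.Iic k := by
  rintro ⟨k, hk⟩
  by_cases hz : ∀ j : Fin n, (e j : ℕ) = 0
  · have htail : tailSet e = ∅ := by
      ext k'
      simp only [tailSet, Finset.mem_filter, Finset.mem_univ, true_and,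
        Finset.notMem_empty, iff_false]
      rintro ⟨k'', -, hk''⟩
      rw [hz k''] at hk''
      exact absurd hk'' (lt_irrefl 0)
    have hphi : phi e = ∅ := by unfold phi; rw [htail, Finset.image_empty]
    rw [hphi] at hk
    have : k ∈ (∅ : Finset (Fin n)) := hk ▸ Finset.mem_Iic.mpr le_rfl
    simp at this
  · push_neg at hz
    obtain ⟨i0, h1, h2, hne, hmin, hcard, hemb⟩ := main_struct e he hz
    have hm1 : 1 ≤ (phi e).card := by omega
    have hv := hemb ⟨(phi e).card - 1, by omega⟩
    simp only [Fin.val_mk] at hv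
    have hidx : (⟨n - 1 - ((phi e).card - 1), by omega⟩ : Fin n) = ⟨i0, h2⟩ :=
      Fin.ext (by simp only [Fin.val_mk]; omega)
    rw [e_congr e hidx] at hv
    have hmem : ((phi e).orderEmbOfFin rfl) ⟨(phi e).card - 1, by omega⟩ ∈ phi e :=
      Finset.orderEmbOfFin_mem _ _ _
    obtain ⟨a, hamem, hav⟩ : ∃ a : Fin n, a ∈ phi e
        ∧ a.1 = (e ⟨i0, h2⟩ : ℕ) + ((phi e).card - 1) := ⟨_, hmem, hv⟩
    rw [hk, Finset.mem_Iic] at hamem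
    have hle := Fin.le_def.mp hamem
    have hcIic : (Finset.Iic k).card = k.1 + 1 := Fin.card_Iic k
    rw [← hk] at hcIic
    omega

end InvSeqAux

/-- The number of inversion sequences of length `n` with at most one ascent
(no two distinct positions `i < j` that are both ascents) is `2^n - n`. -/
theorem stmt12 (n : ℕ) (hn : 1 ≤ n) :
    Nat.card {e : InvSeq n // ∀ i j : Fin n, i < j →
      ∀ hi : i.1 + 1 < n, ∀ hj : j.1 + 1 < n,
        (e i : ℕ) < (e ⟨i.1 + 1, hi⟩ : ℕ) → (e j : ℕ) < (e ⟨j.1 + 1, hj⟩ : ℕ) → False} =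
    2 ^ n - n := by
  classical
  have hequiv : {e : InvSeq n // InvSeqAux.NoTwo e}
      ≃ {A : Finset (Fin n) // ¬ ∃ k : Fin n, A = Finset.Iic k} :=
    { toFun := fun e => ⟨InvSeqAux.phi e.1, InvSeqAux.phi_good e.1 e.2⟩
      invFun := fun A => ⟨InvSeqAux.psi A.1, InvSeqAux.psi_noTwo A.1⟩
      left_inv := fun e => Subtype.ext (InvSeqAux.psi_phi e.1 e.2)
      right_inv := fun A => Subtype.ext (InvSeqAux.phi_psi A.1 A.2) }
  have h1 : Nat.card {e : InvSeq n // InvSeqAux.NoTwo e}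
      = Nat.card {A : Finset (Fin n) // ¬ ∃ k : Fin n, A = Finset.Iic k} :=
    Nat.card_congr hequiv
  have h2 : Nat.card {A : Finset (Fin n) // ¬ ∃ k : Fin n, A = Finset.Iic k} = 2 ^ n - n := by
    rw [Nat.card_eq_fintype_card, Fintype.card_subtype]
    have : (Finset.univ.filter (fun A : Finset (Fin n) => ¬ ∃ k : Fin n, A = Finset.Iic k))
        = Finset.univ \ (Finset.univ.image (fun k : Fin n => Finset.Iic k)) := by
      ext A
      constructor
      · intro hA
        rw [Finset.mem_sdiff]
        refine ⟨Finset.mem_univ _, fun hc => ?_⟩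
        obtain ⟨k, -, hk⟩ := Finset.mem_image.mp hc
        exact (Finset.mem_filter.mp hA).2 ⟨k, hk.symm⟩
      · intro hA
        rw [Finset.mem_sdiff] at hA
        refine Finset.mem_filter.mpr ⟨Finset.mem_univ _, fun hc => ?_⟩
        obtain ⟨k, hk⟩ := hc
        exact hA.2 (Finset.mem_image.mpr ⟨k, Finset.mem_univ _, hk.symm⟩)
    rw [this, Finset.card_sdiff_of_subset (Finset.subset_univ _), Finset.card_univ,
      Fintype.card_finset, Finset.card_image_of_injective, Finset.card_univ, Fintype.card_fin]
    intro a b hab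
    have hab' : Finset.Iic a = Finset.Iic b := hab
    have ha : a ∈ Finset.Iic b := hab' ▸ Finset.mem_Iic.mpr le_rfl
    have hb : b ∈ Finset.Iic a := hab'.symm ▸ Finset.mem_Iic.mpr le_rfl
    exact le_antisymm (Finset.mem_Iic.mp ha) (Finset.mem_Iic.mp hb)
  exact h1.trans h2
end

section
/- The number of inversion sequences of length n with at most two distinct values among their entries equals 2^n - n. -/
/-- The predicate describing valid encodings `(b, S)`. -/
def myP (n : ℕ) (b : Fin n) (S : Finset (Fin n)) : Prop :=
  (b.1 = 0 ∧ S = ∅) ∨ (1 ≤ b.1 ∧ S.Nonempty ∧ ∀ i ∈ S, b.1 ≤ i.1)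

instance (n : ℕ) (b : Fin n) : DecidablePred (myP n b) := by
  intro S; unfold myP; infer_instance

lemma sumAux (m : ℕ) :
    ∑ j ∈ Finset.range m, (2 ^ (j + 1) - 1) = 2 ^ (m + 1) - 2 - m := by
  induction m with
  | zero => simp
  | succ m ih =>
    rw [Finset.sum_range_succ, ih]
    have h1 : m + 1 < 2 ^ (m + 1) := Nat.lt_two_pow_self
    have h2 : (2 : ℕ) ^ (m + 2) = 2 * 2 ^ (m + 1) := by ring
    omega

lemma sumMain (n : ℕ) (hn : 1 ≤ n) :
    (∑ b ∈ Finset.range n, if b = 0 then 1 else 2 ^ (n - b) - 1) = 2 ^ n - n := by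
  obtain ⟨m, rfl⟩ : ∃ m, n = m + 1 := ⟨n - 1, by omega⟩
  rw [← Finset.sum_range_reflect]
  have hcong : ∀ j ∈ Finset.range m,
      (if m + 1 - 1 - j = 0 then 1 else 2 ^ (m + 1 - (m + 1 - 1 - j)) - 1)
      = 2 ^ (j + 1) - 1 := by
    intro j hj
    rw [Finset.mem_range] at hj
    have h1 : m + 1 - 1 - j = m - j := by omega
    have h2 : m - j ≠ 0 := by omega
    have h3 : m + 1 - (m - j) = j + 1 := by omega
    simp [h1, h2, h3]
  rw [Finset.sum_range_succ, Finset.sum_congr rfl hcong, sumAux]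
  have h1 : m + 1 < 2 ^ (m + 1) := Nat.lt_two_pow_self
  have h0 : m + 1 - 1 - m = 0 := by omega
  rw [h0, if_pos rfl]
  omega

lemma fiberCard (n : ℕ) (b : Fin n) :
    Fintype.card {S : Finset (Fin n) // myP n b S} =
      if b.1 = 0 then 1 else 2 ^ (n - b.1) - 1 := by
  by_cases hb : b.1 = 0
  · rw [if_pos hb]
    have : ∀ S : Finset (Fin n), myP n b S ↔ S = ∅ := by
      intro S
      constructor
      · rintro (⟨-, h⟩ | ⟨h1, -, -⟩)
        · exact h
        · omega
      · intro h; exact Or.inl ⟨hb, h⟩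
    rw [Fintype.card_congr (Equiv.subtypeEquivRight this)]
    exact Fintype.card_subtype_eq ∅
  · rw [if_neg hb]
    rw [Fintype.card_subtype]
    have hfilter : Finset.filter (fun S => myP n b S) Finset.univ =
        (Finset.Ici b).powerset.erase ∅ := by
      ext S
      rw [Finset.mem_filter]
      simp only [Finset.mem_filter, Finset.mem_univ, true_and, Finset.mem_erase,
        Finset.mem_powerset, myP]
      constructor
      · rintro (⟨h, -⟩ | ⟨-, hne, hall⟩)
        · exact absurd h hb
        · refine ⟨hne.ne_empty, fun i hi => ?_⟩
          rw [Finset.mem_Ici, Fin.le_def]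
          exact hall i hi
      · rintro ⟨hne, hsub⟩
        refine Or.inr ⟨by omega, Finset.nonempty_of_ne_empty hne, fun i hi => ?_⟩
        have := hsub hi
        rw [Finset.mem_Ici, Fin.le_def] at this
        exact this
    rw [hfilter, Finset.card_erase_of_mem (Finset.empty_mem_powerset _),
      Finset.card_powerset, Fin.card_Ici]

/-- The set of positions where an inversion sequence is nonzero. -/
def tS {n : ℕ} (e : InvSeq n) : Finset (Fin n) :=
  Finset.filter (fun i => (e i : ℕ) ≠ 0) Finset.univ

lemma mem_tS {n : ℕ} (e : InvSeq n) (i : Fin n) : i ∈ tS e ↔ (e i : ℕ) ≠ 0 := by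
  simp [tS]

/-- The common nonzero value (0 if none). -/
def bv {n : ℕ} (e : InvSeq n) : ℕ := (tS e).sup (fun i => (e i : ℕ))

lemma bv_lt {n : ℕ} (hn : 1 ≤ n) (e : InvSeq n) : bv e < n := by
  refine (Finset.sup_lt_iff (show (⊥ : ℕ) < n from hn)).mpr ?_
  intro i _
  have h1 := (e i).2
  have h2 := i.2
  omega

lemma bv_eq {n : ℕ} (e : InvSeq n)
    (hkey : ∀ i j, (e i : ℕ) ≠ 0 → (e j : ℕ) ≠ 0 → (e i : ℕ) = (e j : ℕ))
    {i : Fin n} (hi : i ∈ tS e) : bv e = (e i : ℕ) := by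
  have hi' := (mem_tS e i).mp hi
  refine le_antisymm (Finset.sup_le fun j hj => ?_) (Finset.le_sup (f := fun i => (e i : ℕ)) hi)
  have hj' := (mem_tS e j).mp hj
  exact le_of_eq (hkey j i hj' hi')

lemma myP_forward {n : ℕ} (hn : 1 ≤ n) (e : InvSeq n)
    (hkey : ∀ i j, (e i : ℕ) ≠ 0 → (e j : ℕ) ≠ 0 → (e i : ℕ) = (e j : ℕ)) :
    myP n ⟨bv e, bv_lt hn e⟩ (tS e) := by
  rcases (tS e).eq_empty_or_nonempty with h | h
  · left
    exact ⟨by simp [bv, h], h⟩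
  · right
    obtain ⟨i, hi⟩ := h
    have hi' := (mem_tS e i).mp hi
    refine ⟨?_, ⟨i, hi⟩, ?_⟩
    · have := bv_eq e hkey hi
      simp only []
      omega
    · intro j hj
      have h1 := bv_eq e hkey hj
      have h2 := (e j).2
      simp only []
      omega

lemma myP_bound {n : ℕ} {b : Fin n} {S : Finset (Fin n)} (hp : myP n b S)
    {i : Fin n} (hi : i ∈ S) : b.1 < i.1 + 1 := by
  rcases hp with ⟨-, rfl⟩ | ⟨-, -, hall⟩
  · exact absurd hi (Finset.notMem_empty i)
  · have := hall i hi; omega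

/-- The sequence reconstructed from an encoding. -/
def gFun {n : ℕ} (p : {p : Fin n × Finset (Fin n) // myP n p.1 p.2}) : InvSeq n :=
  fun i => if h : i ∈ p.1.2 then ⟨p.1.1.1, myP_bound p.2 h⟩ else ⟨0, Nat.succ_pos _⟩

lemma gFun_val {n : ℕ} (p : {p : Fin n × Finset (Fin n) // myP n p.1 p.2}) (i : Fin n) :
    (gFun p i : ℕ) = if i ∈ p.1.2 then p.1.1.1 else 0 := by
  by_cases h : i ∈ p.1.2 <;> simp [gFun, h]

lemma tS_gFun {n : ℕ} (p : {p : Fin n × Finset (Fin n) // myP n p.1 p.2}) :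
    tS (gFun p) = p.1.2 := by
  ext i
  rw [mem_tS, gFun_val]
  by_cases h : i ∈ p.1.2
  · simp only [h, if_true, iff_true]
    rcases p.2 with ⟨-, he⟩ | ⟨hb, -, -⟩
    · rw [he] at h; exact absurd h (Finset.notMem_empty i)
    · omega
  · simp [h]

lemma bv_gFun {n : ℕ} (p : {p : Fin n × Finset (Fin n) // myP n p.1 p.2}) :
    bv (gFun p) = p.1.1.1 := by
  rcases hp : p.2 with ⟨hb, he⟩ | ⟨hb, hne, hall⟩
  · rw [bv, tS_gFun, he]
    simp [hb.symm]
  · obtain ⟨i, hi⟩ := hne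
    refine le_antisymm (Finset.sup_le fun j hj => ?_) ?_
    · rw [tS_gFun] at hj
      rw [gFun_val, if_pos hj]
    · have : (gFun p i : ℕ) ≤ bv (gFun p) :=
        Finset.le_sup (f := fun i => (gFun p i : ℕ)) (by rw [tS_gFun]; exact hi)
      rwa [gFun_val, if_pos hi] at this

lemma gFun_mem {n : ℕ} (p : {p : Fin n × Finset (Fin n) // myP n p.1 p.2}) :
    (Set.range fun i => ((gFun p) i : ℕ)).ncard ≤ 2 := by
  have hsub : (Set.range fun i => ((gFun p) i : ℕ)) ⊆ ({0, p.1.1.1} : Set ℕ) := by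
    rintro x ⟨i, rfl⟩
    simp only [gFun_val]
    split <;> simp
  refine le_trans (Set.ncard_le_ncard hsub (Set.toFinite _)) ?_
  refine le_trans (Set.ncard_insert_le _ _) ?_
  simp

theorem stmt13 (n : ℕ) (hn : 1 ≤ n) :
    Nat.card {e : InvSeq n // (Set.range fun i => (e i : ℕ)).ncard ≤ 2} =
    2 ^ n - n := by
  classical
  -- Key: the nonzero values of such a sequence are all equal.
  have key : ∀ e : {e : InvSeq n // (Set.range fun i => (e i : ℕ)).ncard ≤ 2},
      ∀ i j, (e.1 i : ℕ) ≠ 0 → (e.1 j : ℕ) ≠ 0 → (e.1 i : ℕ) = (e.1 j : ℕ) := by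
    rintro ⟨e, he⟩ i j hi hj
    simp only at hi hj ⊢
    by_contra hne
    have h0 : (0 : ℕ) ∈ Set.range fun i => (e i : ℕ) := by
      refine ⟨⟨0, hn⟩, ?_⟩
      show (e ⟨0, hn⟩ : ℕ) = 0
      have h1 := (e ⟨0, hn⟩).2
      have h2 : ((⟨0, hn⟩ : Fin n) : ℕ) = 0 := rfl
      omega
    have hsub : ({0, (e i : ℕ), (e j : ℕ)} : Set ℕ) ⊆ Set.range fun i => (e i : ℕ) := by
      rintro x hx
      rcases hx with rfl | rfl | rfl
      · exact h0
      · exact ⟨i, rfl⟩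
      · exact ⟨j, rfl⟩
    have hfin : (Set.range fun i => (e i : ℕ)).Finite := Set.finite_range _
    have h3 : ({0, (e i : ℕ), (e j : ℕ)} : Set ℕ).ncard = 3 := by
      rw [Set.ncard_insert_of_notMem (by simp [Ne.symm hi, Ne.symm hj]),
        Set.ncard_insert_of_notMem (by simp [hne]), Set.ncard_singleton]
    have := Set.ncard_le_ncard hsub hfin
    rw [h3] at this
    omega
  let E : {e : InvSeq n // (Set.range fun i => (e i : ℕ)).ncard ≤ 2} ≃
      {p : Fin n × Finset (Fin n) // myP n p.1 p.2} :=
    { toFun := fun e => ⟨(⟨bv e.1, bv_lt hn e.1⟩, tS e.1), myP_forward hn e.1 (key e)⟩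
      invFun := fun p => ⟨gFun p, gFun_mem p⟩
      left_inv := by
        rintro ⟨e, he⟩
        apply Subtype.ext
        funext i
        apply Fin.ext
        show (gFun _ i : ℕ) = (e i : ℕ)
        rw [gFun_val]
        by_cases h : i ∈ tS e
        · rw [if_pos h]
          show bv e = (e i : ℕ)
          exact bv_eq e (key ⟨e, he⟩) h
        · rw [if_neg h]
          have := (mem_tS e i).not.mp h
          simp only [ne_eq, not_not] at this
          exact this.symm
      right_inv := by
        rintro ⟨⟨b, S⟩, hp⟩
        apply Subtype.ext
        refine Prod.ext (Fin.ext ?_) ?_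
        · exact bv_gFun ⟨(b, S), hp⟩
        · exact tS_gFun ⟨(b, S), hp⟩ }
  rw [Nat.card_congr E, Nat.card_congr (Equiv.subtypeProdEquivSigmaSubtype (myP n)),
    Nat.card_eq_fintype_card, Fintype.card_sigma]
  rw [Finset.sum_congr rfl fun b _ => fiberCard n b]
  rw [Fin.sum_univ_eq_sum_range (fun b => if b = 0 then 1 else 2 ^ (n - b) - 1)]
  exact sumMain n hn
end

section
/- Let a_n be the number of inversion sequences of length n with no indices i < j < k satisfying e_i ≠ e_j, e_j < e_k, and e_i ≤ e_k. Then a_1 = 1, a_2 = 2, a_3 = 5, and for n ≥ 4, a_n = 3·a_{n-1} - 2·a_{n-2} + a_{n-3}. -/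
/-- The number of inversion sequences of length `n` with no `i < j < k` such that
`e_i ≠ e_j`, `e_j < e_k` and `e_i ≤ e_k`. -/
noncomputable def A (n : ℕ) : ℕ :=
  Nat.card {e : InvSeq n // ¬ ∃ i j k : Fin n, i < j ∧ j < k ∧
    (e i : ℕ) ≠ (e j : ℕ) ∧ (e j : ℕ) < (e k : ℕ) ∧ (e i : ℕ) ≤ (e k : ℕ)}

instance instFinInv (n : ℕ) : Fintype (InvSeq n) := by unfold InvSeq; infer_instance
instance instDEqInv (n : ℕ) : DecidableEq (InvSeq n) := by unfold InvSeq; infer_instance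

/-- The "block" condition: nonzero values are weakly decreasing, and equal nonzero
values must be consecutive. -/
def Blk (s : ℕ → ℕ) : Prop := ∀ j k, j < k → s j ≠ 0 → s k ≠ 0 →
  s k < s j ∨ (s k = s j ∧ ∀ m, j < m → m < k → s m = s j)

def Gd (n : ℕ) (s : ℕ → ℕ) : Prop :=
  (∀ i, s i ≤ i) ∧ (∀ i, n ≤ i → s i = 0) ∧ Blk s

def G (n : ℕ) : Type := {s : ℕ → ℕ // Gd n s}
def St (n : ℕ) : Type := {s : ℕ → ℕ // Gd n s ∧ s (n-1) ≠ 0}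
def Pr (n : ℕ) : Type :=
  {p : (ℕ → ℕ) × ℕ // Gd n p.1 ∧ 1 ≤ p.2 ∧ p.2 ≤ n ∧ ∀ i, p.1 i ≠ 0 → p.2 < p.1 i}

/-! ### The equivalence with the pattern-avoidance condition -/

def exts {n : ℕ} (e : InvSeq n) : ℕ → ℕ := fun i => if h : i < n then (e ⟨i, h⟩ : ℕ) else 0

def Pat {n : ℕ} (e : InvSeq n) : Prop := ∃ i j k : Fin n, i < j ∧ j < k ∧
    (e i : ℕ) ≠ (e j : ℕ) ∧ (e j : ℕ) < (e k : ℕ) ∧ (e i : ℕ) ≤ (e k : ℕ)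

lemma exts_lt {n : ℕ} (e : InvSeq n) (i : ℕ) (h : i < n) : exts e i = (e ⟨i, h⟩ : ℕ) :=
  dif_pos h

lemma exts_fin {n : ℕ} (e : InvSeq n) (i : Fin n) : exts e i.1 = (e i : ℕ) := by
  rw [exts_lt e i.1 i.2]

lemma exts_cap {n : ℕ} (e : InvSeq n) (i : ℕ) : exts e i ≤ i := by
  unfold exts
  split
  · exact Nat.lt_succ_iff.mp (e ⟨i, by assumption⟩).2
  · exact Nat.zero_le _

lemma exts_zero {n : ℕ} (e : InvSeq n) (i : ℕ) (h : n ≤ i) : exts e i = 0 :=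
  dif_neg (by omega)

lemma pat_iff_not_blk {n : ℕ} (e : InvSeq n) : ¬ Pat e ↔ Blk (exts e) := by
  constructor
  · intro hp j k hjk hj hk
    have hjn : j < n := by by_contra h; exact hj (exts_zero e j (by omega))
    have hkn : k < n := by by_contra h; exact hk (exts_zero e k (by omega))
    have hj0 : 0 < j := by
      rcases Nat.eq_zero_or_pos j with h | h
      · exfalso; apply hj; subst h; have := exts_cap e 0; omega
      · exact h
    rcases lt_trichotomy (exts e k) (exts e j) with h | h | h
    · exact Or.inl h
    · by_cases hb : ∀ m, j < m → m < k → exts e m = exts e j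
      · exact Or.inr ⟨h, hb⟩
      · exfalso
        push_neg at hb
        obtain ⟨m, hjm, hmk, hm⟩ := hb
        have hmn : m < n := by omega
        rcases lt_trichotomy (exts e m) (exts e j) with h2 | h2 | h2
        · -- pattern (j, m, k)
          apply hp
          refine ⟨⟨j, hjn⟩, ⟨m, hmn⟩, ⟨k, hkn⟩, hjm, hmk, ?_, ?_, ?_⟩ <;>
            rw [← exts_fin, ← exts_fin] <;> simp only [] <;> omega
        · exact hm h2
        · -- pattern (0, j, m)
          apply hp
          have h0 : (0:ℕ) < n := by omega
          refine ⟨⟨0, h0⟩, ⟨j, hjn⟩, ⟨m, hmn⟩, hj0, hjm, ?_, ?_, ?_⟩ <;>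
            rw [← exts_fin, ← exts_fin] <;> simp only [] <;>
            (try have := exts_cap e 0) <;> omega
    · -- pattern (0, j, k)
      exfalso; apply hp
      have h0 : (0:ℕ) < n := by omega
      refine ⟨⟨0, h0⟩, ⟨j, hjn⟩, ⟨k, hkn⟩, hj0, hjk, ?_, ?_, ?_⟩ <;>
        rw [← exts_fin, ← exts_fin] <;> simp only [] <;>
        (try have := exts_cap e 0) <;> omega
  · rintro hb ⟨i, j, k, hij, hjk, h1, h2, h3⟩
    have hik : (i:ℕ) < (k:ℕ) := lt_trans hij hjk
    have hek : exts e k.1 ≠ 0 := by rw [exts_fin]; omega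
    by_cases hj : (e j : ℕ) = 0
    · have hei : exts e i.1 ≠ 0 := by rw [exts_fin]; omega
      rcases hb i.1 k.1 hik hei hek with h | ⟨h, hbt⟩
      · rw [exts_fin, exts_fin] at h; omega
      · have := hbt j.1 hij hjk
        rw [exts_fin, exts_fin] at this; omega
    · have hej : exts e j.1 ≠ 0 := by rw [exts_fin]; omega
      rcases hb j.1 k.1 hjk hej hek with h | ⟨h, hbt⟩ <;>
        rw [exts_fin, exts_fin] at h <;> omega


lemma exts_mk (n : ℕ) (s : ℕ → ℕ) (hcap : ∀ i, s i ≤ i) (hz : ∀ i, n ≤ i → s i = 0) :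
    exts (fun i : Fin n => (⟨s i.1, Nat.lt_succ_of_le (hcap i.1)⟩ : Fin (i.1+1))) = s := by
  funext i
  unfold exts
  split
  · rfl
  · exact (hz i (by omega)).symm

def E0 (n : ℕ) : {e : InvSeq n // ¬ Pat e} ≃ G n where
  toFun e := ⟨exts e.1, exts_cap e.1, exts_zero e.1, (pat_iff_not_blk e.1).mp e.2⟩
  invFun s := ⟨fun i => ⟨s.1 i.1, Nat.lt_succ_of_le (s.2.1 i.1)⟩, by
    have h := s.2.2.2
    rw [← exts_mk n s.1 s.2.1 s.2.2.1] at h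
    exact (pat_iff_not_blk _).mpr h⟩
  left_inv e := by
    apply Subtype.ext
    funext i
    apply Fin.ext
    simp only [exts_lt e.1 i.1 i.2]
  right_inv s := Subtype.ext (exts_mk n s.1 s.2.1 s.2.2.1)

lemma cardA (n : ℕ) : A n = Nat.card (G n) := Nat.card_congr (E0 n)

instance instFinInvSeq (n : ℕ) : Finite (InvSeq n) := Finite.of_fintype _

instance instFinG (n : ℕ) : Finite (G n) := Finite.of_equiv _ (E0 n)

instance instFinG' (n : ℕ) : Finite {s : ℕ → ℕ // Gd n s} := instFinG n

instance instFinSt (n : ℕ) : Finite (St n) := by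
  apply Finite.of_injective (fun x : St n => (⟨x.1, x.2.1⟩ : G n))
  intro x y h
  apply Subtype.ext
  exact congrArg (fun z : G _ => z.val) h

instance instFinPr (n : ℕ) : Finite (Pr n) := by
  apply Finite.of_injective
    (fun x : Pr n => ((⟨x.1.1, x.2.1⟩ : G n), (⟨x.1.2, Nat.lt_succ_of_le x.2.2.2.1⟩ : Fin (n+1))))
  intro x y h
  simp only [Prod.mk.injEq, Subtype.mk.injEq, Fin.mk.injEq] at h
  apply Subtype.ext
  exact Prod.ext h.1 h.2

lemma card_split {α : Type*} [Finite α] (p : α → Prop) :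
    Nat.card α = Nat.card {x // p x} + Nat.card {x // ¬ p x} := by
  classical
  rw [← Nat.card_sum]
  exact (Nat.card_congr (Equiv.sumCompl p)).symm

/-! ### Operations -/

def trunc (n : ℕ) (s : ℕ → ℕ) : ℕ → ℕ := fun i => if i < n then s i else 0
def app (n : ℕ) (s : ℕ → ℕ) (v : ℕ) : ℕ → ℕ := fun i => if i = n then v else s i

lemma blk_trunc {s : ℕ → ℕ} (n : ℕ) (hb : Blk s) : Blk (trunc n s) := by
  intro j k hjk hj hk
  unfold trunc at *
  by_cases hkn : k < n
  · have hjn : j < n := by omega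
    rw [if_pos hjn] at *
    rw [if_pos hkn] at *
    rcases hb j k hjk hj hk with h | ⟨h, hbt⟩
    · exact Or.inl h
    · refine Or.inr ⟨h, fun m hm1 hm2 => ?_⟩
      rw [if_pos (by omega)]
      exact hbt m hm1 hm2
  · rw [if_neg hkn] at hk; omega

lemma gd_trunc {s : ℕ → ℕ} {m : ℕ} (n : ℕ) (h : Gd m s) : Gd n (trunc n s) := by
  refine ⟨fun i => ?_, fun i hi => ?_, blk_trunc n h.2.2⟩
  · unfold trunc; split
    · exact h.1 i
    · omega
  · unfold trunc; rw [if_neg (by omega)]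

lemma gd_app {s : ℕ → ℕ} {n v : ℕ} (h : Gd n s) (hvn : v ≤ n)
    (hv : ∀ j, j < n → s j ≠ 0 → (v < s j ∨ (v = s j ∧ ∀ m, j < m → m < n → s m = s j))) :
    Gd (n+1) (app n s v) := by
  obtain ⟨hcap, hz, hb⟩ := h
  refine ⟨fun i => ?_, fun i hi => ?_, ?_⟩
  · unfold app; split
    · omega
    · exact hcap i
  · unfold app; rw [if_neg (by omega)]; exact hz i (by omega)
  · intro j k hjk hj hk
    simp only [app] at hj hk ⊢
    by_cases hkn : k = n
    · rw [if_neg (by omega : ¬ j = n)] at hj ⊢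
      rw [if_pos hkn] at hk ⊢
      have hjn : j < n := by by_contra hh; exact hj (hz j (by omega))
      rcases hv j hjn hj with h | ⟨h, hbt⟩
      · exact Or.inl h
      · refine Or.inr ⟨h, fun m hm1 hm2 => ?_⟩
        rw [if_neg (by omega)]
        exact hbt m hm1 (by omega)
    · rw [if_neg hkn] at hk ⊢
      have hkn' : k < n := by by_contra hh; exact hk (hz k (by omega))
      rw [if_neg (by omega : ¬ j = n)] at hj ⊢
      rcases hb j k hjk hj hk with h | ⟨h, hbt⟩
      · exact Or.inl h
      · refine Or.inr ⟨h, fun m hm1 hm2 => ?_⟩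
        rw [if_neg (by omega)]
        exact hbt m hm1 hm2

lemma trunc_app {n : ℕ} {s : ℕ → ℕ} (hz : ∀ i, n ≤ i → s i = 0) (v : ℕ) :
    trunc n (app n s v) = s := by
  funext i
  unfold trunc app
  by_cases h : i < n
  · rw [if_pos h, if_neg (by omega)]
  · rw [if_neg h, hz i (by omega)]

/-! ### Identity 1 : A (n+1) = A n + card (St (n+1)) -/

def E1a (n : ℕ) : {x : G (n+1) // x.1 n = 0} ≃ G n where
  toFun x := ⟨x.1.1, x.1.2.1, fun i hi => by
      rcases Nat.eq_or_lt_of_le hi with h | h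
      · rw [← h]; exact x.2
      · exact x.1.2.2.1 i h, x.1.2.2.2⟩
  invFun s := ⟨⟨s.1, s.2.1, fun i hi => s.2.2.1 i (by omega), s.2.2.2⟩,
    s.2.2.1 n (le_refl n)⟩
  left_inv x := by apply Subtype.ext; apply Subtype.ext; rfl
  right_inv s := by apply Subtype.ext; rfl

def E1b (n : ℕ) : {x : G (n+1) // ¬ x.1 n = 0} ≃ St (n+1) where
  toFun x := ⟨x.1.1, x.1.2, x.2⟩
  invFun x := ⟨⟨x.1, x.2.1⟩, x.2.2⟩
  left_inv x := by apply Subtype.ext; apply Subtype.ext; rfl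
  right_inv x := by apply Subtype.ext; rfl

lemma id1 (n : ℕ) : A (n+1) = A n + Nat.card (St (n+1)) := by
  rw [cardA, cardA, card_split (fun x : G (n+1) => x.1 n = 0),
    Nat.card_congr (E1a n), Nat.card_congr (E1b n)]

/-! ### Identity 2 : card (St (m+2)) = card (St (m+1)) + card (Pr (m+1)) -/

lemma app_trunc {n : ℕ} {s : ℕ → ℕ} {v : ℕ} (hz : ∀ i, n+1 ≤ i → s i = 0) (hv : v = s n) :
    app n (trunc n s) v = s := by
  funext i
  unfold app trunc
  by_cases h : i = n
  · rw [if_pos h, h, hv]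
  · rw [if_neg h]
    by_cases h2 : i < n
    · rw [if_pos h2]
    · rw [if_neg h2, hz i (by omega)]

def E2a (m : ℕ) : {x : St (m+2) // x.1 m = x.1 (m+1)} ≃ St (m+1) where
  toFun x := ⟨trunc (m+1) x.1.1, gd_trunc (m+1) x.1.2.1, by
    show trunc (m+1) x.1.1 m ≠ 0
    unfold trunc
    rw [if_pos (by omega), x.2]
    exact x.1.2.2⟩
  invFun t := ⟨⟨app (m+1) t.1 (t.1 m), by
      refine ⟨gd_app t.2.1 (le_trans (t.2.1.1 m) (by omega)) ?_, ?_⟩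
      · intro j hj hjne
        by_cases hjm : j = m
        · exact Or.inr ⟨by rw [hjm], fun m' h1 h2 => by omega⟩
        · have htm : t.1 m ≠ 0 := t.2.2
          rcases t.2.1.2.2 j m (by omega) hjne htm with h | ⟨h, hbt⟩
          · exact Or.inl h
          · refine Or.inr ⟨h, fun m' h1 h2 => ?_⟩
            by_cases hm' : m' = m
            · rw [hm']; exact h.symm ▸ rfl
            · exact hbt m' h1 (by omega)
      · show app (m+1) t.1 (t.1 m) (m+1) ≠ 0
        unfold app
        rw [if_pos rfl]
        exact t.2.2⟩, by
      show app (m+1) t.1 (t.1 m) m = app (m+1) t.1 (t.1 m) (m+1)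
      unfold app
      rw [if_pos rfl, if_neg (by omega)]⟩
  left_inv x := by
    apply Subtype.ext
    apply Subtype.ext
    show app (m+1) (trunc (m+1) x.1.1) (trunc (m+1) x.1.1 m) = x.1.1
    have h1 : trunc (m+1) x.1.1 m = x.1.1 (m+1) := by
      unfold trunc; rw [if_pos (by omega)]; exact x.2
    rw [h1]
    exact app_trunc (fun i hi => x.1.2.1.2.1 i hi) rfl
  right_inv t := by
    apply Subtype.ext
    show trunc (m+1) (app (m+1) t.1 (t.1 m)) = t.1
    exact trunc_app t.2.1.2.1 _

def E2b (m : ℕ) : {x : St (m+2) // ¬ x.1 m = x.1 (m+1)} ≃ Pr (m+1) where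
  toFun x := ⟨(trunc (m+1) x.1.1, x.1.1 (m+1)), gd_trunc (m+1) x.1.2.1, by
      have h : x.1.1 (m+1) ≠ 0 := x.1.2.2
      omega, x.1.2.1.1 (m+1), by
      intro i hi
      show x.1.1 (m+1) < trunc (m+1) x.1.1 i
      have hi : trunc (m+1) x.1.1 i ≠ 0 := hi
      have hilt : i < m+1 := by
        by_contra hh
        apply hi
        show trunc (m+1) x.1.1 i = 0
        unfold trunc; rw [if_neg (by omega)]
      have hieq : trunc (m+1) x.1.1 i = x.1.1 i := by unfold trunc; rw [if_pos hilt]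
      rw [hieq] at hi ⊢
      have hk : x.1.1 (m+1) ≠ 0 := x.1.2.2
      rcases x.1.2.1.2.2 i (m+1) (by omega) hi hk with h | ⟨h, hbt⟩
      · exact h
      · exfalso
        apply x.2
        by_cases him : i = m
        · subst him; exact h.symm
        · rw [hbt m (by omega) (by omega), h]⟩
  invFun p := ⟨⟨app (m+1) p.1.1 p.1.2, by
      refine ⟨gd_app p.2.1 p.2.2.2.1 ?_, ?_⟩
      · intro j hj hjne
        exact Or.inl (p.2.2.2.2 j hjne)
      · show app (m+1) p.1.1 p.1.2 (m+1) ≠ 0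
        unfold app
        rw [if_pos rfl]
        have hv1 : 1 ≤ p.1.2 := p.2.2.1
        omega⟩, by
      show ¬ app (m+1) p.1.1 p.1.2 m = app (m+1) p.1.1 p.1.2 (m+1)
      unfold app
      rw [if_pos rfl, if_neg (by omega)]
      have hv1 : 1 ≤ p.1.2 := p.2.2.1
      by_cases h : p.1.1 m = 0
      · omega
      · have := p.2.2.2.2 m h; omega⟩
  left_inv x := by
    apply Subtype.ext
    apply Subtype.ext
    show app (m+1) (trunc (m+1) x.1.1) (x.1.1 (m+1)) = x.1.1
    exact app_trunc (fun i hi => x.1.2.1.2.1 i hi) rfl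
  right_inv p := by
    apply Subtype.ext
    apply Prod.ext
    · show trunc (m+1) (app (m+1) p.1.1 p.1.2) = p.1.1
      exact trunc_app p.2.1.2.1 _
    · show app (m+1) p.1.1 p.1.2 (m+1) = p.1.2
      unfold app
      rw [if_pos rfl]

lemma id2 (m : ℕ) : Nat.card (St (m+2)) = Nat.card (St (m+1)) + Nat.card (Pr (m+1)) := by
  rw [card_split (fun x : St (m+2) => x.1 m = x.1 (m+1)),
    Nat.card_congr (E2a m), Nat.card_congr (E2b m)]

/-! ### Identity 3 : card (Pr (n+1)) = card (Pr n) + A n -/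

def sh (s : ℕ → ℕ) : ℕ → ℕ := fun i => s (i+1) - 1

def ush (t : ℕ → ℕ) : ℕ → ℕ := fun i =>
  match i with
  | 0 => 0
  | j+1 => if t j = 0 then 0 else t j + 1

lemma ush_zero (t : ℕ → ℕ) : ush t 0 = 0 := rfl
lemma ush_succ (t : ℕ → ℕ) (j : ℕ) : ush t (j+1) = if t j = 0 then 0 else t j + 1 := rfl

lemma ush_ne {t : ℕ → ℕ} {i : ℕ} (h : ush t i ≠ 0) :
    ∃ j, i = j + 1 ∧ t j ≠ 0 ∧ ush t i = t j + 1 := by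
  match i with
  | 0 => exact absurd (ush_zero t) h
  | j+1 =>
    rw [ush_succ] at h ⊢
    by_cases hj : t j = 0
    · rw [if_pos hj] at h; omega
    · rw [if_neg hj]; exact ⟨j, rfl, hj, rfl⟩

lemma gd_sh {s : ℕ → ℕ} {n : ℕ} (h : Gd (n+1) s) (h2 : ∀ i, s i ≠ 0 → 2 ≤ s i) :
    Gd n (sh s) := by
  refine ⟨fun i => ?_, fun i hi => ?_, ?_⟩
  · show s (i+1) - 1 ≤ i
    have := h.1 (i+1); omega
  · show s (i+1) - 1 = 0
    rw [h.2.1 (i+1) (by omega)]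
  · intro j k hjk hj hk
    have hj' : s (j+1) - 1 ≠ 0 := hj
    have hk' : s (k+1) - 1 ≠ 0 := hk
    have hj2 : 2 ≤ s (j+1) := by have := h2 (j+1); omega
    have hk2 : 2 ≤ s (k+1) := by have := h2 (k+1); omega
    rcases h.2.2 (j+1) (k+1) (by omega) (by omega) (by omega) with hlt | ⟨heq, hbt⟩
    · left; show s (k+1) - 1 < s (j+1) - 1; omega
    · right
      constructor
      · show s (k+1) - 1 = s (j+1) - 1; omega
      · intro m hm1 hm2
        show s (m+1) - 1 = s (j+1) - 1
        rw [hbt (m+1) (by omega) (by omega)]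

lemma gd_ush {t : ℕ → ℕ} {n : ℕ} (h : Gd n t) : Gd (n+1) (ush t) := by
  refine ⟨fun i => ?_, fun i hi => ?_, ?_⟩
  · match i with
    | 0 => rw [ush_zero]
    | j+1 =>
      rw [ush_succ]
      have := h.1 j
      split <;> omega
  · match i with
    | 0 => rw [ush_zero]
    | j+1 =>
      rw [ush_succ, h.2.1 j (by omega), if_pos rfl]
  · intro j k hjk hj hk
    obtain ⟨j', hj', hj'ne, hj'eq⟩ := ush_ne hj
    obtain ⟨k', hk', hk'ne, hk'eq⟩ := ush_ne hk
    subst hj' hk'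
    rw [hj'eq, hk'eq]
    rcases h.2.2 j' k' (by omega) hj'ne hk'ne with hlt | ⟨heq, hbt⟩
    · left; omega
    · right
      refine ⟨by omega, fun m hm1 hm2 => ?_⟩
      match m, hm1 with
      | m'+1, _ =>
        rw [ush_succ, hbt m' (by omega) (by omega), if_neg hj'ne]

lemma sh_ush (t : ℕ → ℕ) : sh (ush t) = t := by
  funext i
  show ush t (i+1) - 1 = t i
  rw [ush_succ]
  split <;> omega

lemma ush_sh {s : ℕ → ℕ} (h0 : s 0 = 0) (h2 : ∀ i, s i ≠ 0 → 2 ≤ s i) :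
    ush (sh s) = s := by
  funext i
  match i with
  | 0 => rw [ush_zero, h0]
  | j+1 =>
    rw [ush_succ]
    show (if s (j+1) - 1 = 0 then 0 else (s (j+1) - 1) + 1) = s (j+1)
    have := h2 (j+1)
    by_cases h : s (j+1) = 0
    · rw [if_pos (by omega)]; omega
    · rw [if_neg (by omega)]; omega

def E3a (n : ℕ) : {x : Pr (n+1) // x.1.2 = 1} ≃ G n where
  toFun x := ⟨sh x.1.1.1, by
    refine gd_sh x.1.2.1 ?_
    intro i hi
    have := x.1.2.2.2.2 i hi
    rw [x.2] at this
    omega⟩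
  invFun t := ⟨⟨(ush t.1, 1), gd_ush t.2, le_refl 1, by omega, by
    intro i hi
    have hi' : ush t.1 i ≠ 0 := hi
    obtain ⟨j, hj, hjne, hjeq⟩ := ush_ne hi'
    show 1 < ush t.1 i
    rw [hjeq]
    omega⟩, rfl⟩
  left_inv x := by
    apply Subtype.ext
    apply Subtype.ext
    apply Prod.ext
    · show ush (sh x.1.1.1) = x.1.1.1
      refine ush_sh ?_ ?_
      · have := x.1.2.1.1 0; omega
      · intro i hi
        have := x.1.2.2.2.2 i hi
        rw [x.2] at this
        omega
    · show 1 = x.1.1.2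
      exact x.2.symm
  right_inv t := Subtype.ext (sh_ush t.1)

def E3b (n : ℕ) : {x : Pr (n+1) // ¬ x.1.2 = 1} ≃ Pr n where
  toFun x := ⟨(sh x.1.1.1, x.1.1.2 - 1), by
      refine gd_sh x.1.2.1 ?_
      intro i hi
      have := x.1.2.2.2.2 i hi
      have := x.1.2.2.1
      omega, by
      have := x.1.2.2.1
      have := x.2
      omega, by
      have := x.1.2.2.2.1
      omega, by
      intro i hi
      have hi2 : x.1.1.1 (i+1) - 1 ≠ 0 := hi
      have h3 : x.1.1.1 (i+1) ≠ 0 := by omega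
      have := x.1.2.2.2.2 (i+1) h3
      show x.1.1.2 - 1 < x.1.1.1 (i+1) - 1
      omega⟩
  invFun p := ⟨⟨(ush p.1.1, p.1.2 + 1), gd_ush p.2.1, by omega, by
      have := p.2.2.2.1; omega, by
      intro i hi
      have hi' : ush p.1.1 i ≠ 0 := hi
      obtain ⟨j, hj, hjne, hjeq⟩ := ush_ne hi'
      show p.1.2 + 1 < ush p.1.1 i
      rw [hjeq]
      have := p.2.2.2.2 j hjne
      omega⟩, by
      show ¬ p.1.2 + 1 = 1
      have := p.2.2.1
      omega⟩
  left_inv x := by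
    apply Subtype.ext
    apply Subtype.ext
    apply Prod.ext
    · show ush (sh x.1.1.1) = x.1.1.1
      refine ush_sh ?_ ?_
      · have := x.1.2.1.1 0; omega
      · intro i hi
        have := x.1.2.2.2.2 i hi
        have := x.1.2.2.1
        omega
    · show x.1.1.2 - 1 + 1 = x.1.1.2
      have := x.1.2.2.1
      omega
  right_inv p := by
    apply Subtype.ext
    apply Prod.ext
    · exact sh_ush p.1.1
    · show p.1.2 + 1 - 1 = p.1.2
      omega

lemma id3 (n : ℕ) : Nat.card (Pr (n+1)) = Nat.card (Pr n) + A n := by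
  rw [card_split (fun x : Pr (n+1) => x.1.2 = 1),
    Nat.card_congr (E3a n), Nat.card_congr (E3b n), cardA]
  omega

theorem stmt14 :
    A 1 = 1 ∧ A 2 = 2 ∧ A 3 = 5 ∧
    ∀ n : ℕ, 4 ≤ n →
      (A n : ℤ) = 3 * A (n - 1) - 2 * A (n - 2) + A (n - 3) := by
  refine ⟨?_, ?_, ?_, ?_⟩
  · unfold A; rw [Nat.card_eq_fintype_card]; decide
  · unfold A; rw [Nat.card_eq_fintype_card]; decide
  · unfold A; rw [Nat.card_eq_fintype_card]; decide
  · intro n hn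
    obtain ⟨k, rfl⟩ : ∃ k, n = k + 4 := ⟨n - 4, by omega⟩
    have e1 : k + 4 - 1 = k + 3 := by omega
    have e2 : k + 4 - 2 = k + 2 := by omega
    have e3 : k + 4 - 3 = k + 1 := by omega
    rw [e1, e2, e3]
    have h1 := id1 (k+3)
    have h2 := id1 (k+2)
    have h3 := id1 (k+1)
    have h4 := id2 (k+2)
    have h5 := id2 (k+1)
    have h6 := id3 (k+2)
    have ha : k+2+2 = k+4 := by omega
    have hb : k+2+1 = k+3 := by omega
    have hc : k+1+2 = k+3 := by omega
    have hd : k+1+1 = k+2 := by omega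
    have he : k+3+1 = k+4 := by omega
    rw [ha, hb] at h4
    rw [hc, hd] at h5
    rw [hb] at h6
    rw [he] at h1
    rw [hb] at h2
    rw [hd] at h3
    -- h1 : A (k+4) = A (k+3) + card St (k+4)
    -- h2 : A (k+3) = A (k+2) + card St (k+3)
    -- h3 : A (k+2) = A (k+1) + card St (k+2)
    -- h4 : card St (k+4) = card St (k+3) + card Pr (k+3)
    -- h5 : card St (k+3) = card St (k+2) + card Pr (k+2)
    -- h6 : card Pr (k+3) = card Pr (k+2) + A (k+2)
    have key : A (k+4) + 2 * A (k+2) = 3 * A (k+3) + A (k+1) := by omega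
    have : (A (k+4) : ℤ) + 2 * A (k+2) = 3 * A (k+3) + A (k+1) := by exact_mod_cast key
    linarith
end

section
/- The number of inversion sequences of length n with no indices i < j < k satisfying e_i ≠ e_j, e_j < e_k, and e_i ≠ e_k equals 2^{n+1} - C(n+1,3) - 2n - 1. -/
namespace S15
variable {n : ℕ}
instance : Fintype (InvSeq n) := by unfold InvSeq; infer_instance
instance : DecidableEq (InvSeq n) := by unfold InvSeq; infer_instance

def PI (e : InvSeq n) : Prop := ∀ i j : Fin n, (e i : ℕ) ≠ 0 → (e j : ℕ) ≠ 0 → (e i : ℕ) = (e j : ℕ)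
def PW (e : InvSeq n) : Prop := ∀ i j k : Fin n, i ≤ j → j < k → (e i : ℕ) ≠ 0 → (e k : ℕ) ≤ (e j : ℕ)

instance (e : InvSeq n) : Decidable (PI e) := by unfold PI; infer_instance
instance (e : InvSeq n) : Decidable (PW e) := by unfold PW; infer_instance


lemma card_antitone (L k : ℕ) :
    Fintype.card {f : Fin L → Fin (k + 1) // Antitone f} = (L + k).choose L := by
  let F : {f : Fin L → Fin (k + 1) // Antitone f} → Sym (Fin (k + 1)) L :=
    fun f => ⟨↑(List.ofFn f.1), by simp⟩
  have key : Function.Bijective F := by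
    constructor
    · rintro ⟨f, hf⟩ ⟨g, hg⟩ h
      have hperm : List.Perm (List.ofFn f) (List.ofFn g) :=
        Multiset.coe_eq_coe.mp (congrArg Subtype.val h)
      have hs1 : (List.ofFn f).Pairwise (· ≥ ·) :=
        List.pairwise_ofFn.mpr fun i j hij => hf (le_of_lt hij)
      have hs2 : (List.ofFn g).Pairwise (· ≥ ·) :=
        List.pairwise_ofFn.mpr fun i j hij => hg (le_of_lt hij)
      have := List.Perm.eq_of_pairwise' hs1 hs2 hperm
      exact Subtype.ext (List.ofFn_injective this)
    · intro s
      set l := Multiset.sort s.1 (· ≤ ·) with hl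
      have hlen : l.length = L := by rw [hl, Multiset.length_sort, s.2]
      have hsort : l.Pairwise (· ≤ ·) := Multiset.pairwise_sort _ _
      refine ⟨⟨fun i => l.get ⟨L - 1 - i.1, by omega⟩, ?_⟩, ?_⟩
      · intro i j hij
        exact hsort.rel_get_of_le (by simp only [Fin.mk_le_mk]; omega)
      · apply Subtype.ext
        show (↑(List.ofFn fun i : Fin L => l.get ⟨L - 1 - i.1, by omega⟩) : Multiset _) = s.1
        have heq : (List.ofFn fun i : Fin L => l.get ⟨L - 1 - i.1, by omega⟩) = l.reverse := by
          apply List.ext_get (by simp [hlen])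
          intro i h1 h2
          simp only [List.get_eq_getElem, List.getElem_ofFn, List.getElem_reverse]
          congr 1
          omega
        rw [heq, Multiset.coe_reverse]; exact Multiset.sort_eq _ _
  rw [Fintype.card_congr (Equiv.ofBijective F key), Sym.card_sym_eq_choose, Fintype.card_fin]
  congr 1
  omega

lemma card_antitone_ne0 (L k : ℕ) :
    Fintype.card {t : Fin (L + 1) → Fin (k + 1) // Antitone t ∧ (t 0 : ℕ) ≠ 0} =
      (L + 1 + k).choose (L + 1) - 1 := by
  classical
  have h3 : (Finset.univ.filter (fun t : Fin (L + 1) → Fin (k + 1) =>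
      Antitone t ∧ ¬((t 0 : ℕ) ≠ 0))) = {fun _ => 0} := by
    ext t
    simp only [Finset.mem_filter, Finset.mem_univ, true_and, not_not, Finset.mem_singleton]
    constructor
    · rintro ⟨hA, h0⟩
      funext i
      have h4 : (t i : ℕ) ≤ (t 0 : ℕ) := hA (Fin.zero_le i)
      show t i = 0
      exact Fin.ext (by simp only [Fin.val_zero]; omega)
    · rintro rfl
      exact ⟨antitone_const, by simp⟩
  have h4 : (Finset.univ.filter (fun t : Fin (L + 1) → Fin (k + 1) => Antitone t)).card =
      (L + 1 + k).choose (L + 1) := by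
    rw [← Fintype.card_subtype, card_antitone]
  have h1 : Fintype.card {t : Fin (L + 1) → Fin (k + 1) // Antitone t ∧ (t 0 : ℕ) ≠ 0} =
      (Finset.univ.filter (fun t : Fin (L + 1) → Fin (k + 1) =>
        Antitone t ∧ (t 0 : ℕ) ≠ 0)).card := Fintype.card_subtype _
  have h2 := Finset.card_filter_add_card_filter_not
    (s := Finset.univ.filter (fun t : Fin (L + 1) → Fin (k + 1) => Antitone t))
    (p := fun t => (t 0 : ℕ) ≠ 0)
  rw [Finset.filter_filter, Finset.filter_filter] at h2
  have h2' : (Finset.univ.filter (fun t : Fin (L + 1) → Fin (k + 1) => Antitone t ∧ (t 0 : ℕ) ≠ 0)).card + (Finset.univ.filter (fun t : Fin (L + 1) → Fin (k + 1) => Antitone t ∧ ¬((t 0 : ℕ) ≠ 0))).card = (Finset.univ.filter (fun t : Fin (L + 1) → Fin (k + 1) => Antitone t)).card := h2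
  rw [h3, Finset.card_singleton, h4] at h2'
  rw [h1]
  exact Nat.eq_sub_of_add_eq h2'

lemma card_antitone_ne0' (L k : ℕ) (hpos : 0 < L) :
    Fintype.card {t : Fin L → Fin (k + 1) // Antitone t ∧ (t ⟨0, hpos⟩ : ℕ) ≠ 0} =
      (L + k).choose L - 1 := by
  obtain ⟨L', rfl⟩ : ∃ L', L = L' + 1 := ⟨L - 1, by omega⟩
  calc Fintype.card {t : Fin (L' + 1) → Fin (k + 1) // Antitone t ∧ (t ⟨0, hpos⟩ : ℕ) ≠ 0}
      = Fintype.card {t : Fin (L' + 1) → Fin (k + 1) // Antitone t ∧ (t 0 : ℕ) ≠ 0} :=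
        Fintype.card_congr (Equiv.subtypeEquivRight fun t => by
          rw [show (0 : Fin (L' + 1)) = ⟨0, hpos⟩ from Fin.ext (by simp)])
    _ = _ := card_antitone_ne0 L' k


lemma val_le (e : InvSeq n) (i : Fin n) : (e i : ℕ) ≤ i.1 := Nat.lt_succ_iff.mp (e i).2

lemma char (e : InvSeq n) :
    ¬(∃ i j k : Fin n, i < j ∧ j < k ∧ (e i : ℕ) ≠ (e j : ℕ) ∧ (e j : ℕ) < (e k : ℕ) ∧
      (e i : ℕ) ≠ (e k : ℕ)) ↔ PI e ∨ PW e := by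
  constructor
  · intro h
    by_contra hc
    push_neg at hc
    obtain ⟨hI, hW⟩ := hc
    unfold PI at hI; push_neg at hI
    unfold PW at hW; push_neg at hW
    obtain ⟨p, q, hp, hq, hpq⟩ := hI
    obtain ⟨i, j, k, hij, hjk, hi, hkj⟩ := hW
    apply h
    have h0j : (0 : ℕ) < j.1 := by
      rcases Nat.eq_zero_or_pos i.1 with h0 | h0
      · exfalso; apply hi; have := (e i).2; omega
      · exact lt_of_lt_of_le h0 hij
    have hzlt : (0 : ℕ) < n := lt_trans h0j j.2
    set z : Fin n := ⟨0, hzlt⟩ with hz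
    have hez : (e z : ℕ) = 0 := Nat.lt_one_iff.mp (e z).2
    by_cases hj0 : (e j : ℕ) = 0
    · -- e j = 0, so i < j strictly
      have hij' : i < j := lt_of_le_of_ne hij (fun h => hi (h ▸ hj0))
      by_cases hik : (e i : ℕ) = (e k : ℕ)
      · -- find witness w with e w ∉ {0, e i}
        by_cases hpc : (e p : ℕ) = (e i : ℕ)
        · have hqc : (e q : ℕ) ≠ (e i : ℕ) := fun h => hpq (hpc.trans h.symm)
          rcases lt_trichotomy q.1 j.1 with hqj | hqj | hqj
          · exact ⟨q, j, k, hqj, hjk, by omega, by omega, by omega⟩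
          · exact absurd (show (e q : ℕ) = 0 from (Fin.ext hqj : q = j) ▸ hj0) hq
          · exact ⟨i, j, q, hij', hqj, by omega, by omega, by omega⟩
        · rcases lt_trichotomy p.1 j.1 with hpj | hpj | hpj
          · exact ⟨p, j, k, hpj, hjk, by omega, by omega, by omega⟩
          · exact absurd (show (e p : ℕ) = 0 from (Fin.ext hpj : p = j) ▸ hj0) hp
          · exact ⟨i, j, p, hij', hpj, by omega, by omega, by omega⟩
      · exact ⟨i, j, k, hij', hjk, by omega, by omega, hik⟩
    · exact ⟨z, j, k, h0j, hjk, by omega, by omega, by omega⟩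
  · rintro (hI | hW) ⟨i, j, k, hij, hjk, h1, h2, h3⟩
    · by_cases hj0 : (e j : ℕ) = 0
      · by_cases hi0 : (e i : ℕ) = 0
        · omega
        · exact h3 (hI i k hi0 (by omega))
      · exact absurd (hI j k hj0 (by omega)) (by omega)
    · by_cases hj0 : (e j : ℕ) = 0
      · have := hW i j k (le_of_lt hij) hjk (by omega)
        omega
      · have := hW j j k (le_refl j) hjk hj0
        omega


-- first nonzero position
def fst (e : InvSeq n) (h : ∃ i, (e i : ℕ) ≠ 0) : Fin n :=
  (Finset.univ.filter fun i => (e i : ℕ) ≠ 0).min' (by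
    obtain ⟨i, hi⟩ := h
    exact ⟨i, Finset.mem_filter.mpr ⟨Finset.mem_univ _, hi⟩⟩)

lemma fst_ne (e : InvSeq n) (h : ∃ i, (e i : ℕ) ≠ 0) : (e (fst e h) : ℕ) ≠ 0 := by
  have hne : (Finset.univ.filter fun i : Fin n => (e i : ℕ) ≠ 0).Nonempty := by
    obtain ⟨i, hi⟩ := h
    exact ⟨i, Finset.mem_filter.mpr ⟨Finset.mem_univ _, hi⟩⟩
  have hmem := Finset.min'_mem (Finset.univ.filter fun i : Fin n => (e i : ℕ) ≠ 0) hne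
  exact (Finset.mem_filter.mp hmem).2

lemma fst_le (e : InvSeq n) (h : ∃ i, (e i : ℕ) ≠ 0) (j : Fin n) (hj : (e j : ℕ) ≠ 0) :
    fst e h ≤ j := by
  unfold fst
  exact Finset.min'_le _ j (Finset.mem_filter.mpr ⟨Finset.mem_univ _, hj⟩)

lemma lt_fst_eq_zero (e : InvSeq n) (h : ∃ i, (e i : ℕ) ≠ 0) (j : Fin n)
    (hj : j < fst e h) : (e j : ℕ) = 0 := by
  by_contra hz
  exact absurd (fst_le e h j hz) (not_le.mpr hj)

def zeroSeq (n : ℕ) : InvSeq n := fun _ => ⟨0, Nat.succ_pos _⟩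

/-- total version of evaluation -/
def eVal (e : InvSeq n) (x : ℕ) : ℕ := if hx : x < n then (e ⟨x, hx⟩ : ℕ) else 0

lemma eVal_eq (e : InvSeq n) (j : Fin n) : eVal e j.1 = (e j : ℕ) := by
  unfold eVal
  rw [dif_pos j.2]

def decI (m : Fin n) (a : Fin m.1) (b : Fin (n - m.1 - 1) → Bool) : InvSeq n :=
  fun j =>
    if _hj : j.1 < m.1 then ⟨0, Nat.succ_pos _⟩
    else if hj2 : m.1 < j.1 then
      (if b ⟨j.1 - m.1 - 1, by have h1 := j.2; omega⟩ then
        ⟨a.1 + 1, by have h2 := a.2; omega⟩ else ⟨0, Nat.succ_pos _⟩)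
    else ⟨a.1 + 1, by have h2 := a.2; omega⟩

lemma decI_lt {m : Fin n} {a : Fin m.1} {b : Fin (n - m.1 - 1) → Bool} (j : Fin n)
    (h : j.1 < m.1) : (decI m a b j : ℕ) = 0 := by
  simp only [decI, dif_pos h]

lemma decI_eq {m : Fin n} {a : Fin m.1} {b : Fin (n - m.1 - 1) → Bool} (j : Fin n)
    (h : j.1 = m.1) : (decI m a b j : ℕ) = a.1 + 1 := by
  simp only [decI, dif_neg (by omega : ¬ j.1 < m.1), dif_neg (by omega : ¬ m.1 < j.1)]

lemma decI_gt {m : Fin n} {a : Fin m.1} {b : Fin (n - m.1 - 1) → Bool} (j : Fin n)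
    (h : m.1 < j.1) : (decI m a b j : ℕ) =
      if b ⟨j.1 - m.1 - 1, by have h1 := j.2; omega⟩ then a.1 + 1 else 0 := by
  simp only [decI, dif_neg (by omega : ¬ j.1 < m.1), dif_pos h]
  split <;> rfl


lemma PI_decI (m : Fin n) (a : Fin m.1) (b : Fin (n - m.1 - 1) → Bool) : PI (decI m a b) := by
  intro i j hi hj
  have key : ∀ l : Fin n, (decI m a b l : ℕ) ≠ 0 → (decI m a b l : ℕ) = a.1 + 1 := by
    intro l hl
    rcases lt_trichotomy l.1 m.1 with h | h | h
    · exact absurd (decI_lt l h) hl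
    · exact decI_eq l h
    · rw [decI_gt l h] at hl ⊢
      split at hl
      · split
        · rfl
        · simp_all
      · exact absurd rfl hl
  rw [key i hi, key j hj]

lemma PI_zero : PI (zeroSeq n) := fun i _ hi _ => absurd rfl hi

def CodeI (n : ℕ) := Option (Σ m : Fin n, Fin m.1 × (Fin (n - m.1 - 1) → Bool))

instance : Fintype (CodeI n) := by unfold CodeI; infer_instance

def decIO (o : CodeI n) : InvSeq n := o.elim (zeroSeq n) fun d => decI d.1 d.2.1 d.2.2

lemma decIO_none : decIO (n := n) none = zeroSeq n := rfl
lemma decIO_some (m : Fin n) (a : Fin m.1) (b : Fin (n - m.1 - 1) → Bool) :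
    decIO (some ⟨m, a, b⟩) = decI m a b := rfl

lemma PI_decIO (o : CodeI n) : PI (decIO o) := by
  rcases o with _ | ⟨m, a, b⟩
  · exact PI_zero
  · rw [decIO_some]; exact PI_decI m a b

lemma decIO_inj : Function.Injective (decIO (n := n)) := by
  rintro (_ | ⟨m₁, a₁, b₁⟩) (_ | ⟨m₂, a₂, b₂⟩) h
  · rfl
  · exfalso
    rw [decIO_none, decIO_some] at h
    have h1 : (zeroSeq n m₂ : ℕ) = (decI m₂ a₂ b₂ m₂ : ℕ) := by rw [h]
    rw [decI_eq m₂ rfl] at h1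
    simp [zeroSeq] at h1
  · exfalso
    rw [decIO_none, decIO_some] at h
    have h1 : (decI m₁ a₁ b₁ m₁ : ℕ) = (zeroSeq n m₁ : ℕ) := by rw [h]
    rw [decI_eq m₁ rfl] at h1
    simp [zeroSeq] at h1
  · rw [decIO_some, decIO_some] at h
    have hval : ∀ j : Fin n, (decI m₁ a₁ b₁ j : ℕ) = (decI m₂ a₂ b₂ j : ℕ) :=
      fun j => by rw [h]
    have hm : m₁ = m₂ := by
      rcases lt_trichotomy m₁.1 m₂.1 with hlt | heq | hgt
      · have := hval m₁
        rw [decI_eq m₁ rfl, decI_lt m₁ hlt] at this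
        omega
      · exact Fin.ext heq
      · have := hval m₂
        rw [decI_eq m₂ rfl, decI_lt m₂ hgt] at this
        omega
    subst hm
    have ha : a₁ = a₂ := by
      have := hval m₁
      rw [decI_eq m₁ rfl, decI_eq m₁ rfl] at this
      exact Fin.ext (by omega)
    subst ha
    have hb : b₁ = b₂ := by
      funext p
      have hp := p.2
      have hidx : m₁.1 < m₁.1 + 1 + p.1 := by omega
      have hlt2 : m₁.1 + 1 + p.1 < n := by omega
      have hv := hval ⟨m₁.1 + 1 + p.1, hlt2⟩
      rw [decI_gt _ hidx, decI_gt _ hidx] at hv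
      have hpe : (⟨(⟨m₁.1 + 1 + p.1, hlt2⟩ : Fin n).1 - m₁.1 - 1, by simp; omega⟩ :
          Fin (n - m₁.1 - 1)) = p := Fin.ext (by simp; omega)
      rw [hpe] at hv
      cases hb1 : b₁ p <;> cases hb2 : b₂ p <;> rw [hb1, hb2] at hv <;> simp_all
    rw [hb]

lemma decIO_surj (e : InvSeq n) (he : PI e) : ∃ o : CodeI n, decIO o = e := by
  by_cases h : ∃ i, (e i : ℕ) ≠ 0
  · set m := fst e h with hm
    have hem : (e m : ℕ) ≠ 0 := fst_ne e h
    have hem2 : (e m : ℕ) ≤ m.1 := val_le e m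
    refine ⟨some ⟨m, ⟨(e m : ℕ) - 1, by omega⟩,
      fun p => decide (eVal e (m.1 + 1 + p.1) ≠ 0)⟩, ?_⟩
    rw [decIO_some]
    funext j
    apply Fin.ext
    rcases lt_trichotomy j.1 m.1 with hlt | heq | hgt
    · rw [decI_lt j hlt, lt_fst_eq_zero e h j hlt]
    · rw [decI_eq j heq]
      have hje : j = m := Fin.ext heq
      rw [hje]
      simp only
      omega
    · rw [decI_gt j hgt]
      simp only [decide_eq_true_eq]
      have harith : m.1 + 1 + (j.1 - m.1 - 1) = j.1 := by omega
      rw [harith, eVal_eq e j]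
      by_cases hz : (e j : ℕ) = 0
      · rw [if_neg (not_not_intro hz)]
        omega
      · rw [if_pos hz]
        have hv := he j m hz hem
        omega
  · refine ⟨none, ?_⟩
    rw [decIO_none]
    funext j
    push_neg at h
    exact Fin.ext (by simp [zeroSeq, (h j).symm])

lemma cardPI : Fintype.card {e : InvSeq n // PI e} =
    (∑ m ∈ Finset.range n, m * 2 ^ (n - m - 1)) + 1 := by
  classical
  have hbij : Function.Bijective (fun o : CodeI n => (⟨decIO o, PI_decIO o⟩ : {e // PI e})) := by
    constructor
    · intro o₁ o₂ h
      exact decIO_inj (congrArg Subtype.val h)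
    · rintro ⟨e, he⟩
      obtain ⟨o, ho⟩ := decIO_surj e he
      exact ⟨o, Subtype.ext ho⟩
  rw [← Fintype.card_of_bijective hbij]
  unfold CodeI
  rw [Fintype.card_option, Fintype.card_sigma]
  congr 1
  rw [← Fin.sum_univ_eq_sum_range (fun m => m * 2 ^ (n - m - 1))]
  apply Finset.sum_congr rfl
  intro m _
  rw [Fintype.card_prod, Fintype.card_fun, Fintype.card_fin, Fintype.card_bool,
    Fintype.card_fin]


/-! ### W family -/

def decW (m : Fin n) (t : Fin (n - m.1) → Fin (m.1 + 1)) : InvSeq n :=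
  fun j =>
    if _hj : j.1 < m.1 then ⟨0, Nat.succ_pos _⟩
    else ⟨(t ⟨j.1 - m.1, by have := j.2; omega⟩ : ℕ), by
      have h1 := (t ⟨j.1 - m.1, by have := j.2; omega⟩).2
      omega⟩

lemma decW_lt {m : Fin n} {t : Fin (n - m.1) → Fin (m.1 + 1)} (j : Fin n)
    (h : j.1 < m.1) : (decW m t j : ℕ) = 0 := by
  simp only [decW, dif_pos h]

lemma decW_ge {m : Fin n} {t : Fin (n - m.1) → Fin (m.1 + 1)} (j : Fin n)
    (h : ¬ j.1 < m.1) :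
    (decW m t j : ℕ) = (t ⟨j.1 - m.1, by have := j.2; omega⟩ : ℕ) := by
  simp only [decW, dif_neg h]

lemma PW_decW (m : Fin n) (t : Fin (n - m.1) → Fin (m.1 + 1)) (ht : Antitone t) :
    PW (decW m t) := by
  intro i j k hij hjk hi
  have him : ¬ i.1 < m.1 := fun hc => hi (decW_lt i hc)
  have hjm : ¬ j.1 < m.1 := by have := Fin.le_def.mp hij; omega
  have hkm : ¬ k.1 < m.1 := by have := Fin.lt_def.mp hjk; omega
  rw [decW_ge j hjm, decW_ge k hkm]
  exact ht (by simp only [Fin.mk_le_mk]; have := Fin.lt_def.mp hjk; omega)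

lemma PW_zero : PW (zeroSeq n) := fun i _ _ _ _ hi => absurd rfl hi

def CodeW (n : ℕ) := Option (Σ m : Fin n,
  {t : Fin (n - m.1) → Fin (m.1 + 1) // Antitone t ∧ (t ⟨0, Nat.sub_pos_of_lt m.2⟩ : ℕ) ≠ 0})

instance : Fintype (CodeW n) := by unfold CodeW; infer_instance

def decWO (o : CodeW n) : InvSeq n := o.elim (zeroSeq n) fun d => decW d.1 d.2.1

lemma decWO_none : decWO (n := n) none = zeroSeq n := rfl
lemma decWO_some (m : Fin n) (t) : decWO (some ⟨m, t⟩) = decW m t.1 := rfl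

lemma PW_decWO (o : CodeW n) : PW (decWO o) := by
  rcases o with _ | ⟨m, t, ht⟩
  · exact PW_zero
  · rw [decWO_some]; exact PW_decW m t ht.1

lemma decW_self {m : Fin n} {t : Fin (n - m.1) → Fin (m.1 + 1)} :
    (decW m t m : ℕ) = (t ⟨0, Nat.sub_pos_of_lt m.2⟩ : ℕ) := by
  rw [decW_ge m (lt_irrefl _)]
  simp only [Nat.sub_self]

lemma decWO_inj : Function.Injective (decWO (n := n)) := by
  rintro (_ | ⟨m₁, t₁, ht₁⟩) (_ | ⟨m₂, t₂, ht₂⟩) h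
  · rfl
  · exfalso
    rw [decWO_none, decWO_some] at h
    have h1 : (zeroSeq n m₂ : ℕ) = (decW m₂ t₂ m₂ : ℕ) := by rw [h]
    rw [decW_self] at h1
    exact ht₂.2 (by simpa [zeroSeq] using h1.symm)
  · exfalso
    rw [decWO_none, decWO_some] at h
    have h1 : (decW m₁ t₁ m₁ : ℕ) = (zeroSeq n m₁ : ℕ) := by rw [h]
    rw [decW_self] at h1
    exact ht₁.2 (by simpa [zeroSeq] using h1)
  · rw [decWO_some, decWO_some] at h
    have hval : ∀ j : Fin n, (decW m₁ t₁ j : ℕ) = (decW m₂ t₂ j : ℕ) :=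
      fun j => by rw [h]
    have hm : m₁ = m₂ := by
      rcases lt_trichotomy m₁.1 m₂.1 with hlt | heq | hgt
      · have h1 := hval m₁
        rw [decW_lt m₁ hlt] at h1
        rw [decW_self] at h1
        exact absurd h1 ht₁.2
      · exact Fin.ext heq
      · have h1 := hval m₂
        rw [decW_lt m₂ hgt] at h1
        rw [decW_self] at h1
        exact absurd h1.symm ht₂.2
    subst hm
    have htt : t₁ = t₂ := by
      funext k
      have hk := k.2
      have hlt2 : m₁.1 + k.1 < n := by omega
      have h1 := hval ⟨m₁.1 + k.1, hlt2⟩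
      have hjj : ¬ (⟨m₁.1 + k.1, hlt2⟩ : Fin n).1 < m₁.1 := by simp only; omega
      rw [decW_ge ⟨m₁.1 + k.1, hlt2⟩ hjj] at h1
      rw [decW_ge ⟨m₁.1 + k.1, hlt2⟩ hjj] at h1
      have harith : (⟨m₁.1 + k.1, hlt2⟩ : Fin n).1 - m₁.1 = k.1 := by simp only; omega
      simp only [harith] at h1
      exact Fin.ext (by simpa using h1)
    subst htt
    rfl

lemma decWO_surj (e : InvSeq n) (he : PW e) : ∃ o : CodeW n, decWO o = e := by
  by_cases h : ∃ i, (e i : ℕ) ≠ 0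
  · set m := fst e h with hm
    have hem : (e m : ℕ) ≠ 0 := fst_ne e h
    have hem2 : (e m : ℕ) ≤ m.1 := val_le e m
    have hbd : ∀ x : ℕ, m.1 + x < n → eVal e (m.1 + x) < m.1 + 1 := by
      intro x hx
      rcases Nat.eq_zero_or_pos x with rfl | hxp
      · rw [Nat.add_zero, eVal_eq e m]
        omega
      · have hkey := he m m ⟨m.1 + x, hx⟩ (le_refl m) (by simp [Fin.lt_def]; omega) hem
        rw [← eVal_eq e m, ← eVal_eq e ⟨m.1 + x, hx⟩] at hkey
        simp only at hkey
        have hept := eVal_eq e m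
        omega
    have hmono : ∀ x y : ℕ, x ≤ y → m.1 + y < n → eVal e (m.1 + y) ≤ eVal e (m.1 + x) := by
      intro x y hxy hy
      rcases Nat.eq_or_lt_of_le hxy with rfl | hlt
      · exact le_refl _
      · have hkey := he m ⟨m.1 + x, by omega⟩ ⟨m.1 + y, hy⟩
          (by simp [Fin.le_def]) (by simp [Fin.lt_def]; omega) hem
        rw [← eVal_eq e ⟨m.1 + x, by omega⟩, ← eVal_eq e ⟨m.1 + y, hy⟩] at hkey
        simpa using hkey
    refine ⟨some ⟨m, ⟨fun k => ⟨eVal e (m.1 + k.1), hbd k.1 (by have := k.2; omega)⟩,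
      ?_, ?_⟩⟩, ?_⟩
    · intro k k' hkk
      simp only [Fin.mk_le_mk]
      exact hmono k.1 k'.1 hkk (by have := k'.2; omega)
    · simp only [Nat.add_zero, eVal_eq e m]
      exact hem
    · rw [decWO_some]
      funext j
      apply Fin.ext
      by_cases hj : j.1 < m.1
      · rw [decW_lt j hj, lt_fst_eq_zero e h j hj]
      · rw [decW_ge j hj]
        simp only
        have harith : m.1 + (j.1 - m.1) = j.1 := by omega
        rw [harith, eVal_eq e j]
  · refine ⟨none, ?_⟩
    rw [decWO_none]
    funext j
    push_neg at h
    exact Fin.ext (by simp [zeroSeq, (h j).symm])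

lemma cardPW : Fintype.card {e : InvSeq n // PW e} =
    (∑ m ∈ Finset.range n, (n.choose (n - m) - 1)) + 1 := by
  classical
  have hbij : Function.Bijective (fun o : CodeW n => (⟨decWO o, PW_decWO o⟩ : {e // PW e})) := by
    constructor
    · intro o₁ o₂ h
      exact decWO_inj (congrArg Subtype.val h)
    · rintro ⟨e, he⟩
      obtain ⟨o, ho⟩ := decWO_surj e he
      exact ⟨o, Subtype.ext ho⟩
  rw [← Fintype.card_of_bijective hbij]
  unfold CodeW
  rw [Fintype.card_option, Fintype.card_sigma]
  congr 1
  rw [← Fin.sum_univ_eq_sum_range (fun m => n.choose (n - m) - 1)]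
  apply Finset.sum_congr rfl
  intro m _
  rw [card_antitone_ne0' (n - m.1) m.1 (Nat.sub_pos_of_lt m.2)]
  rw [Nat.sub_add_cancel (le_of_lt m.2)]


/-! ### Intersection family -/

def lst (e : InvSeq n) (h : ∃ i, (e i : ℕ) ≠ 0) : Fin n :=
  (Finset.univ.filter fun i => (e i : ℕ) ≠ 0).max' (by
    obtain ⟨i, hi⟩ := h
    exact ⟨i, Finset.mem_filter.mpr ⟨Finset.mem_univ _, hi⟩⟩)

lemma lst_ne (e : InvSeq n) (h : ∃ i, (e i : ℕ) ≠ 0) : (e (lst e h) : ℕ) ≠ 0 := by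
  have hne : (Finset.univ.filter fun i : Fin n => (e i : ℕ) ≠ 0).Nonempty := by
    obtain ⟨i, hi⟩ := h
    exact ⟨i, Finset.mem_filter.mpr ⟨Finset.mem_univ _, hi⟩⟩
  have hmem := Finset.max'_mem (Finset.univ.filter fun i : Fin n => (e i : ℕ) ≠ 0) hne
  exact (Finset.mem_filter.mp hmem).2

lemma le_lst (e : InvSeq n) (h : ∃ i, (e i : ℕ) ≠ 0) (j : Fin n) (hj : (e j : ℕ) ≠ 0) :
    j ≤ lst e h := by
  unfold lst
  exact Finset.le_max' _ j (Finset.mem_filter.mpr ⟨Finset.mem_univ _, hj⟩)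

lemma gt_lst_eq_zero (e : InvSeq n) (h : ∃ i, (e i : ℕ) ≠ 0) (j : Fin n)
    (hj : lst e h < j) : (e j : ℕ) = 0 := by
  by_contra hz
  exact absurd (le_lst e h j hz) (not_le.mpr hj)

def decB (m : Fin n) (a : Fin m.1) (r : Fin (n - m.1)) : InvSeq n :=
  fun j =>
    if h : m.1 ≤ j.1 ∧ j.1 ≤ m.1 + r.1 then ⟨a.1 + 1, by have := a.2; omega⟩
    else ⟨0, Nat.succ_pos _⟩

lemma decB_in {m : Fin n} {a : Fin m.1} {r : Fin (n - m.1)} (j : Fin n)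
    (h : m.1 ≤ j.1 ∧ j.1 ≤ m.1 + r.1) : (decB m a r j : ℕ) = a.1 + 1 := by
  simp only [decB, dif_pos h]

lemma decB_out {m : Fin n} {a : Fin m.1} {r : Fin (n - m.1)} (j : Fin n)
    (h : ¬(m.1 ≤ j.1 ∧ j.1 ≤ m.1 + r.1)) : (decB m a r j : ℕ) = 0 := by
  simp only [decB, dif_neg h]

lemma decB_cases {m : Fin n} {a : Fin m.1} {r : Fin (n - m.1)} (j : Fin n) :
    (decB m a r j : ℕ) = 0 ∨ ((decB m a r j : ℕ) = a.1 + 1 ∧ m.1 ≤ j.1 ∧ j.1 ≤ m.1 + r.1) := by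
  by_cases h : m.1 ≤ j.1 ∧ j.1 ≤ m.1 + r.1
  · exact Or.inr ⟨decB_in j h, h⟩
  · exact Or.inl (decB_out j h)

lemma PI_decB (m : Fin n) (a : Fin m.1) (r : Fin (n - m.1)) : PI (decB m a r) := by
  intro i j hi hj
  rcases decB_cases (a := a) (r := r) i with h1 | h1
  · exact absurd h1 hi
  · rcases decB_cases (a := a) (r := r) j with h2 | h2
    · exact absurd h2 hj
    · rw [h1.1, h2.1]

lemma PW_decB (m : Fin n) (a : Fin m.1) (r : Fin (n - m.1)) : PW (decB m a r) := by
  intro i j k hij hjk hi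
  have hii : m.1 ≤ i.1 ∧ i.1 ≤ m.1 + r.1 := by
    rcases decB_cases (a := a) (r := r) i with h1 | h1
    · exact absurd h1 hi
    · exact h1.2
  have hle := Fin.le_def.mp hij
  have hlt := Fin.lt_def.mp hjk
  rcases decB_cases (a := a) (r := r) k with h2 | h2
  · rw [h2]; omega
  · rw [h2.1, decB_in j ⟨by omega, by omega⟩]

def CodeB (n : ℕ) := Option (Σ m : Fin n, Fin m.1 × Fin (n - m.1))

instance : Fintype (CodeB n) := by unfold CodeB; infer_instance

def decBO (o : CodeB n) : InvSeq n := o.elim (zeroSeq n) fun d => decB d.1 d.2.1 d.2.2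

lemma decBO_none : decBO (n := n) none = zeroSeq n := rfl
lemma decBO_some (m : Fin n) (a : Fin m.1) (r : Fin (n - m.1)) :
    decBO (some ⟨m, a, r⟩) = decB m a r := rfl

lemma PIW_decBO (o : CodeB n) : PI (decBO o) ∧ PW (decBO o) := by
  rcases o with _ | ⟨m, a, r⟩
  · exact ⟨PI_zero, PW_zero⟩
  · rw [decBO_some]; exact ⟨PI_decB m a r, PW_decB m a r⟩

lemma decB_self {m : Fin n} {a : Fin m.1} {r : Fin (n - m.1)} :
    (decB m a r m : ℕ) = a.1 + 1 :=
  decB_in m ⟨le_refl _, by omega⟩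

lemma decBO_inj : Function.Injective (decBO (n := n)) := by
  rintro (_ | ⟨m₁, a₁, r₁⟩) (_ | ⟨m₂, a₂, r₂⟩) h
  · rfl
  · exfalso
    rw [decBO_none, decBO_some] at h
    have h1 : (zeroSeq n m₂ : ℕ) = (decB m₂ a₂ r₂ m₂ : ℕ) := by rw [h]
    rw [decB_self] at h1
    simp [zeroSeq] at h1
  · exfalso
    rw [decBO_none, decBO_some] at h
    have h1 : (decB m₁ a₁ r₁ m₁ : ℕ) = (zeroSeq n m₁ : ℕ) := by rw [h]
    rw [decB_self] at h1
    simp [zeroSeq] at h1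
  · rw [decBO_some, decBO_some] at h
    have hval : ∀ j : Fin n, (decB m₁ a₁ r₁ j : ℕ) = (decB m₂ a₂ r₂ j : ℕ) :=
      fun j => by rw [h]
    have hm : m₁ = m₂ := by
      rcases lt_trichotomy m₁.1 m₂.1 with hlt | heq | hgt
      · have h1 := hval m₁
        rw [decB_self, decB_out m₁ (by omega)] at h1
        omega
      · exact Fin.ext heq
      · have h1 := hval m₂
        rw [decB_self, decB_out m₂ (by omega)] at h1
        omega
    subst hm
    have ha : a₁ = a₂ := by
      have h1 := hval m₁
      rw [decB_self, decB_self] at h1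
      exact Fin.ext (by omega)
    subst ha
    have hr : r₁ = r₂ := by
      rcases lt_trichotomy r₁.1 r₂.1 with hlt | heq | hgt
      · exfalso
        have hr2 := r₂.2
        have hpos : m₁.1 + r₂.1 < n := by omega
        have h1 := hval ⟨m₁.1 + r₂.1, hpos⟩
        rw [decB_out _ (by simp only; omega), decB_in _ (by simp only; omega)] at h1
        omega
      · exact Fin.ext heq
      · exfalso
        have hr1 := r₁.2
        have hpos : m₁.1 + r₁.1 < n := by omega
        have h1 := hval ⟨m₁.1 + r₁.1, hpos⟩
        rw [decB_in _ (by simp only; omega), decB_out _ (by simp only; omega)] at h1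
        omega
    subst hr
    rfl

lemma decBO_surj (e : InvSeq n) (heI : PI e) (heW : PW e) : ∃ o : CodeB n, decBO o = e := by
  by_cases h : ∃ i, (e i : ℕ) ≠ 0
  · set m := fst e h with hm
    set R := lst e h with hR
    have hem : (e m : ℕ) ≠ 0 := fst_ne e h
    have heR : (e R : ℕ) ≠ 0 := lst_ne e h
    have hem2 : (e m : ℕ) ≤ m.1 := val_le e m
    have hmR : m ≤ R := fst_le e h R heR
    have hmR' : m.1 ≤ R.1 := Fin.le_def.mp hmR
    refine ⟨some ⟨m, ⟨(e m : ℕ) - 1, by omega⟩, ⟨R.1 - m.1, by have := R.2; omega⟩⟩, ?_⟩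
    rw [decBO_some]
    funext j
    apply Fin.ext
    by_cases hj : m.1 ≤ j.1 ∧ j.1 ≤ m.1 + (R.1 - m.1)
    · rw [decB_in j hj]
      have hjR : j.1 ≤ R.1 := by omega
      have hjne : (e j : ℕ) ≠ 0 := by
        intro hz
        rcases Nat.eq_or_lt_of_le hjR with heq | hlt
        · exact heR ((Fin.ext heq : j = R) ▸ hz)
        · rcases Nat.eq_or_lt_of_le hj.1 with heq | hlt2
          · exact hem ((Fin.ext heq.symm : j = m) ▸ hz)
          · have := heW m j R (Fin.le_def.mpr (by omega)) (Fin.lt_def.mpr hlt) hem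
            omega
      have := heI j m hjne hem
      simp only
      omega
    · rw [decB_out j hj]
      rcases Nat.lt_or_ge j.1 m.1 with hlt | hge
      · rw [lt_fst_eq_zero e h j hlt]
      · have hjR : R.1 < j.1 := by omega
        rw [gt_lst_eq_zero e h j (Fin.lt_def.mpr hjR)]
  · refine ⟨none, ?_⟩
    rw [decBO_none]
    funext j
    push_neg at h
    exact Fin.ext (by simp [zeroSeq, (h j).symm])

lemma cardPIW : Fintype.card {e : InvSeq n // PI e ∧ PW e} =
    (∑ m ∈ Finset.range n, m * (n - m)) + 1 := by
  classical
  have hbij : Function.Bijective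
      (fun o : CodeB n => (⟨decBO o, PIW_decBO o⟩ : {e // PI e ∧ PW e})) := by
    constructor
    · intro o₁ o₂ h
      exact decBO_inj (congrArg Subtype.val h)
    · rintro ⟨e, he⟩
      obtain ⟨o, ho⟩ := decBO_surj e he.1 he.2
      exact ⟨o, Subtype.ext ho⟩
  rw [← Fintype.card_of_bijective hbij]
  unfold CodeB
  rw [Fintype.card_option, Fintype.card_sigma]
  congr 1
  rw [← Fin.sum_univ_eq_sum_range (fun m => m * (n - m))]
  apply Finset.sum_congr rfl
  intro m _
  rw [Fintype.card_prod, Fintype.card_fin, Fintype.card_fin]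


/-! ### Sum identities -/

lemma S1 (n : ℕ) : (∑ m ∈ Finset.range n, m * 2 ^ (n - m - 1)) + n + 1 = 2 ^ n := by
  induction n with
  | zero => simp
  | succ n ih =>
    rw [Finset.sum_range_succ]
    have hstep : ∑ m ∈ Finset.range n, m * 2 ^ (n + 1 - m - 1) =
        2 * ∑ m ∈ Finset.range n, m * 2 ^ (n - m - 1) := by
      rw [Finset.mul_sum]
      apply Finset.sum_congr rfl
      intro m hm
      have hmn : m < n := Finset.mem_range.mp hm
      have he : n + 1 - m - 1 = (n - m - 1) + 1 := by omega
      rw [he, pow_succ]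
      ring
    rw [hstep]
    have hlast : n + 1 - n - 1 = 0 := by omega
    rw [hlast, pow_zero, mul_one]
    have hp : (2 : ℕ) ^ (n + 1) = 2 ^ n * 2 := pow_succ 2 n
    omega

lemma S2 (n : ℕ) : (∑ m ∈ Finset.range n, (n.choose (n - m) - 1)) + n + 1 = 2 ^ n := by
  have h0 : ∀ m ∈ Finset.range n, (n.choose (n - m) - 1) + 1 = n.choose (n - m) := by
    intro m _
    have := Nat.choose_pos (show n - m ≤ n by omega)
    omega
  have h1 : (∑ m ∈ Finset.range n, (n.choose (n - m) - 1)) + n =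
      ∑ m ∈ Finset.range n, n.choose (n - m) := by
    have hc : ∑ m ∈ Finset.range n, ((n.choose (n - m) - 1) + 1) =
        ∑ m ∈ Finset.range n, n.choose (n - m) := Finset.sum_congr rfl h0
    rw [← hc, Finset.sum_add_distrib, Finset.sum_const, Finset.card_range, smul_eq_mul,
      mul_one]
  have h2 : ∑ m ∈ Finset.range n, n.choose (n - m) =
      ∑ m ∈ Finset.range n, n.choose (m + 1) := by
    rw [← Finset.sum_range_reflect]
    apply Finset.sum_congr rfl
    intro m hm
    have := Finset.mem_range.mp hm
    congr 1
    omega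
  have h3 := Nat.sum_range_choose n
  rw [Finset.sum_range_succ'] at h3
  simp only [Nat.choose_zero_right] at h3
  omega

lemma S3 (n : ℕ) : ∑ m ∈ Finset.range n, m * (n - m) = (n + 1).choose 3 := by
  induction n with
  | zero => simp [Nat.choose]
  | succ n ih =>
    rw [Finset.sum_range_succ]
    have hstep : ∑ m ∈ Finset.range n, m * (n + 1 - m) =
        (∑ m ∈ Finset.range n, m * (n - m)) + ∑ m ∈ Finset.range n, m := by
      rw [← Finset.sum_add_distrib]
      apply Finset.sum_congr rfl
      intro m hm
      have hmn : m < n := Finset.mem_range.mp hm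
      have he : n + 1 - m = (n - m) + 1 := by omega
      rw [he]
      ring
    rw [hstep, ih]
    have ha := Finset.sum_range_id_mul_two n
    have hb : n.choose 2 = n * (n - 1) / 2 := Nat.choose_two_right n
    have hd : 2 ∣ n * (n - 1) := ⟨∑ i ∈ Finset.range n, i, by omega⟩
    have hp1 : (n + 1 + 1).choose 3 = (n + 1).choose 2 + (n + 1).choose 3 :=
      Nat.choose_succ_succ (n + 1) 2
    have hp2 : (n + 1).choose 2 = n.choose 1 + n.choose 2 := Nat.choose_succ_succ n 1
    have hp3 : n.choose 1 = n := Nat.choose_one_right n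
    have hsub : n + 1 - n = 1 := by omega
    rw [hsub, mul_one]
    omega

end S15

theorem stmt15 (n : ℕ) :
    Nat.card {e : InvSeq n // ¬ ∃ i j k : Fin n, i < j ∧ j < k ∧
      (e i : ℕ) ≠ (e j : ℕ) ∧ (e j : ℕ) < (e k : ℕ) ∧ (e i : ℕ) ≠ (e k : ℕ)} =
    2 ^ (n + 1) - (n + 1).choose 3 - 2 * n - 1 := by
  classical
  have h1 : Nat.card {e : InvSeq n // ¬ ∃ i j k : Fin n, i < j ∧ j < k ∧
      (e i : ℕ) ≠ (e j : ℕ) ∧ (e j : ℕ) < (e k : ℕ) ∧ (e i : ℕ) ≠ (e k : ℕ)} =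
      Nat.card {e : InvSeq n // S15.PI e ∨ S15.PW e} :=
    Nat.card_congr (Equiv.subtypeEquivRight fun e => S15.char e)
  rw [h1, Nat.card_eq_fintype_card, Fintype.card_subtype]
  have hor : Finset.univ.filter (fun e : InvSeq n => S15.PI e ∨ S15.PW e) =
      Finset.univ.filter (fun e => S15.PI e) ∪ Finset.univ.filter (fun e => S15.PW e) :=
    Finset.filter_or _ _ _
  rw [hor]
  have hU := Finset.card_union_add_card_inter
    (Finset.univ.filter (fun e : InvSeq n => S15.PI e))
    (Finset.univ.filter (fun e : InvSeq n => S15.PW e))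
  rw [← Finset.filter_and] at hU
  have hA : (Finset.univ.filter (fun e : InvSeq n => S15.PI e)).card =
      (∑ m ∈ Finset.range n, m * 2 ^ (n - m - 1)) + 1 := by
    rw [← Fintype.card_subtype]
    exact S15.cardPI
  have hB : (Finset.univ.filter (fun e : InvSeq n => S15.PW e)).card =
      (∑ m ∈ Finset.range n, (n.choose (n - m) - 1)) + 1 := by
    rw [← Fintype.card_subtype]
    exact S15.cardPW
  have hC : (Finset.univ.filter (fun e : InvSeq n => S15.PI e ∧ S15.PW e)).card =
      (∑ m ∈ Finset.range n, m * (n - m)) + 1 := by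
    rw [← Fintype.card_subtype]
    exact S15.cardPIW
  have s1 := S15.S1 n
  have s2 := S15.S2 n
  have s3 := S15.S3 n
  have hp : (2 : ℕ) ^ (n + 1) = 2 ^ n * 2 := pow_succ 2 n
  clear h1 hor
  omega
end
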